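/- arXiv:1804.03949 — 7 statements merged into one kernel-verified Lean document; each statement's English description precedes it below -/
import Mathlib

section
/- Let f_{S,t}(x) = (1 + E_S(x))^t where E_S(x) = sum over s in S of x^s/s! and t is a nonnegative integer. Then the n-th derivative of f_{S,t} at x = 0 equals sum over k = 0 to n of {n brace k}_S * (t)_k, where (t)_k = t(t-1)...(t-k+1) is the falling factorial. -/
open scoped Classical

/-- The `S`-restricted Stirling number of the second kind: the number of partitions of
`[n]` into exactly `k` nonempty blocks, all of whose sizes lie in `S`. -/
noncomputable def sStirling (S : Set ℕ) (n k : ℕ) : ℕ :=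
  Nat.card {P : Finpartition (Finset.univ : Finset (Fin n)) //
    P.parts.card = k ∧ ∀ b ∈ P.parts, b.card ∈ S}

/-- The formal power series `E_S(x) = ∑_{s ∈ S} x^s / s!`. -/
noncomputable def ES (S : Set ℕ) : PowerSeries ℚ :=
  PowerSeries.mk fun n => if n ∈ S then ((n.factorial : ℚ))⁻¹ else 0

section Emb

variable {α β : Type*} [DecidableEq α] [DecidableEq β]

/-- Push a finpartition forward along an embedding. -/
def Finpartition.embMap (g : α ↪ β) {s : Finset α} (P : Finpartition s) :
    Finpartition (s.map g) where
  parts := P.parts.map ⟨Finset.map g, Finset.map_injective g⟩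
  supIndep := by
    rw [Finset.supIndep_iff_pairwiseDisjoint]
    rintro x hx y hy hxy
    simp only [Finset.mem_coe, Finset.mem_map, Function.Embedding.coeFn_mk] at hx hy
    obtain ⟨b, hb, rfl⟩ := hx
    obtain ⟨c, hc, rfl⟩ := hy
    simp only [Function.onFun, id]
    rw [Finset.disjoint_map]
    exact P.disjoint hb hc (by rintro rfl; exact hxy rfl)
  sup_parts := by
    ext x
    rw [Finset.mem_sup]
    constructor
    · rintro ⟨v, hv, hxv⟩
      simp only [Finset.mem_map, Function.Embedding.coeFn_mk] at hv
      obtain ⟨b, hb, rfl⟩ := hv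
      simp only [id, Finset.mem_map] at hxv
      obtain ⟨a, ha, rfl⟩ := hxv
      exact Finset.mem_map_of_mem g (P.le hb ha)
    · rintro hx
      simp only [Finset.mem_map] at hx
      obtain ⟨a, ha, rfl⟩ := hx
      obtain ⟨b, hb, hab⟩ := P.exists_mem ha
      exact ⟨b.map g, Finset.mem_map_of_mem _ hb, Finset.mem_map_of_mem g hab⟩
  bot_notMem := by
    rw [Finset.mem_map]
    rintro ⟨b, hb, hbe⟩
    simp only [Function.Embedding.coeFn_mk, Finset.bot_eq_empty, Finset.map_eq_empty] at hbe
    subst hbe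
    exact P.bot_notMem hb

theorem Finpartition.mem_embMap_parts {g : α ↪ β} {s : Finset α} {P : Finpartition s}
    {c : Finset β} : c ∈ (P.embMap g).parts ↔ ∃ b ∈ P.parts, b.map g = c :=
  Finset.mem_map

theorem natCard_embMap (g : α ↪ β) (s : Finset α) (S : Set ℕ) (k : ℕ) :
    Nat.card {P : Finpartition s // P.parts.card = k ∧ ∀ b ∈ P.parts, b.card ∈ S} =
    Nat.card {P : Finpartition (s.map g) // P.parts.card = k ∧ ∀ b ∈ P.parts, b.card ∈ S} := by
  apply Nat.card_eq_of_bijective (fun P => ⟨P.1.embMap g, by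
    constructor
    · rw [Finpartition.embMap, Finset.card_map]; exact P.2.1
    · intro b hb
      obtain ⟨c, hc, rfl⟩ := Finpartition.mem_embMap_parts.1 hb
      rw [Finset.card_map]; exact P.2.2 c hc⟩)
  constructor
  · rintro ⟨P, hP⟩ ⟨Q, hQ⟩ h
    simp only [Subtype.mk.injEq] at h
    have := congrArg Finpartition.parts h
    simp only [Finpartition.embMap] at this
    exact Subtype.ext (Finpartition.ext (Finset.map_injective _ this))
  · rintro ⟨Q, hQk, hQS⟩
    have hsub : ∀ b ∈ Q.parts, (b.preimage g g.injective.injOn).map g = b := by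
      intro b hb
      ext y
      simp only [Finset.mem_map, Finset.mem_preimage]
      constructor
      · rintro ⟨a, ha, rfl⟩; exact ha
      · intro hy
        have : y ∈ s.map g := Q.le hb hy
        obtain ⟨a, _, rfl⟩ := Finset.mem_map.1 this
        exact ⟨a, hy, rfl⟩
    refine ⟨⟨⟨Q.parts.image (fun b => b.preimage g g.injective.injOn), ?_, ?_, ?_⟩, ?_, ?_⟩, ?_⟩
    · rw [Finset.supIndep_iff_pairwiseDisjoint]
      rintro x hx y hy hxy
      simp only [Finset.mem_coe, Finset.mem_image] at hx hy
      obtain ⟨b, hb, rfl⟩ := hx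
      obtain ⟨c, hc, rfl⟩ := hy
      have hbc : b ≠ c := by rintro rfl; exact hxy rfl
      simp only [Function.onFun, id]
      rw [Finset.disjoint_left]
      intro a hab hac
      rw [Finset.mem_preimage] at hab hac
      exact Finset.disjoint_left.1 (Q.disjoint hb hc hbc) hab hac
    · ext x
      rw [Finset.mem_sup]
      constructor
      · rintro ⟨v, hv, hxv⟩
        simp only [Finset.mem_image] at hv
        obtain ⟨b, hb, rfl⟩ := hv
        simp only [id, Finset.mem_preimage] at hxv
        have : g x ∈ s.map g := Q.le hb hxv
        obtain ⟨a, ha, hax⟩ := Finset.mem_map.1 this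
        rwa [← g.injective hax]
      · intro hx
        have : g x ∈ s.map g := Finset.mem_map_of_mem g hx
        obtain ⟨b, hb, hgb⟩ := Q.exists_mem this
        exact ⟨b.preimage g g.injective.injOn, Finset.mem_image_of_mem _ hb,
          Finset.mem_preimage.2 hgb⟩
    · rw [Finset.mem_image]
      rintro ⟨b, hb, hbe⟩
      obtain ⟨y, hy⟩ := Q.nonempty_of_mem_parts hb
      have : y ∈ s.map g := Q.le hb hy
      obtain ⟨a, _, rfl⟩ := Finset.mem_map.1 this
      have : a ∈ b.preimage g g.injective.injOn := Finset.mem_preimage.2 hy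
      rw [hbe] at this
      exact absurd this (Finset.notMem_empty a)
    · rw [Finset.card_image_of_injOn, hQk]
      intro b hb c hc h
      rw [← hsub b hb, ← hsub c hc]
      exact congrArg (Finset.map g) h
    · intro b hb
      simp only [Finset.mem_image] at hb
      obtain ⟨c, hc, rfl⟩ := hb
      have := congrArg Finset.card (hsub c hc)
      rw [Finset.card_map] at this
      rw [this]
      exact hQS c hc
    · apply Subtype.ext
      apply Finpartition.ext
      simp only [Finpartition.embMap]
      ext x
      simp only [Finset.mem_map, Finset.mem_image, Function.Embedding.coeFn_mk]
      constructor
      · rintro ⟨b, ⟨c, hc, rfl⟩, rfl⟩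
        rwa [hsub c hc]
      · intro hx
        exact ⟨_, ⟨x, hx, rfl⟩, hsub x hx⟩

/-- The number of `S`-restricted partitions of any finset only depends on its cardinality. -/
theorem natCard_eq_sStirling (S : Set ℕ) (t : Finset α) (k : ℕ) :
    Nat.card {P : Finpartition t // P.parts.card = k ∧ ∀ b ∈ P.parts, b.card ∈ S} =
      sStirling S t.card k := by
  have hmap : (Finset.univ : Finset (Fin t.card)).map
      ((t.equivFin.symm.toEmbedding).trans (Function.Embedding.subtype _)) = t := by
    rw [← Finset.map_map, Finset.map_univ_equiv, Finset.univ_eq_attach, Finset.attach_map_val]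
  rw [sStirling,
    natCard_embMap ((t.equivFin.symm.toEmbedding).trans (Function.Embedding.subtype _))
      Finset.univ S k, hmap]

end Emb

section Erase

variable {α : Type*} [DecidableEq α] {s : Finset α}

/-- Remove a part from a finpartition. -/
def Finpartition.erasePart (P : Finpartition s) (b : Finset α) (hb : b ∈ P.parts) :
    Finpartition (s \ b) where
  parts := P.parts.erase b
  supIndep := P.supIndep.subset (Finset.erase_subset _ _)
  sup_parts := by
    have hd : Disjoint b ((P.parts.erase b).sup id) :=
      P.supIndep (Finset.erase_subset _ _) hb (Finset.notMem_erase _ _)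
    have h2 : b ⊔ (P.parts.erase b).sup id = s := by
      conv_rhs => rw [← P.sup_parts, ← Finset.insert_erase hb]
      rw [Finset.sup_insert]
      rfl
    calc (P.parts.erase b).sup id
        = (b ⊔ (P.parts.erase b).sup id) \ b := (Disjoint.sup_sdiff_cancel_left hd).symm
      _ = s \ b := by rw [h2]
  bot_notMem h := P.bot_notMem (Finset.erase_subset _ _ h)

end Erase

theorem sStirling_eq_zero_of_lt {S : Set ℕ} {n k : ℕ} (h : n < k) : sStirling S n k = 0 := by
  rw [sStirling, Nat.card_eq_zero]
  left
  constructor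
  rintro ⟨P, hPk, -⟩
  have := P.card_parts_le_card
  rw [hPk] at this
  simp only [Finset.card_univ, Fintype.card_fin] at this
  omega

theorem sStirling_zero_right (S : Set ℕ) (n : ℕ) :
    sStirling S n 0 = if n = 0 then 1 else 0 := by
  split_ifs with hn
  · subst hn
    have huniv : (⊥ : Finset (Fin 0)) = Finset.univ := by simp
    have hall : ∀ P : Finpartition (Finset.univ : Finset (Fin 0)), P.parts = ∅ := by
      intro P
      rw [Finpartition.parts_eq_empty_iff]
      exact huniv.symm
    rw [sStirling, Nat.card_eq_one_iff_unique]
    constructor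
    · constructor
      rintro ⟨P, -⟩ ⟨Q, -⟩
      exact Subtype.ext (Finpartition.ext ((hall P).trans (hall Q).symm))
    · exact ⟨⟨(Finpartition.empty _).copy huniv, by simp [hall], by simp [hall]⟩⟩
  · rw [sStirling, Nat.card_eq_zero]
    left
    constructor
    rintro ⟨P, hP0, -⟩
    rw [Finset.card_eq_zero, Finpartition.parts_eq_empty_iff] at hP0
    have : (Finset.univ : Finset (Fin n)).Nonempty := by
      simp [Finset.univ_nonempty_iff, Fin.pos_iff_nonempty]
      exact Fin.pos_iff_nonempty.1 (Nat.pos_of_ne_zero hn)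
    rw [hP0] at this
    simp at this


section Rec
variable (S : Set ℕ) (n j : ℕ)

abbrev TT := {P : Finpartition (Finset.univ : Finset (Fin n)) //
    P.parts.card = j + 1 ∧ ∀ b ∈ P.parts, b.card ∈ S}

abbrev RR := (A : {A : Finset (Fin n) // A.card ∈ S}) ×
    {Q : Finpartition ((Finset.univ : Finset (Fin n)) \ A.1) //
      Q.parts.card = j ∧ ∀ b ∈ Q.parts, b.card ∈ S}

variable {S n j}

theorem extendErase {α : Type*} [DecidableEq α] {s : Finset α} (P : Finpartition s)
    (b : Finset α) (hb : b ∈ P.parts) (h1 : b ≠ ⊥) (h2 : Disjoint (s \ b) b)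
    (h3 : (s \ b) ⊔ b = s) : (P.erasePart b hb).extend h1 h2 h3 = P :=
  Finpartition.ext (by
    simp only [Finpartition.extend, Finpartition.erasePart]
    exact Finset.insert_erase hb)

theorem extend_lemmas (hS : 0 ∉ S) (A : Finset (Fin n)) (hA : A.card ∈ S) :
    A ≠ ⊥ ∧ Disjoint ((Finset.univ : Finset (Fin n)) \ A) A ∧
      ((Finset.univ : Finset (Fin n)) \ A) ⊔ A = Finset.univ := by
  refine ⟨?_, Finset.sdiff_disjoint, ?_⟩
  · rintro rfl
    simp only [Finset.bot_eq_empty, Finset.card_empty] at hA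
    exact hS hA
  · rw [Finset.sup_eq_union, Finset.sdiff_union_of_subset (Finset.subset_univ A)]

noncomputable def markEquiv (hS : 0 ∉ S) :
    (Σ P : TT S n j, {b // b ∈ P.1.parts}) ≃ RR S n j where
  toFun x :=
    ⟨⟨x.2.1, x.1.2.2 x.2.1 x.2.2⟩,
      ⟨x.1.1.erasePart x.2.1 x.2.2, by
        simp only [Finpartition.erasePart, Finset.card_erase_of_mem x.2.2, x.1.2.1,
          Nat.add_sub_cancel], by
        intro b hb
        exact x.1.2.2 b (Finset.erase_subset _ _ hb)⟩⟩
  invFun y :=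
    ⟨⟨y.2.1.extend (extend_lemmas hS y.1.1 y.1.2).1 (extend_lemmas hS y.1.1 y.1.2).2.1
        (extend_lemmas hS y.1.1 y.1.2).2.2, by
        have hnm : y.1.1 ∉ y.2.1.parts := by
          intro h
          have h1 := y.2.1.le h
          have ⟨a, ha⟩ : y.1.1.Nonempty := by
            rw [Finset.nonempty_iff_ne_empty]
            intro he
            exact hS (by simpa [he] using y.1.2)
          exact (Finset.mem_sdiff.1 (h1 ha)).2 ha
        constructor
        · simp only [Finpartition.extend, Finset.card_insert_of_notMem hnm, y.2.2.1]
        · intro b hb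
          simp only [Finpartition.extend, Finset.mem_insert] at hb
          rcases hb with rfl | hb
          · exact y.1.2
          · exact y.2.2.2 b hb⟩,
      ⟨y.1.1, by simp [Finpartition.extend]⟩⟩
  left_inv := by
    rintro ⟨⟨P, hP⟩, ⟨b, hb⟩⟩
    have hPP := extendErase P b hb (extend_lemmas hS b (hP.2 b hb)).1
      (extend_lemmas hS b (hP.2 b hb)).2.1 (extend_lemmas hS b (hP.2 b hb)).2.2
    refine Sigma.ext (Subtype.ext hPP) ?_
    rw [Subtype.heq_iff_coe_eq]
    intro x
    change x ∈ ((P.erasePart b hb).extend (extend_lemmas hS b (hP.2 b hb)).1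
      (extend_lemmas hS b (hP.2 b hb)).2.1 (extend_lemmas hS b (hP.2 b hb)).2.2).parts
      ↔ x ∈ P.parts
    rw [hPP]
  right_inv := by
    rintro ⟨⟨A, hA⟩, ⟨Q, hQ⟩⟩
    apply Sigma.ext
    · rfl
    · apply heq_of_eq
      apply Subtype.ext
      apply Finpartition.ext
      simp only [Finpartition.erasePart, Finpartition.extend]
      apply Finset.erase_insert
      intro h
      have h1 := Q.le h
      have ⟨a, ha⟩ : A.Nonempty := by
        rw [Finset.nonempty_iff_ne_empty]
        intro he
        exact hS (by simpa [he] using hA)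
      exact (Finset.mem_sdiff.1 (h1 ha)).2 ha

end Rec

theorem sStirling_rec (S : Set ℕ) (hS : 0 ∉ S) (n j : ℕ) :
    (j + 1) * sStirling S n (j + 1) =
      ∑ p ∈ Finset.HasAntidiagonal.antidiagonal n,
        if p.2 ∈ S then n.choose p.2 * sStirling S p.1 j else 0 := by
  have h1 : (j + 1) * sStirling S n (j + 1) =
      Nat.card (Σ P : TT S n j, {b // b ∈ P.1.parts}) := by
    rw [sStirling, Nat.card_eq_fintype_card, Nat.card_eq_fintype_card, Fintype.card_sigma]
    have : ∀ P : TT S n j, Fintype.card {b // b ∈ P.1.parts} = j + 1 := by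
      intro P
      rw [← Nat.card_eq_fintype_card, Nat.card_eq_finsetCard, P.2.1]
    simp only [this]
    rw [Finset.sum_const, smul_eq_mul, mul_comm, Finset.card_univ]
  have h2 : Nat.card (Σ P : TT S n j, {b // b ∈ P.1.parts}) = Nat.card (RR S n j) :=
    Nat.card_congr (markEquiv hS)
  have h3 : Nat.card (RR S n j) =
      ∑ A : {A : Finset (Fin n) // A.card ∈ S}, sStirling S (n - A.1.card) j := by
    rw [Nat.card_eq_fintype_card, Fintype.card_sigma]
    apply Finset.sum_congr rfl
    intro A _
    rw [← Nat.card_eq_fintype_card, natCard_eq_sStirling,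
      Finset.card_sdiff_of_subset (Finset.subset_univ _), Finset.card_univ, Fintype.card_fin]
  have h4 : (∑ A : {A : Finset (Fin n) // A.card ∈ S}, sStirling S (n - A.1.card) j) =
      ∑ A ∈ Finset.univ.filter (fun A : Finset (Fin n) => A.card ∈ S),
        sStirling S (n - A.card) j := by
    rw [← Finset.sum_subtype (Finset.univ.filter (fun A : Finset (Fin n) => A.card ∈ S))
      (fun x => by simp) (fun A => sStirling S (n - A.card) j)]
  rw [h1, h2, h3, h4, Finset.sum_filter, ← Finset.powerset_univ, Finset.sum_powerset,
    Finset.card_univ, Fintype.card_fin]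
  rw [Finset.Nat.sum_antidiagonal_eq_sum_range_succ_mk, ← Finset.sum_range_reflect]
  apply Finset.sum_congr rfl
  intro a ha
  rw [Finset.mem_range] at ha
  have ha' : a ≤ n := by omega
  simp only [Nat.add_sub_cancel]
  have hsub2 : n - (n - a) = a := by omega
  have hcongr : ∀ A ∈ Finset.powersetCard (n - a) (Finset.univ : Finset (Fin n)),
      (if A.card ∈ S then sStirling S (n - A.card) j else 0) =
      (if n - a ∈ S then sStirling S a j else 0) := by
    intro A hA
    rw [(Finset.mem_powersetCard.1 hA).2, hsub2]
  rw [Finset.sum_congr rfl hcongr, Finset.sum_const, Finset.card_powersetCard,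
    Finset.card_univ, Fintype.card_fin, smul_eq_mul]
  split_ifs
  · rfl
  · exact mul_zero _


theorem descFactorial_cast_succ_sub (t i : ℕ) :
    (((t + 1).descFactorial (i + 1) : ℚ)) =
      t.descFactorial (i + 1) + (i + 1) * t.descFactorial i := by
  rcases le_or_gt i t with h | h
  · rw [Nat.succ_descFactorial_succ, Nat.descFactorial_succ, Nat.cast_mul, Nat.cast_mul,
      Nat.cast_sub h]
    push_cast
    ring
  · rw [Nat.descFactorial_eq_zero_iff_lt.2 (by omega),
      Nat.descFactorial_eq_zero_iff_lt.2 (by omega),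
      Nat.descFactorial_eq_zero_iff_lt.2 (by omega)]
    simp


/-- the `n`-th derivative at `0` of `f_{S,t}(x) = (1 + E_S(x))^t`
(i.e. `n!` times the `n`-th coefficient) equals `∑_{k=0}^n {n brace k}_S (t)_k`. -/
theorem deriv_f_S_t (S : Set ℕ) (hS : 0 ∉ S) (t n : ℕ) :
    (n.factorial : ℚ) * PowerSeries.coeff (R := ℚ) n ((1 + ES S) ^ t) =
      ∑ k ∈ Finset.range (n + 1), (sStirling S n k : ℚ) * t.descFactorial k := by
  induction t generalizing n with
  | zero =>
    rw [pow_zero, PowerSeries.coeff_one, Finset.sum_eq_single 0]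
    · rw [sStirling_zero_right]
      split_ifs with h
      · subst h; simp
      · simp
    · intro k hk hk0
      obtain ⟨i, rfl⟩ : ∃ i, k = i + 1 := ⟨k - 1, by omega⟩
      simp [Nat.zero_descFactorial_succ]
    · intro h
      exact absurd (Finset.mem_range.2 (by omega)) h
  | succ t ih =>
    have hstep1 : ((1 + ES S) ^ (t + 1)) = (1 + ES S) ^ t + (1 + ES S) ^ t * ES S := by
      rw [pow_succ, mul_one_add]
    rw [hstep1, map_add, mul_add, ih n]
    have hmul : (n.factorial : ℚ) * PowerSeries.coeff (R := ℚ) n ((1 + ES S) ^ t * ES S) =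
        ∑ k ∈ Finset.range (n + 1),
          (((k + 1) * sStirling S n (k + 1) : ℕ) : ℚ) * t.descFactorial k := by
      rw [PowerSeries.coeff_mul, Finset.mul_sum]
      have hterm : ∀ p ∈ Finset.HasAntidiagonal.antidiagonal n,
          (n.factorial : ℚ) *
              (PowerSeries.coeff (R := ℚ) p.1 ((1 + ES S) ^ t) * PowerSeries.coeff (R := ℚ) p.2 (ES S)) =
          ∑ k ∈ Finset.range (n + 1),
            (if p.2 ∈ S then ((n.choose p.2 * sStirling S p.1 k : ℕ) : ℚ) * t.descFactorial k
              else 0) := by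
        intro p hp
        rw [Finset.HasAntidiagonal.mem_antidiagonal] at hp
        have hc : PowerSeries.coeff (R := ℚ) p.2 (ES S) =
            if p.2 ∈ S then (p.2.factorial : ℚ)⁻¹ else 0 := by
          rw [ES, PowerSeries.coeff_mk]
        rw [hc]
        split_ifs with hmem
        · have hfac : (n.factorial : ℚ) =
              (n.choose p.2 : ℚ) * p.1.factorial * p.2.factorial := by
            have := Nat.add_choose_mul_factorial_mul_factorial p.1 p.2
            rw [hp] at this
            exact_mod_cast this.symm
          have hne : (p.2.factorial : ℚ) ≠ 0 := Nat.cast_ne_zero.2 p.2.factorial_ne_zero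
          have step1 : (n.factorial : ℚ) *
              (PowerSeries.coeff (R := ℚ) p.1 ((1 + ES S) ^ t) * (p.2.factorial : ℚ)⁻¹) =
              (n.choose p.2 : ℚ) *
                ((p.1.factorial : ℚ) * PowerSeries.coeff (R := ℚ) p.1 ((1 + ES S) ^ t)) := by
            rw [hfac]
            field_simp
          rw [step1, ih p.1]
          have hple : p.1 + 1 ≤ n + 1 := by omega
          rw [← Finset.sum_subset (Finset.range_subset_range.2 hple) (by
            intro k hk hk2
            rw [Finset.mem_range] at hk hk2
            rw [sStirling_eq_zero_of_lt (by omega)]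
            simp)]
          rw [Finset.mul_sum]
          apply Finset.sum_congr rfl
          intro k _
          push_cast
          ring
        · simp
      rw [Finset.sum_congr rfl hterm, Finset.sum_comm]
      apply Finset.sum_congr rfl
      intro k _
      have hsplit : ∀ p : ℕ × ℕ,
          (if p.2 ∈ S then ((n.choose p.2 * sStirling S p.1 k : ℕ) : ℚ) * t.descFactorial k
            else 0) =
          (((if p.2 ∈ S then (n.choose p.2 * sStirling S p.1 k : ℕ) else 0 : ℕ)) : ℚ) *
            t.descFactorial k := by
        intro p
        split_ifs <;> simp
      rw [Finset.sum_congr rfl (fun p _ => hsplit p), ← Finset.sum_mul, ← Nat.cast_sum,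
        ← sStirling_rec S hS n k]
    rw [hmul]
    have hlast : (((n + 1) * sStirling S n (n + 1) : ℕ) : ℚ) * t.descFactorial n = 0 := by
      rw [sStirling_eq_zero_of_lt (Nat.lt_succ_self n)]
      simp
    rw [Finset.sum_range_succ
      (fun k => (((k + 1) * sStirling S n (k + 1) : ℕ) : ℚ) * t.descFactorial k) n]
    rw [hlast, add_zero]
    rw [Finset.sum_range_succ' (fun k => (sStirling S n k : ℚ) * (t + 1).descFactorial k) n,
      Finset.sum_range_succ' (fun k => (sStirling S n k : ℚ) * t.descFactorial k) n]
    simp only [Nat.descFactorial_zero, Nat.cast_one, mul_one]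
    rw [add_right_comm, ← Finset.sum_add_distrib]
    have hmain : ∀ i ∈ Finset.range n,
        (sStirling S n (i + 1) : ℚ) * t.descFactorial (i + 1) +
          (((i + 1) * sStirling S n (i + 1) : ℕ) : ℚ) * t.descFactorial i =
        (sStirling S n (i + 1) : ℚ) * (t + 1).descFactorial (i + 1) := by
      intro i _
      rw [descFactorial_cast_succ_sub]
      push_cast
      ring
    rw [Finset.sum_congr rfl hmain]
end

section
/- Generalized Dobinski-type formula for Fubini numbers: F_{n,S} = (1/2) sum over k >= 0 of 2^{-k} sum_{l=0}^n {n brace l}_S (k)_l, where (k)_l is the falling factorial. -/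
open scoped Classical

/-- The `S`-restricted Fubini number: the number of ordered set partitions of `[n]`
with all block sizes in `S`. -/
noncomputable def sFubini (S : Set ℕ) (n : ℕ) : ℕ :=
  ∑ k ∈ Finset.range (n + 1), k.factorial * sStirling S n k

/-!
Since `(k)_l = l! * C(k, l)` vanishes for `k < l`, the negative-binomial series gives
`∑_k (k)_l r^k = l! r^l / (1 - r)^(l + 1)`, which is `2 * l!` at `r = 1/2`. Exchanging the
finite sum over `l` with the series over `k` turns the right-hand side into
`∑_l {n brace l}_S * l!`, which is the definition of `F_{n,S}`.
-/

theorem hasSum_descFactorial_mul_geometric {𝕜 : Type*} [NormedField 𝕜]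
    [HasSummableGeomSeries 𝕜] (l : ℕ) {r : 𝕜} (hr : ‖r‖ < 1) :
    HasSum (fun k : ℕ => (k.descFactorial l : 𝕜) * r ^ k)
      (l.factorial * r ^ l / (1 - r) ^ (l + 1)) := by
  have hzero : ∀ k ∈ Finset.range l, (k.descFactorial l : 𝕜) * r ^ k = 0 := fun k hk => by
    rw [Nat.descFactorial_eq_zero_iff_lt.mpr (Finset.mem_range.mp hk), Nat.cast_zero, zero_mul]
  rw [← hasSum_nat_add_iff' l, Finset.sum_eq_zero hzero, sub_zero, div_eq_mul_one_div]
  refine ((hasSum_choose_mul_geometric_of_norm_lt_one l hr).mul_left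
    ((l.factorial : 𝕜) * r ^ l)).congr_fun fun k => ?_
  rw [Nat.descFactorial_eq_factorial_mul_choose, pow_add]
  push_cast
  ring

theorem hasSum_descFactorial_div_two_pow (l : ℕ) :
    HasSum (fun k : ℕ => ((2 : ℝ) ^ k)⁻¹ * k.descFactorial l) (2 * l.factorial) := by
  have h := hasSum_descFactorial_mul_geometric l (r := (2 : ℝ)⁻¹) (by norm_num)
  have hval : (l.factorial : ℝ) * (2 : ℝ)⁻¹ ^ l / (1 - (2 : ℝ)⁻¹) ^ (l + 1) = 2 * l.factorial := by
    rw [show (1 : ℝ) - 2⁻¹ = 2⁻¹ by norm_num, pow_succ]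
    field_simp
  rw [hval] at h
  simpa only [inv_pow, mul_comm] using h

theorem sFubini_dobinski_general (S : Set ℕ) (n : ℕ) :
    (sFubini S n : ℝ) = (1 / 2) * ∑' k : ℕ, ((2 : ℝ) ^ k)⁻¹ *
      ∑ l ∈ Finset.range (n + 1), (sStirling S n l : ℝ) * k.descFactorial l := by
  have hsum : HasSum
      (fun k : ℕ => ((2 : ℝ) ^ k)⁻¹ *
        ∑ l ∈ Finset.range (n + 1), (sStirling S n l : ℝ) * k.descFactorial l)
      (∑ l ∈ Finset.range (n + 1), (sStirling S n l : ℝ) * (2 * l.factorial)) := by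
    simpa only [Finset.mul_sum, mul_left_comm] using
      hasSum_sum fun l _ => (hasSum_descFactorial_div_two_pow l).mul_left (sStirling S n l : ℝ)
  rw [hsum.tsum_eq, sFubini, Finset.mul_sum]
  push_cast
  exact Finset.sum_congr rfl fun l _ => by ring

/-- Dobinski-type formula for Fubini numbers:
`F_{n,S} = (1/2) ∑_{k ≥ 0} 2^{-k} ∑_{l=0}^n {n brace l}_S (k)_l`. -/
theorem sFubini_dobinski (S : Set ℕ) (hS : 0 ∉ S) (n : ℕ) :
    (sFubini S n : ℝ) = (1 / 2) * ∑' k : ℕ, ((2 : ℝ) ^ k)⁻¹ *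
      ∑ l ∈ Finset.range (n + 1), (sStirling S n l : ℝ) * k.descFactorial l :=
  sFubini_dobinski_general S n
end

section
/- For all positive integers n and q and any set S of positive integers, the congruence (2^q - 1) F_{n,S} ≡ sum_{l=1}^{q-1} 2^{q-l-1} (sum_{i=0}^n {n brace i}_S (l)_i) (mod q) holds. -/
open scoped Classical

/-!
Swapping the two sums reduces the congruence to `∑_{l<q} 2^(q-l-1) (l)_i ≡ (2^q - 1) i! (mod q)`
for every `i`; the term `l = 0` may be added to the right-hand side because `(0)_i = 0` for
`i > 0` and `{n brace 0}_S = 0` for `n > 0`. The reduced congruence is the identity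
`∑_{j≤i} C(m,j) + ∑_{l<m} 2^(m-l-1) C(l,i) = 2^m`, multiplied by `i!` and taken at `m = q`:
there `i! C(q,j) = (i!/j!) (q)_j` is divisible by `q` for `1 ≤ j ≤ i`.
-/

open Finset
open scoped Nat

theorem sum_range_choose_succ_add_choose (m i : ℕ) :
    ∑ j ∈ range (i + 1), (m + 1).choose j + m.choose i = 2 * ∑ j ∈ range (i + 1), m.choose j := by
  induction i with
  | zero => simp
  | succ i ih =>
    rw [sum_range_succ, sum_range_succ (fun j => m.choose j), Nat.choose_succ_succ']
    linarith

theorem sum_range_choose_add_sum_two_pow_mul_choose (m i : ℕ) :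
    ∑ j ∈ range (i + 1), m.choose j + ∑ l ∈ range m, 2 ^ (m - l - 1) * l.choose i = 2 ^ m := by
  induction m with
  | zero => simp [sum_range_succ']
  | succ m ih =>
    have hweighted : ∑ l ∈ range (m + 1), 2 ^ (m + 1 - l - 1) * l.choose i =
        2 * ∑ l ∈ range m, 2 ^ (m - l - 1) * l.choose i + m.choose i := by
      rw [sum_range_succ, mul_sum]
      congr 1
      · refine sum_congr rfl fun l hl => ?_
        rw [show m + 1 - l - 1 = m - l - 1 + 1 by simp at hl; omega, pow_succ]
        ring
      · simp
    have hpartial := sum_range_choose_succ_add_choose m i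
    rw [hweighted, pow_succ, ← ih]
    linarith

theorem natCast_factorial_mul_choose_eq_zero {q i j : ℕ} (hj : 0 < j) (hji : j ≤ i) :
    ((i ! * q.choose j : ℕ) : ZMod q) = 0 := by
  rw [ZMod.natCast_eq_zero_iff]
  refine dvd_trans ?_ (Nat.mul_dvd_mul_right (Nat.factorial_dvd_factorial hji) _)
  rw [← Nat.descFactorial_eq_factorial_mul_choose]
  obtain ⟨j, rfl⟩ := Nat.exists_eq_add_of_lt hj
  cases q with
  | zero => simp
  | succ q => exact Nat.succ_descFactorial_succ q _ ▸ dvd_mul_right _ _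

theorem natCast_sum_factorial_mul_choose (q i : ℕ) :
    ∑ j ∈ range (i + 1), ((i ! * q.choose j : ℕ) : ZMod q) = i ! := by
  rw [sum_range_succ', sum_eq_zero fun j hj => natCast_factorial_mul_choose_eq_zero j.succ_pos
    (by simp at hj; omega)]
  simp

theorem sum_two_pow_mul_descFactorial_eq (q i : ℕ) :
    ∑ l ∈ range q, (2 : ZMod q) ^ (q - l - 1) * l.descFactorial i = (2 ^ q - 1) * i ! := by
  have h := congrArg (fun x : ℕ => ((i ! * x : ℕ) : ZMod q))
    (sum_range_choose_add_sum_two_pow_mul_choose q i)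
  simp only [mul_add, mul_sum, Nat.cast_add, Nat.cast_sum, natCast_sum_factorial_mul_choose] at h
  push_cast at h
  calc ∑ l ∈ range q, (2 : ZMod q) ^ (q - l - 1) * l.descFactorial i
      = ∑ l ∈ range q, (i ! : ZMod q) * (2 ^ (q - l - 1) * l.choose i) :=
        sum_congr rfl fun l _ => by rw [Nat.descFactorial_eq_factorial_mul_choose]; push_cast; ring
    _ = (2 ^ q - 1) * i ! := by linear_combination h

theorem sStirling_zero_of_pos (S : Set ℕ) {n : ℕ} (hn : 0 < n) : sStirling S n 0 = 0 := by
  rw [sStirling, Nat.card_eq_zero]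
  left
  refine ⟨fun ⟨P, hP, _⟩ => ?_⟩
  rw [card_eq_zero, Finpartition.parts_eq_empty_iff] at hP
  exact (univ_nonempty_iff.mpr ⟨⟨0, hn⟩⟩).ne_empty hP

theorem sFubini_congruence_general (S : Set ℕ) (n q : ℕ)
    (hn : 0 < n) :
    (2 ^ q - 1) * sFubini S n ≡
      (∑ l ∈ Finset.Ico 1 q, 2 ^ (q - l - 1) *
        ∑ i ∈ Finset.range (n + 1), sStirling S n i * l.descFactorial i) [MOD q] := by
  have hzero : ∑ i ∈ range (n + 1), sStirling S n i * (0 : ℕ).descFactorial i = 0 :=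
    sum_eq_zero fun i _ => by
      cases i with
      | zero => simp [sStirling_zero_of_pos S hn]
      | succ i => simp
  have hsubset : Ico 1 q ⊆ range q := fun l hl => by simp at hl ⊢; omega
  rw [sum_subset hsubset fun l hlq hl => by
    obtain rfl : l = 0 := by simp at hlq hl; omega
    simp [hzero], ← ZMod.natCast_eq_natCast_iff, sFubini]
  push_cast [Nat.cast_sub Nat.one_le_two_pow]
  simp only [mul_sum]
  rw [sum_comm]
  refine sum_congr rfl fun i _ => ?_
  rw [← mul_assoc, ← sum_two_pow_mul_descFactorial_eq, sum_mul]
  exact sum_congr rfl fun l _ => by ring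

/-- the congruence
`(2^q - 1) F_{n,S} ≡ ∑_{l=1}^{q-1} 2^{q-l-1} (∑_{i=0}^n {n brace i}_S (l)_i) (mod q)`. -/
theorem sFubini_congruence (S : Set ℕ) (hS : 0 ∉ S) (n q : ℕ)
    (hn : 0 < n) (hq : 0 < q) :
    (2 ^ q - 1) * sFubini S n ≡
      (∑ l ∈ Finset.Ico 1 q, 2 ^ (q - l - 1) *
        ∑ i ∈ Finset.range (n + 1), sStirling S n i * l.descFactorial i) [MOD q] :=
  sFubini_congruence_general S n q hn
end

section
/- For sets S_1, S_2 of positive integers, the number of n x k lonesum 0-1 matrices with no all-zero rows or columns, in which the number of rows of each type lies in S_1 and the number of columns of each type lies in S_2, equals sum over m from 0 to min(n,k) of m! {n brace m}_{S_1} * m! {k brace m}_{S_2}. -/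
open scoped Classical

/-- A 0-1 matrix (with entries in `Bool`) is lonesum iff it avoids both `2×2`
permutation matrices as submatrices. -/
def IsLonesum {n k : ℕ} (M : Fin n → Fin k → Bool) : Prop :=
  ∀ i₁ i₂ : Fin n, ∀ j₁ j₂ : Fin k, i₁ ≠ i₂ → j₁ ≠ j₂ →
    ¬(M i₁ j₁ = true ∧ M i₂ j₂ = true ∧ M i₁ j₂ = false ∧ M i₂ j₁ = false)

/-!
Two rows with incomparable supports contain a `2 × 2` permutation submatrix, so the row supports
of a lonesum matrix form a chain under inclusion. Ranking the `m` distinct rows gives a surjection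
`f` from the rows onto `Fin m`, and column `j` is the indicator of the up-set `{i | g j ≤ f i}`,
where `g j` is the least rank of a row meeting `j`; every threshold is attained because
consecutive distinct rows differ, so `g` is onto as well. Thus the lonesum matrices without zero
rows or columns are exactly the staircases `M i j = [g j ≤ f i]` with `f`, `g` surjections onto a
common `Fin m`, and `(m, f, g)` is recovered from `M` because a surjection onto `Fin m` is
determined by the preorder it induces. Row and column types are the fibres of `f` and `g`, and a
surjection onto `Fin m` whose fibre sizes lie in `S` is an `S`-partition with its `m` blocks
labelled: there are `m! {n brace m}_S` of them.
-/

open Finset Function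

namespace Finpartition

variable {α : Type*} [Fintype α] [DecidableEq α] {m : ℕ}

noncomputable def labelling (P : Finpartition (univ : Finset α)) (e : P.parts ≃ Fin m) (x : α) :
    Fin m :=
  e ⟨P.part x, P.part_mem.2 (mem_univ x)⟩

variable {P Q : Finpartition (univ : Finset α)} {e : P.parts ≃ Fin m}

lemma labelling_of_mem {b : P.parts} {x : α} (hx : x ∈ (b : Finset α)) :
    P.labelling e x = e b :=
  congrArg e (Subtype.ext (P.part_eq_of_mem b.2 hx))

lemma labelling_eq_iff {x : α} {c : Fin m} :
    P.labelling e x = c ↔ x ∈ (e.symm c : Finset α) := by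
  refine ⟨fun h => ?_, fun hx => by rw [labelling_of_mem hx, Equiv.apply_symm_apply]⟩
  rw [← h, labelling, Equiv.symm_apply_apply]
  exact P.mem_part (mem_univ x)

lemma labelling_surjective : Surjective (P.labelling e) := fun c =>
  let ⟨x, hx⟩ := P.nonempty_of_mem_parts (e.symm c).2
  ⟨x, labelling_eq_iff.2 hx⟩

lemma forall_card_labelling_fiber_mem_iff {S : Set ℕ} :
    (∀ c, Nat.card {x // P.labelling e x = c} ∈ S) ↔ ∀ b ∈ P.parts, b.card ∈ S := by
  simp only [labelling_eq_iff, Nat.card_eq_finsetCard]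
  exact ⟨fun h b hb => by simpa using h (e ⟨b, hb⟩), fun h c => h _ (e.symm c).2⟩

lemma labelling_injective (P : Finpartition (univ : Finset α)) :
    Injective (P.labelling (m := m)) := by
  intro e e' h
  ext b : 1
  obtain ⟨x, hx⟩ := P.nonempty_of_mem_parts b.2
  rw [← labelling_of_mem hx, ← labelling_of_mem hx, h]

lemma parts_eq_image_labelling_fiber :
    P.parts = univ.image fun c => univ.filter (P.labelling e · = c) := by
  simp only [labelling_eq_iff, filter_univ_mem]
  ext b
  refine ⟨fun hb => mem_image.2 ⟨e ⟨b, hb⟩, mem_univ _, by simp⟩, fun hb => ?_⟩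
  obtain ⟨c, -, rfl⟩ := mem_image.1 hb
  exact (e.symm c).2

lemma eq_of_labelling_eq {e' : Q.parts ≃ Fin m} (h : P.labelling e = Q.labelling e') :
    P = Q :=
  Finpartition.ext (by rw [parts_eq_image_labelling_fiber (e := e),
    parts_eq_image_labelling_fiber (e := e'), h])

lemma exists_labelling_eq {f : α → Fin m} (hf : Surjective f) :
    ∃ (P : Finpartition (univ : Finset α)) (e : P.parts ≃ Fin m), P.labelling e = f := by
  let P := ofSetoid (Setoid.ker f)
  have hpart : ∀ x y, P.part x = P.part y ↔ f y = f x := fun x y => by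
    rw [← mem_part_iff_part_eq_part P (mem_univ x) (mem_univ y)]
    exact mem_part_ofSetoid_iff_rel
  let partOf : Fin m → P.parts := fun c => ⟨P.part (surjInv hf c), P.part_mem.2 (mem_univ _)⟩
  have hbij : Bijective partOf := by
    refine ⟨fun c d h => ?_, fun b => ?_⟩
    · rwa [Subtype.mk.injEq, hpart, surjInv_eq hf, surjInv_eq hf, eq_comm] at h
    · obtain ⟨x, -, hx⟩ := P.part_surjOn b.2
      exact ⟨f x, Subtype.ext ((hpart _ _).2 (surjInv_eq hf _).symm |>.trans hx)⟩
  refine ⟨P, (Equiv.ofBijective partOf hbij).symm, funext fun x => ?_⟩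
  rw [labelling, Equiv.symm_apply_eq, Equiv.ofBijective_apply, Subtype.mk.injEq, hpart,
    surjInv_eq hf]

end Finpartition

abbrev RestrictedSurjection (S : Set ℕ) (α : Type*) (m : ℕ) : Type _ :=
  {f : α → Fin m // Surjective f ∧ ∀ c, Nat.card {x // f x = c} ∈ S}

abbrev RestrictedPartition (S : Set ℕ) (α : Type*) [Fintype α] [DecidableEq α] (m : ℕ) :
    Type _ :=
  {P : Finpartition (univ : Finset α) // P.parts.card = m ∧ ∀ b ∈ P.parts, b.card ∈ S}

theorem card_restrictedSurjection {α : Type*} [Fintype α] [DecidableEq α] (S : Set ℕ)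
    (m : ℕ) :
    Nat.card (RestrictedSurjection S α m) = m.factorial * Nat.card (RestrictedPartition S α m) := by
  let Φ : (Σ P : RestrictedPartition S α m, P.1.parts ≃ Fin m) → RestrictedSurjection S α m :=
    fun σ => ⟨σ.1.1.labelling σ.2, Finpartition.labelling_surjective,
      Finpartition.forall_card_labelling_fiber_mem_iff.2 σ.1.2.2⟩
  have hΦ : Bijective Φ := by
    refine ⟨?_, ?_⟩
    · rintro ⟨⟨P, hP⟩, e⟩ ⟨⟨Q, hQ⟩, e'⟩ h
      have h' : P.labelling e = Q.labelling e' := congrArg Subtype.val h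
      obtain rfl := Finpartition.eq_of_labelling_eq h'
      obtain rfl := P.labelling_injective h'
      rfl
    · rintro ⟨f, hf, hS⟩
      obtain ⟨P, e, rfl⟩ := Finpartition.exists_labelling_eq hf
      exact ⟨⟨⟨P, by simpa using Fintype.card_congr e,
        Finpartition.forall_card_labelling_fiber_mem_iff.1 hS⟩, e⟩, rfl⟩
  have hlabels : ∀ P : RestrictedPartition S α m, Nat.card (P.1.parts ≃ Fin m) = m.factorial :=
    fun P => by
      rw [Nat.card_eq_fintype_card, Fintype.card_equiv (P.1.parts.equivFin.trans (finCongr P.2.1)),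
        Fintype.card_coe, P.2.1]
  rw [← Nat.card_eq_of_bijective Φ hΦ, Nat.card_sigma, sum_congr rfl fun P _ => hlabels P,
    sum_const, card_univ, ← Nat.card_eq_fintype_card, smul_eq_mul, mul_comm]

theorem Fin.eq_of_surjective_of_le_iff_le {ι : Type*} {m m' : ℕ} {f : ι → Fin m}
    {f' : ι → Fin m'} (hf : Surjective f) (hf' : Surjective f')
    (h : ∀ a b, f a ≤ f b ↔ f' a ≤ f' b) : m = m' ∧ ∀ a, (f a : ℕ) = f' a := by
  let φ : Fin m → Fin m' := f' ∘ surjInv hf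
  have hφ : ∀ a, φ (f a) = f' a := fun a =>
    le_antisymm ((h _ _).1 (surjInv_eq hf _).le) ((h _ _).1 (surjInv_eq hf _).ge)
  have hmono : StrictMono φ := by
    intro c d hcd
    obtain ⟨a, rfl⟩ := hf c
    obtain ⟨b, rfl⟩ := hf d
    rwa [hφ, hφ, ← lt_iff_lt_of_le_iff_le (h b a)]
  have hsurj : Surjective φ := fun c => let ⟨a, ha⟩ := hf' c; ⟨f a, (hφ a).trans ha⟩
  obtain rfl : m = m' := by
    simpa using Fintype.card_congr (Equiv.ofBijective φ ⟨hmono.injective, hsurj⟩)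
  have hid : φ = id := (hmono.range_inj strictMono_id).1 (by rw [hsurj.range_eq, Set.range_id])
  exact ⟨rfl, fun a => by rw [← hφ a, hid, id]⟩

section Staircase

variable {α β : Type*} {m m' : ℕ}

def staircase (f : α → Fin m) (g : β → Fin m) (i : α) (j : β) : Bool :=
  decide (g j ≤ f i)

variable {f : α → Fin m} {g : β → Fin m}

@[simp]
lemma staircase_eq_true {i : α} {j : β} : staircase f g i j = true ↔ g j ≤ f i :=
  decide_eq_true_iff

lemma isLonesum_staircase {n k : ℕ} (f : Fin n → Fin m) (g : Fin k → Fin m) :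
    IsLonesum (staircase f g) := by
  rintro i₁ i₂ j₁ j₂ - - ⟨h₁₁, h₂₂, h₁₂, h₂₁⟩
  simp only [staircase, decide_eq_true_eq, decide_eq_false_iff_not, not_le] at h₁₁ h₂₂ h₁₂ h₂₁
  exact lt_irrefl _ (((h₁₁.trans_lt h₁₂).trans_le h₂₂).trans h₂₁)

lemma le_iff_staircase_row_imp (hg : Surjective g) {a b : α} :
    f a ≤ f b ↔ ∀ j, staircase f g a j = true → staircase f g b j = true := by
  simp only [staircase_eq_true]
  refine ⟨fun h j hj => hj.trans h, fun h => ?_⟩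
  obtain ⟨j, hj⟩ := hg (f a)
  simpa [hj] using h j hj.le

lemma le_iff_staircase_col_imp (hf : Surjective f) {a b : β} :
    g b ≤ g a ↔ ∀ i, staircase f g i a = true → staircase f g i b = true := by
  simp only [staircase_eq_true]
  refine ⟨fun h i hi => h.trans hi, fun h => ?_⟩
  obtain ⟨i, hi⟩ := hf (g a)
  simpa [hi] using h i hi.ge

lemma staircase_row_eq_iff (hg : Surjective g) {a b : α} :
    staircase f g a = staircase f g b ↔ f a = f b := by
  refine ⟨fun h => le_antisymm ?_ ?_, fun h => funext fun j => by simp only [staircase, h]⟩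
  · exact (le_iff_staircase_row_imp hg).2 (by simp [h])
  · exact (le_iff_staircase_row_imp hg).2 (by simp [h])

lemma staircase_col_eq_iff (hf : Surjective f) {a b : β} :
    (fun i => staircase f g i a) = (fun i => staircase f g i b) ↔ g a = g b := by
  refine ⟨fun h => le_antisymm ?_ ?_, fun h => funext fun i => by simp only [staircase, h]⟩
  · exact (le_iff_staircase_col_imp hf).2 fun i => by simp [congrFun h i]
  · exact (le_iff_staircase_col_imp hf).2 fun i => by simp [congrFun h i]

lemma staircase_injective {f' : α → Fin m'} {g' : β → Fin m'} (hf : Surjective f)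
    (hg : Surjective g) (hf' : Surjective f') (hg' : Surjective g')
    (h : staircase f g = staircase f' g') :
    m = m' ∧ (∀ i, (f i : ℕ) = f' i) ∧ ∀ j, (g j : ℕ) = g' j := by
  obtain ⟨rfl, hff'⟩ := Fin.eq_of_surjective_of_le_iff_le hf hf' fun a b => by
    rw [le_iff_staircase_row_imp hg, le_iff_staircase_row_imp hg', h]
  refine ⟨rfl, hff', (Fin.eq_of_surjective_of_le_iff_le hg hg' fun a b => ?_).2⟩
  rw [le_iff_staircase_col_imp hf, le_iff_staircase_col_imp hf', h]

end Staircase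

section Decomposition

variable {n k : ℕ} {M : Fin n → Fin k → Bool}

def rowSupport (M : Fin n → Fin k → Bool) (i : Fin n) : Finset (Fin k) :=
  univ.filter (M i · = true)

lemma rowSupport_subset_or_subset (hM : IsLonesum M) (i i' : Fin n) :
    rowSupport M i ⊆ rowSupport M i' ∨ rowSupport M i' ⊆ rowSupport M i := by
  by_contra! h
  obtain ⟨j, hj, hj'⟩ := not_subset.1 h.1
  obtain ⟨j', hj'', hj'''⟩ := not_subset.1 h.2
  simp only [rowSupport, mem_filter, mem_univ, true_and, Bool.not_eq_true] at hj hj' hj'' hj'''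
  exact hM i i' j j' (by rintro rfl; simp_all) (by rintro rfl; simp_all) ⟨hj, hj'', hj''', hj'⟩

lemma rowSupport_subset_of_card_le (hM : IsLonesum M) {i i' : Fin n}
    (h : #(rowSupport M i) ≤ #(rowSupport M i')) : rowSupport M i ⊆ rowSupport M i' :=
  (rowSupport_subset_or_subset hM i i').elim id
    fun h' => (eq_of_subset_of_card_le h' h).symm.subset

lemma exists_col_threshold (hM : IsLonesum M) (hrow : ∀ i, ∃ j, M i j = true) (i : Fin n) :
    ∃ j, M i j = true ∧ ∀ i', M i' j = true → #(rowSupport M i) ≤ #(rowSupport M i') := by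
  -- Otherwise the support of row `i` is covered by the largest strictly smaller row support.
  by_contra! hcon
  obtain ⟨j₀, hj₀⟩ := hrow i
  obtain ⟨i₀, -, hi₀⟩ := hcon j₀ hj₀
  obtain ⟨i₁, hi₁, hmax⟩ := exists_max_image
    (univ.filter fun i' => #(rowSupport M i') < #(rowSupport M i)) (fun i' => #(rowSupport M i'))
    ⟨i₀, by simpa using hi₀⟩
  have hsub : rowSupport M i ⊆ rowSupport M i₁ := fun j hj => by
    obtain ⟨i', hi'j, hi'⟩ := hcon j (by simpa [rowSupport] using hj)
    exact rowSupport_subset_of_card_le hM (hmax i' (by simpa using hi')) (by simpa [rowSupport])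
  exact (card_le_card hsub).not_gt (by simpa using hi₁)

theorem exists_staircase_eq (hM : IsLonesum M) (hrow : ∀ i, ∃ j, M i j = true)
    (hcol : ∀ j, ∃ i, M i j = true) :
    ∃ (m : ℕ) (f : Fin n → Fin m) (g : Fin k → Fin m),
      Surjective f ∧ Surjective g ∧ staircase f g = M := by
  let r : Fin n → ℕ := fun i => #(rowSupport M i)
  let T := univ.image r
  let e := T.orderIsoOfFin rfl
  let f : Fin n → Fin #T := fun i => e.symm ⟨r i, mem_image_of_mem r (mem_univ i)⟩
  have hf_le : ∀ i i', f i ≤ f i' ↔ r i ≤ r i' := fun i i' => by simp [f]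
  have hf : Surjective f := fun c => by
    obtain ⟨i, -, hi⟩ := mem_image.1 (e c).2
    exact ⟨i, by simp [f, hi]⟩
  have hcolne : ∀ j, ((univ.filter (M · j = true)).image f).Nonempty := fun j =>
    let ⟨i, hi⟩ := hcol j; ⟨f i, mem_image_of_mem f (by simpa using hi)⟩
  let g : Fin k → Fin #T := fun j => ((univ.filter (M · j = true)).image f).min' (hcolne j)
  have hM_iff : ∀ i j, M i j = true ↔ g j ≤ f i := fun i j => by
    refine ⟨fun hij => min'_le _ _ (mem_image_of_mem f (by simpa using hij)), fun hle => ?_⟩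
    obtain ⟨i₀, hi₀, hgi₀⟩ := mem_image.1 (min'_mem _ (hcolne j))
    have hsub := rowSupport_subset_of_card_le hM ((hf_le i₀ i).1 (hgi₀ ▸ hle))
    simpa [rowSupport] using hsub (by simpa [rowSupport] using hi₀)
  have hg : Surjective g := fun c => by
    obtain ⟨i, rfl⟩ := hf c
    obtain ⟨j, hij, hmin⟩ := exists_col_threshold hM hrow i
    refine ⟨j, le_antisymm ((hM_iff i j).1 hij) (le_min' _ _ _ fun c hc => ?_)⟩
    obtain ⟨i', hi', rfl⟩ := mem_image.1 hc
    exact (hf_le i i').2 (hmin i' (by simpa using hi'))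
  exact ⟨#T, f, g, hf, hg, funext fun i => funext fun j =>
    Bool.eq_iff_iff.2 (staircase_eq_true.trans (hM_iff i j).symm)⟩

end Decomposition

section RestrictedLonesum

variable {n k : ℕ}

def IsRestrictedLonesum (S₁ S₂ : Set ℕ) (M : Fin n → Fin k → Bool) : Prop :=
  IsLonesum M ∧ (∀ i, ∃ j, M i j = true) ∧ (∀ j, ∃ i, M i j = true) ∧
    (∀ i : Fin n, Nat.card {i' : Fin n // M i' = M i} ∈ S₁) ∧
    (∀ j : Fin k, Nat.card {j' : Fin k // (fun i => M i j') = fun i => M i j} ∈ S₂)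

lemma isRestrictedLonesum_staircase_iff {S₁ S₂ : Set ℕ} {m : ℕ} {f : Fin n → Fin m}
    {g : Fin k → Fin m} (hf : Surjective f) (hg : Surjective g) :
    IsRestrictedLonesum S₁ S₂ (staircase f g) ↔
      (∀ c, Nat.card {i // f i = c} ∈ S₁) ∧ ∀ c, Nat.card {j // g j = c} ∈ S₂ := by
  have hrow : ∀ i, ∃ j, staircase f g i j = true := fun i =>
    let ⟨j, hj⟩ := hg (f i); ⟨j, staircase_eq_true.2 hj.le⟩
  have hcol : ∀ j, ∃ i, staircase f g i j = true := fun j =>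
    let ⟨i, hi⟩ := hf (g j); ⟨i, staircase_eq_true.2 hi.ge⟩
  simp only [IsRestrictedLonesum, isLonesum_staircase, hrow, hcol, implies_true, true_and,
    staircase_row_eq_iff hg, staircase_col_eq_iff hf]
  exact and_congr (hf.forall (p := (Nat.card {i // f i = ·} ∈ S₁))).symm
    (hg.forall (p := (Nat.card {j // g j = ·} ∈ S₂))).symm

-- Surjectivity of `f` and `g` forces `m ≤ min n k`; the bound only makes the index type finite.
abbrev StaircaseData (S₁ S₂ : Set ℕ) (n k : ℕ) : Type :=
  Σ m : Fin (min n k + 1), RestrictedSurjection S₁ (Fin n) m × RestrictedSurjection S₂ (Fin k) m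

noncomputable def StaircaseData.toMatrix {S₁ S₂ : Set ℕ} (x : StaircaseData S₁ S₂ n k) :
    {M : Fin n → Fin k → Bool // IsRestrictedLonesum S₁ S₂ M} :=
  ⟨staircase x.2.1.1 x.2.2.1,
    (isRestrictedLonesum_staircase_iff x.2.1.2.1 x.2.2.2.1).2 ⟨x.2.1.2.2, x.2.2.2.2⟩⟩

lemma StaircaseData.toMatrix_bijective {S₁ S₂ : Set ℕ} :
    Bijective (StaircaseData.toMatrix (S₁ := S₁) (S₂ := S₂) (n := n) (k := k)) := by
  refine ⟨?_, ?_⟩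
  · rintro ⟨m, ⟨f, hf, _⟩, ⟨g, hg, _⟩⟩ ⟨m', ⟨f', hf', _⟩, ⟨g', hg', _⟩⟩ h
    obtain ⟨hm, hff', hgg'⟩ := staircase_injective hf hg hf' hg' (congrArg Subtype.val h)
    obtain rfl := Fin.ext hm
    obtain rfl : f = f' := funext fun i => Fin.ext (hff' i)
    obtain rfl : g = g' := funext fun j => Fin.ext (hgg' j)
    rfl
  · rintro ⟨M, hM⟩
    obtain ⟨m, f, g, hf, hg, rfl⟩ := exists_staircase_eq hM.1 hM.2.1 hM.2.2.1
    have hmn : m ≤ n := by simpa using Fintype.card_le_of_surjective f hf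
    have hmk : m ≤ k := by simpa using Fintype.card_le_of_surjective g hg
    obtain ⟨hfS, hgS⟩ := (isRestrictedLonesum_staircase_iff hf hg).1 hM
    exact ⟨⟨⟨m, by omega⟩, ⟨f, hf, hfS⟩, ⟨g, hg, hgS⟩⟩, rfl⟩

end RestrictedLonesum

theorem card_restricted_lonesum_general (S₁ S₂ : Set ℕ) (n k : ℕ) :
    Nat.card {M : Fin n → Fin k → Bool // IsLonesum M ∧
      (∀ i, ∃ j, M i j = true) ∧ (∀ j, ∃ i, M i j = true) ∧
      (∀ i : Fin n, Nat.card {i' : Fin n // M i' = M i} ∈ S₁) ∧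
      (∀ j : Fin k, Nat.card {j' : Fin k // (fun i => M i j') = fun i => M i j} ∈ S₂)} =
    ∑ m ∈ Finset.range (min n k + 1),
      m.factorial * sStirling S₁ n m * (m.factorial * sStirling S₂ k m) := by
  refine (Nat.card_eq_of_bijective _ StaircaseData.toMatrix_bijective).symm.trans ?_
  rw [Nat.card_sigma, ← Fin.sum_univ_eq_sum_range]
  simp only [Nat.card_prod, card_restrictedSurjection, sStirling]

/-- the number of `n × k` lonesum 0-1 matrices without all-zero rows or
columns, in which the number of rows of each type lies in `S₁` and the number of columns
of each type lies in `S₂`, equals `∑_m m! {n brace m}_{S₁} · m! {k brace m}_{S₂}`. -/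
theorem card_restricted_lonesum (S₁ S₂ : Set ℕ) (h₁ : 0 ∉ S₁) (h₂ : 0 ∉ S₂) (n k : ℕ) :
    Nat.card {M : Fin n → Fin k → Bool // IsLonesum M ∧
      (∀ i, ∃ j, M i j = true) ∧ (∀ j, ∃ i, M i j = true) ∧
      (∀ i : Fin n, Nat.card {i' : Fin n // M i' = M i} ∈ S₁) ∧
      (∀ j : Fin k, Nat.card {j' : Fin k // (fun i => M i j') = fun i => M i j} ∈ S₂)} =
    ∑ m ∈ Finset.range (min n k + 1),
      m.factorial * sStirling S₁ n m * (m.factorial * sStirling S₂ k m) :=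
  card_restricted_lonesum_general S₁ S₂ n k
end

section
/- The double exponential generating function of all (S_1,S_2)-restricted lonesum matrices (allowing all-zero rows and columns, whose counts must also lie in S_1 resp. S_2 when nonzero) is (1 + E_{S_1}(x))(1 + E_{S_2}(y)) / (1 - E_{S_1}(x) E_{S_2}(y)). -/
open scoped Classical

/-- The formal power series `E_S` in the variable `i` of a two-variable power series
ring: the coefficient of a monomial is `1/s!` if the monomial is `x_i^s` with `s ∈ S`. -/
noncomputable def ESmv (S : Set ℕ) (i : Fin 2) : MvPowerSeries (Fin 2) ℚ :=
  fun d => if d = Finsupp.single i (d i) ∧ d i ∈ S then ((d i).factorial : ℚ)⁻¹ else 0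

/-- The number of `n × k` `(S₁,S₂)`-restricted lonesum matrices (all-zero rows and
columns allowed; every row type count lies in `S₁` and every column type count in `S₂`). -/
noncomputable def lonesumCountAll (S₁ S₂ : Set ℕ) (n k : ℕ) : ℕ :=
  Nat.card {M : Fin n → Fin k → Bool // IsLonesum M ∧
    (∀ i : Fin n, Nat.card {i' : Fin n // M i' = M i} ∈ S₁) ∧
    (∀ j : Fin k, Nat.card {j' : Fin k // (fun i => M i j') = fun i => M i j} ∈ S₂)}

/-- The double exponential generating function of the matrix counts. -/
noncomputable def lonesumDEGF (S₁ S₂ : Set ℕ) : MvPowerSeries (Fin 2) ℚ :=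
  fun d => (lonesumCountAll S₁ S₂ (d 0) (d 1) : ℚ) / ((d 0).factorial * (d 1).factorial)

open Finset


section General
variable {α β : Type*}

/-- general lonesum predicate -/
def LS (M : α → β → Bool) : Prop :=
  ∀ i₁ i₂ : α, ∀ j₁ j₂ : β, i₁ ≠ i₂ → j₁ ≠ j₂ →
    ¬(M i₁ j₁ = true ∧ M i₂ j₂ = true ∧ M i₁ j₂ = false ∧ M i₂ j₁ = false)

def Valid (S₁ S₂ : Set ℕ) (M : α → β → Bool) : Prop :=
  LS M ∧ (∀ i : α, Nat.card {i' : α // M i' = M i} ∈ S₁) ∧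
    (∀ j : β, Nat.card {j' : β // (fun i => M i j') = fun i => M i j} ∈ S₂)

def RowLe (M : α → β → Bool) (i i' : α) : Prop := ∀ j, M i j = true → M i' j = true

def ColLe (M : α → β → Bool) (j j' : β) : Prop := ∀ i, M i j = true → M i j' = true

theorem rowle_total {M : α → β → Bool} (h : LS M) (i i' : α) :
    RowLe M i i' ∨ RowLe M i' i := by
  by_contra hc
  simp only [RowLe, not_or, not_forall] at hc
  obtain ⟨⟨j₁, hj₁, hj₁'⟩, ⟨j₂, hj₂, hj₂'⟩⟩ := hc
  simp only [Bool.not_eq_true] at hj₁' hj₂'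
  have hii : i ≠ i' := by rintro rfl; rw [hj₁] at hj₁'; exact Bool.noConfusion hj₁'
  have hjj : j₁ ≠ j₂ := by rintro rfl; rw [hj₂] at hj₁'; exact Bool.noConfusion hj₁'
  exact h i i' j₁ j₂ hii hjj ⟨hj₁, hj₂, hj₂', hj₁'⟩

theorem colle_total {M : α → β → Bool} (h : LS M) (j j' : β) :
    ColLe M j j' ∨ ColLe M j' j := by
  by_contra hc
  simp only [ColLe, not_or, not_forall] at hc
  obtain ⟨⟨i₁, hi₁, hi₁'⟩, ⟨i₂, hi₂, hi₂'⟩⟩ := hc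
  simp only [Bool.not_eq_true] at hi₁' hi₂'
  have hii : i₁ ≠ i₂ := by rintro rfl; rw [hi₂] at hi₁'; exact Bool.noConfusion hi₁'
  have hjj : j ≠ j' := by rintro rfl; rw [hi₁] at hi₁'; exact Bool.noConfusion hi₁'
  exact h i₁ i₂ j j' hii hjj ⟨hi₁, hi₂, hi₁', hi₂'⟩

theorem ls_of_rowle_total {M : α → β → Bool}
    (h : ∀ i i', RowLe M i i' ∨ RowLe M i' i) : LS M := by
  rintro i₁ i₂ j₁ j₂ hi hj ⟨h11, h22, h12, h21⟩
  rcases h i₁ i₂ with hr | hr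
  · rw [hr j₁ h11] at h21; exact Bool.noConfusion h21
  · rw [hr j₂ h22] at h12; exact Bool.noConfusion h12

theorem row_eq_of_rowle {M : α → β → Bool} {i i' : α}
    (h : RowLe M i i') (h' : RowLe M i' i) : M i = M i' := by
  funext j
  rcases hb : M i j with _ | _
  · rcases hb' : M i' j with _ | _
    · rfl
    · rw [h' j hb'] at hb; exact hb.symm ▸ rfl
  · exact (h j hb).symm

theorem col_eq_of_colle {M : α → β → Bool} {j j' : β}
    (h : ColLe M j j') (h' : ColLe M j' j) :
    (fun i => M i j) = fun i => M i j' := by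
  funext i
  rcases hb : M i j with _ | _
  · rcases hb' : M i j' with _ | _
    · rfl
    · rw [h' i hb'] at hb; exact hb.symm ▸ rfl
  · exact (h i hb).symm

end General

section Fin
variable {α β : Type*} [Fintype α] [Fintype β]

theorem exists_max_row {M : α → β → Bool} (h : LS M) [Nonempty α] :
    ∃ i₀, ∀ i, RowLe M i i₀ := by
  obtain ⟨i₀, -, hmax⟩ := Finset.exists_max_image (univ : Finset α)
    (fun i => (univ.filter fun j => M i j = true).card) univ_nonempty
  refine ⟨i₀, fun i => ?_⟩
  rcases rowle_total h i i₀ with h1 | h1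
  · exact h1
  · -- RowLe i₀ i, with card max at i₀: supports equal
    have hsub : (univ.filter fun j => M i₀ j = true) ⊆ univ.filter fun j => M i j = true := by
      intro j hj
      simp only [mem_filter, mem_univ, true_and] at hj ⊢
      exact h1 j hj
    have hcard := hmax i (mem_univ i)
    have : (univ.filter fun j => M i₀ j = true) = univ.filter fun j => M i j = true :=
      Finset.eq_of_subset_of_card_le hsub hcard
    intro j hj
    have : j ∈ univ.filter fun j => M i₀ j = true := by
      rw [this]; simp [hj]
    simpa using this

theorem exists_min_col {M : α → β → Bool} (h : LS M) (hne : ∃ i j, M i j = true) :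
    ∃ j₀, (∃ i, M i j₀ = true) ∧ ∀ j, (∃ i, M i j = true) → ColLe M j₀ j := by
  obtain ⟨i₁, j₁, hij⟩ := hne
  obtain ⟨j₀, hj₀mem, hmin⟩ := Finset.exists_min_image
    (univ.filter fun j => ∃ i, M i j = true)
    (fun j => (univ.filter fun i => M i j = true).card) ⟨j₁, by simp; exact ⟨i₁, hij⟩⟩
  simp only [mem_filter, mem_univ, true_and] at hj₀mem
  refine ⟨j₀, hj₀mem, fun j hj => ?_⟩
  rcases colle_total h j₀ j with h1 | h1
  · exact h1
  · have hsub : (univ.filter fun i => M i j = true) ⊆ univ.filter fun i => M i j₀ = true := by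
      intro i hi
      simp only [mem_filter, mem_univ, true_and] at hi ⊢
      exact h1 i hi
    have hcard := hmin j (by simp only [mem_filter, mem_univ, true_and]; exact hj)
    have heq : (univ.filter fun i => M i j = true) = univ.filter fun i => M i j₀ = true :=
      Finset.eq_of_subset_of_card_le hsub hcard
    intro i hi
    have : i ∈ univ.filter fun i => M i j = true := by
      rw [heq]; simp [hi]
    simpa using this

end Fin


section Struct
variable {α β : Type*} [Fintype α] [Fintype β]

noncomputable def maxRows (M : α → β → Bool) : Finset α :=
  univ.filter fun i => ∀ i', RowLe M i' i

noncomputable def Bcols (M : α → β → Bool) : Finset β :=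
  univ.filter fun j => ∀ i, (M i j = true ↔ i ∈ maxRows M)

variable {M : α → β → Bool}

theorem maxRows_nonempty (h : LS M) (hne : ∃ i j, M i j = true) :
    (maxRows M).Nonempty := by
  have : Nonempty α := ⟨hne.choose⟩
  obtain ⟨i₀, hi₀⟩ := exists_max_row h
  exact ⟨i₀, by simp [maxRows, hi₀]⟩

theorem maxRows_rows_eq {i i' : α} (hi : i ∈ maxRows M) (hi' : i' ∈ maxRows M) :
    M i = M i' := by
  simp only [maxRows, mem_filter, mem_univ, true_and] at hi hi'
  exact row_eq_of_rowle (hi' i) (hi i')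

theorem maxRows_eq_filter {i : α} (hi : i ∈ maxRows M) :
    maxRows M = univ.filter fun i' => M i' = M i := by
  ext i'
  simp only [maxRows, mem_filter, mem_univ, true_and] at hi ⊢
  constructor
  · intro hi'
    exact maxRows_rows_eq (by simp [maxRows, hi']) (by simp [maxRows, hi])
  · intro he i''
    intro j hj
    have := hi i'' j hj
    rw [he]; exact this

/-- a zero entry on a max row kills the whole column -/
theorem col_zero_of_max_zero {i : α} (hi : i ∈ maxRows M) {j : β}
    (hz : M i j = false) (i' : α) : M i' j = false := by
  simp only [maxRows, mem_filter, mem_univ, true_and] at hi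
  rcases hb : M i' j with _ | _
  · rfl
  · rw [hi i' j hb] at hz; exact Bool.noConfusion hz

theorem max_one_of_col_nonzero {j : β} (hj : ∃ i, M i j = true) {i : α}
    (hi : i ∈ maxRows M) : M i j = true := by
  rcases hb : M i j with _ | _
  · obtain ⟨i', hi'⟩ := hj
    rw [col_zero_of_max_zero hi hb i'] at hi'; exact Bool.noConfusion hi'
  · rfl

theorem Bcols_nonempty (h : LS M) (hne : ∃ i j, M i j = true) :
    (Bcols M).Nonempty := by
  obtain ⟨j₀, hj₀ne, hj₀min⟩ := exists_min_col h ⟨hne.choose, hne.choose_spec⟩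
  refine ⟨j₀, ?_⟩
  simp only [Bcols, mem_filter, mem_univ, true_and]
  intro i
  constructor
  · intro hij
    -- i is a max row: show ∀ i'', RowLe M i'' i
    by_contra hcon
    simp only [maxRows, mem_filter, mem_univ, true_and] at hcon
    push_neg at hcon
    obtain ⟨i'', hi''⟩ := hcon
    simp only [RowLe, not_forall] at hi''
    obtain ⟨j₁, hj₁t, hj₁f⟩ := hi''
    simp only [Bool.not_eq_true] at hj₁f
    -- column j₁ is nonzero, so ColLe j₀ j₁, so M i j₁ = true, contradiction
    have := hj₀min j₁ ⟨i'', hj₁t⟩ i hij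
    rw [this] at hj₁f; exact Bool.noConfusion hj₁f
  · intro hi
    exact max_one_of_col_nonzero hj₀ne hi

theorem Bcols_cols_eq {j j' : β} (hj : j ∈ Bcols M) (hj' : j' ∈ Bcols M) :
    (fun i => M i j) = fun i => M i j' := by
  simp only [Bcols, mem_filter, mem_univ, true_and] at hj hj'
  funext i
  rcases hb : M i j with _ | _
  · rcases hb' : M i j' with _ | _
    · rfl
    · rw [(hj i).2 ((hj' i).1 hb')] at hb; exact Bool.noConfusion hb
  · exact ((hj' i).2 ((hj i).1 hb)).symm

theorem Bcols_eq_filter {j : β} (hj : j ∈ Bcols M) :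
    Bcols M = univ.filter fun j' => (fun i => M i j') = fun i => M i j := by
  ext j'
  constructor
  · intro hj'
    simp only [mem_filter, mem_univ, true_and]
    exact Bcols_cols_eq hj' hj
  · intro hj'
    simp only [mem_filter, mem_univ, true_and] at hj'
    simp only [Bcols, mem_filter, mem_univ, true_and] at hj ⊢
    intro i
    rw [show M i j' = M i j from congrFun hj' i]
    exact hj i

theorem not_max_zero_on_B {i : α} (hi : i ∉ maxRows M) {j : β} (hj : j ∈ Bcols M) :
    M i j = false := by
  simp only [Bcols, mem_filter, mem_univ, true_and] at hj
  rcases hb : M i j with _ | _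
  · rfl
  · exact absurd ((hj i).1 hb) hi

/-- description of max-row entries -/
theorem max_row_entry {i : α} (hi : i ∈ maxRows M) (j : β) :
    (M i j = true ↔ j ∈ Bcols M ∨ ∃ i', i' ∉ maxRows M ∧ M i' j = true) := by
  constructor
  · intro hij
    by_cases hall : ∃ i', i' ∉ maxRows M ∧ M i' j = true
    · exact Or.inr hall
    · push_neg at hall
      left
      simp only [Bcols, mem_filter, mem_univ, true_and]
      intro i''
      constructor
      · intro hi''
        by_contra hc
        exact hall i'' hc hi''
      · intro hi''
        exact max_one_of_col_nonzero ⟨i, hij⟩ hi''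
  · rintro (hB | ⟨i', -, hi'⟩)
    · simp only [Bcols, mem_filter, mem_univ, true_and] at hB
      exact (hB i).2 hi
    · exact max_one_of_col_nonzero ⟨i', hi'⟩ hi

end Struct


section Recon
variable {α β : Type*} [Fintype α] [Fintype β] [DecidableEq α] [DecidableEq β]

def restrictM (M : α → β → Bool) (A : Finset α) (B : Finset β) :
    ↥(Aᶜ) → ↥(Bᶜ) → Bool := fun i j => M i j

noncomputable def recon (A : Finset α) (B : Finset β) (M' : ↥(Aᶜ) → ↥(Bᶜ) → Bool) :
    α → β → Bool := fun i j =>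
  if i ∈ A then
    decide (j ∈ B) || decide (∃ i' : ↥(Aᶜ), ∃ hj : j ∈ Bᶜ, M' i' ⟨j, hj⟩ = true)
  else if hj : j ∈ Bᶜ then
    if hi : i ∈ Aᶜ then M' ⟨i, hi⟩ ⟨j, hj⟩ else false
  else false

variable {A : Finset α} {B : Finset β} {M' : ↥(Aᶜ) → ↥(Bᶜ) → Bool}

theorem ls_restrict {M : α → β → Bool} (h : LS M) : LS (restrictM M A B) := by
  intro i₁ i₂ j₁ j₂ hi hj
  exact h i₁ i₂ j₁ j₂ (fun he => hi (Subtype.ext he)) (fun he => hj (Subtype.ext he))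

theorem recon_mem {i : α} (hi : i ∈ A) (j : β) :
    recon A B M' i j =
      (decide (j ∈ B) || decide (∃ i' : ↥(Aᶜ), ∃ hj : j ∈ Bᶜ, M' i' ⟨j, hj⟩ = true)) := by
  simp [recon, hi]

theorem recon_mem_memB {i : α} (hi : i ∈ A) {j : β} (hj : j ∈ B) :
    recon A B M' i j = true := by
  simp [recon_mem hi, hj]

theorem recon_not_mem_memB {i : α} (hi : i ∉ A) {j : β} (hj : j ∈ B) :
    recon A B M' i j = false := by
  have hj' : j ∉ Bᶜ := by simp [hj]
  simp [recon, hi, hj']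

theorem recon_not_mem {i : α} (hi : i ∉ A) {j : β} (hj : j ∈ Bᶜ) :
    recon A B M' i j = M' ⟨i, Finset.mem_compl.2 hi⟩ ⟨j, hj⟩ := by
  simp [recon, hi, hj, Finset.mem_compl.2 hi]

theorem recon_row_const {i₁ i₂ : α} (h₁ : i₁ ∈ A) (h₂ : i₂ ∈ A) :
    recon A B M' i₁ = recon A B M' i₂ := by
  funext j; rw [recon_mem h₁, recon_mem h₂]

theorem recon_rowle_max {i : α} (hi : i ∉ A) {i' : α} (hi' : i' ∈ A) :
    RowLe (recon A B M') i i' := by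
  intro j hj
  by_cases hjB : j ∈ Bᶜ
  · rw [recon_not_mem hi hjB] at hj
    rw [recon_mem hi']
    simp only [Bool.or_eq_true, decide_eq_true_eq]
    exact Or.inr ⟨_, hjB, hj⟩
  · rw [Finset.notMem_compl] at hjB
    exact recon_mem_memB hi' hjB

theorem ls_recon (h : LS M') : LS (recon A B M') := by
  apply ls_of_rowle_total
  intro i₁ i₂
  by_cases h₁ : i₁ ∈ A <;> by_cases h₂ : i₂ ∈ A
  · left; intro j hj; rwa [← congrFun (recon_row_const h₁ h₂) j]
  · right; exact recon_rowle_max h₂ h₁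
  · left; exact recon_rowle_max h₁ h₂
  · -- both outside A
    rcases rowle_total h ⟨i₁, Finset.mem_compl.2 h₁⟩ ⟨i₂, Finset.mem_compl.2 h₂⟩ with hr | hr
    · left
      intro j hj
      by_cases hjB : j ∈ Bᶜ
      · rw [recon_not_mem h₁ hjB] at hj
        rw [recon_not_mem h₂ hjB]
        exact hr _ hj
      · rw [Finset.notMem_compl] at hjB
        rw [recon_not_mem_memB h₁ hjB] at hj; exact Bool.noConfusion hj
    · right
      intro j hj
      by_cases hjB : j ∈ Bᶜ
      · rw [recon_not_mem h₂ hjB] at hj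
        rw [recon_not_mem h₁ hjB]
        exact hr _ hj
      · rw [Finset.notMem_compl] at hjB
        rw [recon_not_mem_memB h₂ hjB] at hj; exact Bool.noConfusion hj

theorem recon_row_ne {i₁ i₂ : α} (h₁ : i₁ ∈ A) (h₂ : i₂ ∉ A) (hB : B.Nonempty) :
    recon A B M' i₁ ≠ recon A B M' i₂ := by
  obtain ⟨j, hj⟩ := hB
  intro he
  have := congrFun he j
  rw [recon_mem_memB h₁ hj, recon_not_mem_memB h₂ hj] at this
  exact Bool.noConfusion this

theorem recon_row_eq_iff {i₁ i₂ : α} (h₁ : i₁ ∉ A) (h₂ : i₂ ∉ A) :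
    recon A B M' i₁ = recon A B M' i₂ ↔
      M' ⟨i₁, Finset.mem_compl.2 h₁⟩ = M' ⟨i₂, Finset.mem_compl.2 h₂⟩ := by
  constructor
  · intro he
    funext j
    have := congrFun he (j : β)
    rwa [recon_not_mem h₁ j.2, recon_not_mem h₂ j.2] at this
  · intro he
    funext j
    by_cases hjB : j ∈ Bᶜ
    · rw [recon_not_mem h₁ hjB, recon_not_mem h₂ hjB, he]
    · rw [Finset.notMem_compl] at hjB
      rw [recon_not_mem_memB h₁ hjB, recon_not_mem_memB h₂ hjB]

theorem recon_col_const {j₁ j₂ : β} (h₁ : j₁ ∈ B) (h₂ : j₂ ∈ B) :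
    (fun i => recon A B M' i j₁) = fun i => recon A B M' i j₂ := by
  have h₁' : j₁ ∉ Bᶜ := by simp [h₁]
  have h₂' : j₂ ∉ Bᶜ := by simp [h₂]
  funext i
  by_cases hi : i ∈ A
  · rw [recon_mem_memB hi h₁, recon_mem_memB hi h₂]
  · rw [recon_not_mem_memB hi h₁, recon_not_mem_memB hi h₂]

theorem recon_col_eq_iff {j₁ j₂ : β} (h₁ : j₁ ∉ B) (h₂ : j₂ ∉ B) :
    ((fun i => recon A B M' i j₁) = fun i => recon A B M' i j₂) ↔
      ((fun i' => M' i' ⟨j₁, Finset.mem_compl.2 h₁⟩) =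
        fun i' => M' i' ⟨j₂, Finset.mem_compl.2 h₂⟩) := by
  have h₁' : j₁ ∈ Bᶜ := Finset.mem_compl.2 h₁
  have h₂' : j₂ ∈ Bᶜ := Finset.mem_compl.2 h₂
  constructor
  · intro he
    funext i'
    have := congrFun he (i' : α)
    have hni : (i' : α) ∉ A := Finset.mem_compl.1 i'.2
    rwa [recon_not_mem hni h₁', recon_not_mem hni h₂', Subtype.eta] at this
  · intro he
    funext i
    by_cases hi : i ∈ A
    · rw [recon_mem hi, recon_mem hi]
      have h1B : j₁ ∉ B := h₁
      congr 1
      · simp [h₁, h₂]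
      · congr 1
        apply propext
        constructor
        · rintro ⟨i', hj, hv⟩
          exact ⟨i', h₂', by rw [show (⟨j₂, h₂'⟩ : ↥(Bᶜ)) = ⟨j₂, _⟩ from rfl,
            ← congrFun he i', show (⟨j₁, _⟩ : ↥(Bᶜ)) = ⟨j₁, hj⟩ from rfl]; exact hv⟩
        · rintro ⟨i', hj, hv⟩
          exact ⟨i', h₁', by rw [show (⟨j₁, h₁'⟩ : ↥(Bᶜ)) = ⟨j₁, _⟩ from rfl,
            congrFun he i', show (⟨j₂, _⟩ : ↥(Bᶜ)) = ⟨j₂, hj⟩ from rfl]; exact hv⟩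
    · rw [recon_not_mem hi h₁', recon_not_mem hi h₂']
      exact congrFun he _

theorem recon_col_ne {j₁ j₂ : β} (h₁ : j₁ ∈ B) (h₂ : j₂ ∉ B) (hA : A.Nonempty) :
    (fun i => recon A B M' i j₁) ≠ fun i => recon A B M' i j₂ := by
  have h₂' : j₂ ∈ Bᶜ := Finset.mem_compl.2 h₂
  intro he
  by_cases hc : ∃ i' : ↥(Aᶜ), M' i' ⟨j₂, h₂'⟩ = true
  · obtain ⟨i', hv⟩ := hc
    have hni : (i' : α) ∉ A := Finset.mem_compl.1 i'.2
    have := congrFun he (i' : α)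
    rw [recon_not_mem_memB hni h₁, recon_not_mem hni h₂'] at this
    rw [show (⟨(i' : α), Finset.mem_compl.2 hni⟩ : ↥(Aᶜ)) = i' from Subtype.ext rfl, hv] at this
    exact Bool.noConfusion this
  · obtain ⟨i, hi⟩ := hA
    have := congrFun he i
    rw [recon_mem_memB hi h₁, recon_mem hi] at this
    have h2B : j₂ ∉ B := h₂
    have hex : ∃ i' : ↥(Aᶜ), ∃ hj : j₂ ∈ Bᶜ, M' i' ⟨j₂, hj⟩ = true := by
      simpa [h2B] using this.symm
    obtain ⟨i', hj, hv⟩ := hex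
    exact hc ⟨i', hv⟩

end Recon


section Recon2
variable {α β : Type*} [Fintype α] [Fintype β] [DecidableEq α] [DecidableEq β]
variable {A : Finset α} {B : Finset β} {M' : ↥(Aᶜ) → ↥(Bᶜ) → Bool}

theorem maxRows_recon (hA : A.Nonempty) (hB : B.Nonempty) :
    maxRows (recon A B M') = A := by
  ext i
  simp only [maxRows, mem_filter, mem_univ, true_and]
  constructor
  · intro hmax
    by_contra hi
    obtain ⟨i₀, hi₀⟩ := hA
    obtain ⟨j, hj⟩ := hB
    have := hmax i₀ j (recon_mem_memB hi₀ hj)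
    rw [recon_not_mem_memB hi hj] at this
    exact Bool.noConfusion this
  · intro hi i'
    by_cases hi' : i' ∈ A
    · intro j hj; rwa [← congrFun (recon_row_const hi' hi) j]
    · exact recon_rowle_max hi' hi

theorem Bcols_recon (hA : A.Nonempty) (hB : B.Nonempty) :
    Bcols (recon A B M') = B := by
  ext j
  simp only [Bcols, mem_filter, mem_univ, true_and, maxRows_recon hA hB]
  constructor
  · intro hj
    by_contra hjB
    have hj' : j ∈ Bᶜ := Finset.mem_compl.2 hjB
    by_cases hc : ∃ i' : ↥(Aᶜ), M' i' ⟨j, hj'⟩ = true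
    · obtain ⟨i', hv⟩ := hc
      have hni : (i' : α) ∉ A := Finset.mem_compl.1 i'.2
      have := (hj (i' : α)).1
      rw [recon_not_mem hni hj'] at this
      rw [show (⟨(i' : α), Finset.mem_compl.2 hni⟩ : ↥(Aᶜ)) = i' from Subtype.ext rfl] at this
      exact hni (this hv)
    · obtain ⟨i₀, hi₀⟩ := hA
      have := (hj i₀).2 hi₀
      rw [recon_mem hi₀] at this
      have hex : ∃ i' : ↥(Aᶜ), ∃ hjj : j ∈ Bᶜ, M' i' ⟨j, hjj⟩ = true := by
        simpa [hjB] using this.symm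
      obtain ⟨i', hjj, hv⟩ := hex
      exact hc ⟨i', hv⟩
  · intro hjB i
    constructor
    · intro ht
      by_contra hi
      rw [recon_not_mem_memB hi hjB] at ht
      exact Bool.noConfusion ht
    · intro hi
      exact recon_mem_memB hi hjB

theorem restrict_recon : restrictM (recon A B M') A B = M' := by
  funext i j
  have hni : (i : α) ∉ A := Finset.mem_compl.1 i.2
  show recon A B M' i j = M' i j
  rw [recon_not_mem hni j.2]

theorem recon_restrict {M : α → β → Bool} (h : LS M) (hne : ∃ i j, M i j = true) :
    recon (maxRows M) (Bcols M) (restrictM M (maxRows M) (Bcols M)) = M := by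
  funext i j
  by_cases hi : i ∈ maxRows M
  · rw [recon_mem hi, Bool.eq_iff_iff]
    simp only [Bool.or_eq_true, decide_eq_true_eq]
    rw [Iff.comm, max_row_entry hi j]
    constructor
    · rintro (hB | ⟨i', hi', hv⟩)
      · exact Or.inl hB
      · by_cases hjB : j ∈ Bcols M
        · exact Or.inl hjB
        · exact Or.inr ⟨⟨i', Finset.mem_compl.2 hi'⟩, Finset.mem_compl.2 hjB, hv⟩
    · rintro (hB | ⟨i', hj, hv⟩)
      · exact Or.inl hB
      · exact Or.inr ⟨(i' : α), Finset.mem_compl.1 i'.2, hv⟩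
  · by_cases hjB : j ∈ Bcols M
    · rw [recon_not_mem_memB hi hjB, not_max_zero_on_B hi hjB]
    · rw [recon_not_mem hi (Finset.mem_compl.2 hjB)]
      rfl

end Recon2


section Recon3
variable {α β : Type*} [Fintype α] [Fintype β] [DecidableEq α] [DecidableEq β]
variable {A : Finset α} {B : Finset β} {M' : ↥(Aᶜ) → ↥(Bᶜ) → Bool}

theorem card_row_class_mem (hB : B.Nonempty) {i : α} (hi : i ∈ A) :
    Nat.card {i' : α // recon A B M' i' = recon A B M' i} = A.card := by
  have : ∀ i' : α, (recon A B M' i' = recon A B M' i) ↔ i' ∈ A := by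
    intro i'
    constructor
    · intro h
      by_contra hi'
      exact recon_row_ne hi hi' hB h.symm
    · intro hi'
      exact recon_row_const hi' hi
  rw [Nat.card_congr (Equiv.subtypeEquivRight this)]
  exact Nat.card_eq_finsetCard A

theorem card_row_class_not_mem (hB : B.Nonempty) {i : α} (hi : i ∉ A) :
    Nat.card {i' : α // recon A B M' i' = recon A B M' i} =
      Nat.card {i'' : ↥(Aᶜ) // M' i'' = M' ⟨i, Finset.mem_compl.2 hi⟩} := by
  apply Nat.card_congr
  have key : ∀ i' : α, recon A B M' i' = recon A B M' i → i' ∉ A :=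
    fun i' h hxA => recon_row_ne hxA hi hB h
  exact {
    toFun := fun x => ⟨⟨x.1, Finset.mem_compl.2 (key x.1 x.2)⟩,
      (recon_row_eq_iff (key x.1 x.2) hi).1 x.2⟩
    invFun := fun y => ⟨(y.1 : α),
      (recon_row_eq_iff (Finset.mem_compl.1 y.1.2) hi).2 y.2⟩
    left_inv := fun x => Subtype.ext rfl
    right_inv := fun y => Subtype.ext (Subtype.ext rfl) }

theorem card_col_class_mem (hA : A.Nonempty) {j : β} (hj : j ∈ B) :
    Nat.card {j' : β // (fun i => recon A B M' i j') = fun i => recon A B M' i j} = B.card := by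
  have : ∀ j' : β, ((fun i => recon A B M' i j') = fun i => recon A B M' i j) ↔ j' ∈ B := by
    intro j'
    constructor
    · intro h
      by_contra hj'
      exact recon_col_ne hj hj' hA h.symm
    · intro hj'
      exact recon_col_const hj' hj
  rw [Nat.card_congr (Equiv.subtypeEquivRight this)]
  exact Nat.card_eq_finsetCard B

theorem card_col_class_not_mem (hA : A.Nonempty) {j : β} (hj : j ∉ B) :
    Nat.card {j' : β // (fun i => recon A B M' i j') = fun i => recon A B M' i j} =
      Nat.card {j'' : ↥(Bᶜ) //
        (fun i' => M' i' j'') = fun i' => M' i' ⟨j, Finset.mem_compl.2 hj⟩} := by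
  apply Nat.card_congr
  have key : ∀ j' : β, ((fun i => recon A B M' i j') = fun i => recon A B M' i j) → j' ∉ B :=
    fun j' h hxB => recon_col_ne hxB hj hA h
  exact {
    toFun := fun x => ⟨⟨x.1, Finset.mem_compl.2 (key x.1 x.2)⟩,
      (recon_col_eq_iff (key x.1 x.2) hj).1 x.2⟩
    invFun := fun y => ⟨(y.1 : β),
      (recon_col_eq_iff (Finset.mem_compl.1 y.1.2) hj).2 y.2⟩
    left_inv := fun x => Subtype.ext rfl
    right_inv := fun y => Subtype.ext (Subtype.ext rfl) }

theorem valid_recon_iff {S₁ S₂ : Set ℕ} (hA : A.Nonempty) (hB : B.Nonempty) :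
    Valid S₁ S₂ (recon A B M') ↔ (A.card ∈ S₁ ∧ B.card ∈ S₂ ∧ Valid S₁ S₂ M') := by
  constructor
  · rintro ⟨hls, hrow, hcol⟩
    obtain ⟨i₀, hi₀⟩ := id hA
    obtain ⟨j₀, hj₀⟩ := id hB
    refine ⟨?_, ?_, ?_, ?_, ?_⟩
    · have := hrow i₀; rwa [card_row_class_mem hB hi₀] at this
    · have := hcol j₀; rwa [card_col_class_mem hA hj₀] at this
    · rw [← restrict_recon (M' := M')]; exact ls_restrict hls
    · intro i''
      have := hrow (i'' : α)
      rwa [card_row_class_not_mem hB (Finset.mem_compl.1 i''.2)] at this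
    · intro j''
      have := hcol (j'' : β)
      rwa [card_col_class_not_mem hA (Finset.mem_compl.1 j''.2)] at this
  · rintro ⟨hcA, hcB, hls, hrow, hcol⟩
    refine ⟨ls_recon hls, ?_, ?_⟩
    · intro i
      by_cases hi : i ∈ A
      · rwa [card_row_class_mem hB hi]
      · rw [card_row_class_not_mem hB hi]; exact hrow _
    · intro j
      by_cases hj : j ∈ B
      · rwa [card_col_class_mem hA hj]
      · rw [card_col_class_not_mem hA hj]; exact hcol _

end Recon3


section Relabel
variable {α β α' β' : Type*}

theorem valid_comp_iff (e : α ≃ α') (f : β ≃ β') (M : α → β → Bool) (S₁ S₂ : Set ℕ) :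
    Valid S₁ S₂ (fun i' j' => M (e.symm i') (f.symm j')) ↔ Valid S₁ S₂ M := by
  set T : α' → β' → Bool := fun i' j' => M (e.symm i') (f.symm j') with hT
  have hrow : ∀ i₁' i₂' : α', T i₁' = T i₂' ↔ M (e.symm i₁') = M (e.symm i₂') := by
    intro i₁' i₂'
    constructor
    · intro h; funext j
      have := congrFun h (f j)
      simpa [hT] using this
    · intro h; funext j'
      simp only [hT]; rw [h]
  have hcol : ∀ j₁' j₂' : β',
      ((fun i' => T i' j₁') = fun i' => T i' j₂') ↔
        ((fun i => M i (f.symm j₁')) = fun i => M i (f.symm j₂')) := by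
    intro j₁' j₂'
    constructor
    · intro h; funext i
      have := congrFun h (e i)
      simpa [hT] using this
    · intro h; funext i'
      simp only [hT]; exact congrFun h _
  constructor
  · rintro ⟨hls, hr, hc⟩
    refine ⟨?_, ?_, ?_⟩
    · intro i₁ i₂ j₁ j₂ hi hj hpat
      refine hls (e i₁) (e i₂) (f j₁) (f j₂) (fun h => hi (e.injective h))
        (fun h => hj (f.injective h)) ?_
      simpa [hT] using hpat
    · intro i
      have key : ∀ i₀ : α, (M i₀ = M i) ↔ (T (e i₀) = T (e i)) := by
        intro i₀; rw [hrow]; simp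
      rw [Nat.card_congr (Equiv.subtypeEquiv (q := fun i'' : α' => T i'' = T (e i)) e key)]
      exact hr (e i)
    · intro j
      have key : ∀ j₀ : β, ((fun i => M i j₀) = fun i => M i j) ↔
          ((fun i' => T i' (f j₀)) = fun i' => T i' (f j)) := by
        intro j₀; rw [hcol]; simp
      rw [Nat.card_congr (Equiv.subtypeEquiv (q := fun j'' : β' => (fun i' => T i' j'') = fun i' => T i' (f j)) f key)]
      exact hc (f j)
  · rintro ⟨hls, hr, hc⟩
    refine ⟨?_, ?_, ?_⟩
    · intro i₁ i₂ j₁ j₂ hi hj hpat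
      exact hls (e.symm i₁) (e.symm i₂) (f.symm j₁) (f.symm j₂)
        (fun h => hi (e.symm.injective h)) (fun h => hj (f.symm.injective h)) hpat
    · intro i'
      have key : ∀ i₀ : α', (T i₀ = T i') ↔ (M (e.symm i₀) = M (e.symm i')) :=
        fun i₀ => hrow i₀ i'
      rw [Nat.card_congr (Equiv.subtypeEquiv (q := fun i₀ : α => M i₀ = M (e.symm i')) e.symm key)]
      exact hr (e.symm i')
    · intro j'
      have key : ∀ j₀ : β', ((fun i' => T i' j₀) = fun i' => T i' j') ↔
          ((fun i => M i (f.symm j₀)) = fun i => M i (f.symm j')) :=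
        fun j₀ => hcol j₀ j'
      rw [Nat.card_congr (Equiv.subtypeEquiv (q := fun j₀ : β => (fun i => M i j₀) = fun i => M i (f.symm j')) f.symm key)]
      exact hc (f.symm j')

theorem card_valid_congr (e : α ≃ α') (f : β ≃ β') (S₁ S₂ : Set ℕ) :
    Nat.card {M : α → β → Bool // Valid S₁ S₂ M} =
      Nat.card {M : α' → β' → Bool // Valid S₁ S₂ M} := by
  apply Nat.card_congr
  refine Equiv.subtypeEquiv (e.arrowCongr (f.arrowCongr (Equiv.refl Bool))) (fun M => ?_)
  exact (valid_comp_iff e f M S₁ S₂).symm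

end Relabel

theorem lonesumCountAll_eq (S₁ S₂ : Set ℕ) (n k : ℕ) :
    lonesumCountAll S₁ S₂ n k = Nat.card {M : Fin n → Fin k → Bool // Valid S₁ S₂ M} := rfl

theorem card_valid_eq_count {α β : Type*} [Fintype α] [Fintype β] (S₁ S₂ : Set ℕ) :
    Nat.card {M : α → β → Bool // Valid S₁ S₂ M} =
      lonesumCountAll S₁ S₂ (Fintype.card α) (Fintype.card β) := by
  rw [lonesumCountAll_eq]
  exact card_valid_congr (Fintype.equivFin α) (Fintype.equivFin β) S₁ S₂


section Counting

theorem card_split {γ : Type*} [Fintype γ] (p q : γ → Prop) :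
    Nat.card {x : γ // p x} = Nat.card {x // p x ∧ q x} + Nat.card {x // p x ∧ ¬ q x} := by
  simp only [Nat.card_eq_fintype_card, Fintype.card_subtype]
  rw [← Finset.filter_filter, ← Finset.filter_filter,
    Finset.card_filter_add_card_filter_not]

theorem card_zero_matrices (S₁ S₂ : Set ℕ) (n k : ℕ) :
    Nat.card {M : Fin n → Fin k → Bool // Valid S₁ S₂ M ∧ ¬∃ i j, M i j = true} =
      (if n = 0 ∨ n ∈ S₁ then 1 else 0) * (if k = 0 ∨ k ∈ S₂ then 1 else 0) := by
  set z : Fin n → Fin k → Bool := fun _ _ => false with hz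
  have hzero : ∀ M : Fin n → Fin k → Bool, (¬∃ i j, M i j = true) ↔ M = z := by
    intro M
    constructor
    · intro h; funext i j
      rcases hb : M i j with _ | _
      · rfl
      · exact absurd ⟨i, j, hb⟩ h
    · rintro rfl ⟨i, j, hij⟩; exact Bool.noConfusion hij
  have hcn : ∀ i : Fin n, Nat.card {i' : Fin n // z i' = z i} = n := by
    intro i
    rw [Nat.card_congr (Equiv.subtypeUnivEquiv fun _ => rfl), Nat.card_eq_fintype_card,
      Fintype.card_fin]
  have hck : ∀ j : Fin k, Nat.card {j' : Fin k // (fun i => z i j') = fun i => z i j} = k := by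
    intro j
    rw [Nat.card_congr (Equiv.subtypeUnivEquiv fun _ => rfl), Nat.card_eq_fintype_card,
      Fintype.card_fin]
  have hvz : Valid S₁ S₂ z ↔ ((n = 0 ∨ n ∈ S₁) ∧ (k = 0 ∨ k ∈ S₂)) := by
    constructor
    · rintro ⟨-, hr, hc⟩
      constructor
      · rcases Nat.eq_zero_or_pos n with h0 | hpos
        · exact Or.inl h0
        · right
          have := hr ⟨0, hpos⟩
          rwa [hcn ⟨0, hpos⟩] at this
      · rcases Nat.eq_zero_or_pos k with h0 | hpos
        · exact Or.inl h0
        · right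
          have := hc ⟨0, hpos⟩
          rwa [hck ⟨0, hpos⟩] at this
    · rintro ⟨hn, hk⟩
      refine ⟨?_, ?_, ?_⟩
      · rintro i₁ i₂ j₁ j₂ - - ⟨hf, -⟩
        exact Bool.noConfusion hf
      · intro i
        rcases hn with h0 | hS
        · exact absurd i.2 (by omega)
        · rwa [hcn i]
      · intro j
        rcases hk with h0 | hS
        · exact absurd j.2 (by omega)
        · rwa [hck j]
  have hre : Nat.card {M : Fin n → Fin k → Bool // Valid S₁ S₂ M ∧ ¬∃ i j, M i j = true} =
      Nat.card {M : Fin n → Fin k → Bool // Valid S₁ S₂ M ∧ M = z} := by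
    apply Nat.card_congr
    exact Equiv.subtypeEquivRight fun M => by rw [hzero M]
  rw [hre]
  by_cases hcond : (n = 0 ∨ n ∈ S₁) ∧ (k = 0 ∨ k ∈ S₂)
  · have : Unique {M : Fin n → Fin k → Bool // Valid S₁ S₂ M ∧ M = z} :=
      ⟨⟨⟨z, hvz.2 hcond, rfl⟩⟩, fun x => Subtype.ext x.2.2⟩
    rw [Nat.card_unique]
    rw [if_pos hcond.1, if_pos hcond.2]
  · have : IsEmpty {M : Fin n → Fin k → Bool // Valid S₁ S₂ M ∧ M = z} :=
      ⟨fun x => hcond (hvz.1 (x.2.2 ▸ x.2.1))⟩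
    rw [Nat.card_of_isEmpty]
    rcases not_and_or.1 hcond with h | h
    · rw [if_neg h, Nat.zero_mul]
    · rw [if_neg h, Nat.mul_zero]

theorem card_nonzero (S₁ S₂ : Set ℕ) (h₁ : 0 ∉ S₁) (h₂ : 0 ∉ S₂) (n k : ℕ) :
    Nat.card {M : Fin n → Fin k → Bool // Valid S₁ S₂ M ∧ ∃ i j, M i j = true} =
      ∑ p : Finset (Fin n) × Finset (Fin k),
        (if p.1.card ∈ S₁ ∧ p.2.card ∈ S₂ then
          lonesumCountAll S₁ S₂ (n - p.1.card) (k - p.2.card) else 0) := by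
  have key : Nat.card {M : Fin n → Fin k → Bool // Valid S₁ S₂ M ∧ ∃ i j, M i j = true} =
      Nat.card (Σ p : Finset (Fin n) × Finset (Fin k),
        {M' : ↥(p.1ᶜ) → ↥(p.2ᶜ) → Bool //
          Valid S₁ S₂ M' ∧ p.1.card ∈ S₁ ∧ p.2.card ∈ S₂}) := by
    apply Nat.card_congr
    symm
    have ne1 : ∀ {A : Finset (Fin n)}, A.card ∈ S₁ → A.Nonempty := by
      intro A hc
      rw [← Finset.card_pos]
      rcases Nat.eq_zero_or_pos A.card with h0 | h
      · exact absurd (h0 ▸ hc) h₁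
      · exact h
    have ne2 : ∀ {B : Finset (Fin k)}, B.card ∈ S₂ → B.Nonempty := by
      intro B hc
      rw [← Finset.card_pos]
      rcases Nat.eq_zero_or_pos B.card with h0 | h
      · exact absurd (h0 ▸ hc) h₂
      · exact h
    apply Equiv.ofBijective
      (fun x => ⟨recon x.1.1 x.1.2 x.2.1,
        (valid_recon_iff (ne1 x.2.2.2.1) (ne2 x.2.2.2.2)).2 ⟨x.2.2.2.1, x.2.2.2.2, x.2.2.1⟩,
        (ne1 x.2.2.2.1).choose, (ne2 x.2.2.2.2).choose,
        recon_mem_memB (ne1 x.2.2.2.1).choose_spec (ne2 x.2.2.2.2).choose_spec⟩)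
    constructor
    · rintro ⟨⟨A, B⟩, M', hM'⟩ ⟨⟨A', B'⟩, M'', hM''⟩ hfe
      have he : recon A B M' = recon A' B' M'' := congrArg Subtype.val hfe
      have h1 : maxRows (recon A B M') = A := maxRows_recon (ne1 hM'.2.1) (ne2 hM'.2.2)
      have h1' : maxRows (recon A' B' M'') = A' := maxRows_recon (ne1 hM''.2.1) (ne2 hM''.2.2)
      have hA : A = A' := by rw [← h1, he, h1']
      subst hA
      have h2 : Bcols (recon A B M') = B := Bcols_recon (ne1 hM'.2.1) (ne2 hM'.2.2)
      have h2' : Bcols (recon A B' M'') = B' := Bcols_recon (ne1 hM''.2.1) (ne2 hM''.2.2)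
      have hB : B = B' := by rw [← h2, he, h2']
      subst hB
      have h3 : restrictM (recon A B M') A B = M' := restrict_recon
      have h3' : restrictM (recon A B M'') A B = M'' := restrict_recon
      have hM : M' = M'' := by rw [← h3, he, h3']
      subst hM
      rfl
    · rintro ⟨M, hv, hne⟩
      have hA := maxRows_nonempty hv.1 hne
      have hB := Bcols_nonempty hv.1 hne
      have hrec := recon_restrict hv.1 hne
      have hvr : Valid S₁ S₂ (recon (maxRows M) (Bcols M)
          (restrictM M (maxRows M) (Bcols M))) := by rw [hrec]; exact hv
      obtain ⟨hcA, hcB, hv'⟩ := (valid_recon_iff hA hB).1 hvr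
      refine ⟨⟨(maxRows M, Bcols M), ⟨restrictM M (maxRows M) (Bcols M), hv', hcA, hcB⟩⟩, ?_⟩
      exact Subtype.ext hrec
  rw [key, Nat.card_eq_fintype_card, Fintype.card_sigma]
  apply Finset.sum_congr rfl
  intro p _
  by_cases hcond : p.1.card ∈ S₁ ∧ p.2.card ∈ S₂
  · rw [if_pos hcond, ← Nat.card_eq_fintype_card]
    rw [Nat.card_congr (Equiv.subtypeEquivRight (fun M' => and_iff_left hcond))]
    rw [card_valid_eq_count]
    congr 1 <;> simp [Finset.card_compl]
  · rw [if_neg hcond, ← Nat.card_eq_fintype_card]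
    have : IsEmpty {M' : ↥(p.1ᶜ) → ↥(p.2ᶜ) → Bool //
        Valid S₁ S₂ M' ∧ p.1.card ∈ S₁ ∧ p.2.card ∈ S₂} := ⟨fun x => hcond x.2.2⟩
    exact Nat.card_of_isEmpty

theorem sum_finset_card {m : ℕ} (g : ℕ → ℕ) :
    ∑ A : Finset (Fin m), g A.card = ∑ a ∈ range (m + 1), m.choose a * g a := by
  rw [← Finset.powerset_univ, Finset.sum_powerset]
  rw [card_univ, Fintype.card_fin]
  apply Finset.sum_congr rfl
  intro j _
  rw [Finset.sum_congr rfl (fun t ht => by rw [(Finset.mem_powersetCard.1 ht).2])]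
  rw [Finset.sum_const, Finset.card_powersetCard, card_univ, Fintype.card_fin, smul_eq_mul]

theorem count_recursion (S₁ S₂ : Set ℕ) (h₁ : 0 ∉ S₁) (h₂ : 0 ∉ S₂) (n k : ℕ) :
    lonesumCountAll S₁ S₂ n k =
      (if n = 0 ∨ n ∈ S₁ then 1 else 0) * (if k = 0 ∨ k ∈ S₂ then 1 else 0) +
      ∑ a ∈ range (n + 1), ∑ b ∈ range (k + 1),
        (if a ∈ S₁ ∧ b ∈ S₂ then
          n.choose a * (k.choose b * lonesumCountAll S₁ S₂ (n - a) (k - b)) else 0) := by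
  rw [lonesumCountAll_eq, card_split (Valid S₁ S₂) (fun M => ¬∃ i j, M i j = true)]
  have : ∀ M : Fin n → Fin k → Bool, (Valid S₁ S₂ M ∧ ¬¬∃ i j, M i j = true) ↔
      (Valid S₁ S₂ M ∧ ∃ i j, M i j = true) := by
    intro M; rw [not_not]
  rw [Nat.card_congr (Equiv.subtypeEquivRight this)]
  rw [card_zero_matrices, card_nonzero S₁ S₂ h₁ h₂]
  congr 1
  rw [Fintype.sum_prod_type]
  rw [show (∑ A : Finset (Fin n), ∑ B : Finset (Fin k),
      (if A.card ∈ S₁ ∧ B.card ∈ S₂ then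
        lonesumCountAll S₁ S₂ (n - A.card) (k - B.card) else 0)) =
      ∑ A : Finset (Fin n), ∑ b ∈ range (k + 1), k.choose b *
        (if A.card ∈ S₁ ∧ b ∈ S₂ then
          lonesumCountAll S₁ S₂ (n - A.card) (k - b) else 0) from
    Finset.sum_congr rfl fun A _ => sum_finset_card (m := k)
      (fun b => if A.card ∈ S₁ ∧ b ∈ S₂ then lonesumCountAll S₁ S₂ (n - A.card) (k - b) else 0)]
  rw [sum_finset_card (m := n) (fun a => ∑ b ∈ range (k + 1), k.choose b *
    (if a ∈ S₁ ∧ b ∈ S₂ then lonesumCountAll S₁ S₂ (n - a) (k - b) else 0))]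
  apply Finset.sum_congr rfl
  intro a _
  rw [Finset.mul_sum]
  apply Finset.sum_congr rfl
  intro b _
  split_ifs with h
  · ring
  · simp

end Counting


section Series

open MvPowerSeries

noncomputable def fs (a b : ℕ) : Fin 2 →₀ ℕ :=
  Finsupp.single 0 a + Finsupp.single 1 b

@[simp] theorem fs_apply0 (a b : ℕ) : fs a b 0 = a := by
  simp [fs, Finsupp.single_apply]

@[simp] theorem fs_apply1 (a b : ℕ) : fs a b 1 = b := by
  simp [fs, Finsupp.single_apply]

theorem fin2_ext (d : Fin 2 →₀ ℕ) : fs (d 0) (d 1) = d := by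
  ext x
  fin_cases x
  · exact fs_apply0 _ _
  · exact fs_apply1 _ _

theorem eq_single0_iff (e : Fin 2 →₀ ℕ) : e = Finsupp.single 0 (e 0) ↔ e 1 = 0 := by
  constructor
  · intro h
    conv_lhs => rw [h]
    simp [Finsupp.single_apply]
  · intro h
    rw [← fin2_ext e, h]
    simp [fs]

theorem eq_single1_iff (e : Fin 2 →₀ ℕ) : e = Finsupp.single 1 (e 1) ↔ e 0 = 0 := by
  constructor
  · intro h
    conv_lhs => rw [h]
    simp [Finsupp.single_apply]
  · intro h
    rw [← fin2_ext e, h]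
    simp [fs]

theorem fin2_eq_zero_iff (e : Fin 2 →₀ ℕ) : e = 0 ↔ e 0 = 0 ∧ e 1 = 0 := by
  constructor
  · intro h; rw [h]; simp
  · rintro ⟨h0, h1⟩
    rw [← fin2_ext e, h0, h1]
    simp [fs]

theorem coeff_mul_fin2 (F G : MvPowerSeries (Fin 2) ℚ) (d : Fin 2 →₀ ℕ) :
    MvPowerSeries.coeff d (F * G) =
      ∑ a ∈ range (d 0 + 1), ∑ b ∈ range (d 1 + 1),
        MvPowerSeries.coeff (fs a b) F *
          MvPowerSeries.coeff (fs (d 0 - a) (d 1 - b)) G := by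
  rw [MvPowerSeries.coeff_mul, ← Finset.sum_product']
  apply Finset.sum_nbij' (i := fun p => ((p.1 : Fin 2 →₀ ℕ) 0, (p.1 : Fin 2 →₀ ℕ) 1))
    (j := fun q => (fs q.1 q.2, fs (d 0 - q.1) (d 1 - q.2)))
  · intro p hp
    rw [Finset.HasAntidiagonal.mem_antidiagonal] at hp
    have h0 : p.1 0 + p.2 0 = d 0 := by rw [← hp]; rfl
    have h1 : p.1 1 + p.2 1 = d 1 := by rw [← hp]; rfl
    simp only [Finset.mem_product, Finset.mem_range]
    omega
  · intro q hq
    simp only [Finset.mem_product, Finset.mem_range] at hq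
    rw [Finset.HasAntidiagonal.mem_antidiagonal]
    ext x
    fin_cases x
    · show fs q.1 q.2 (0 : Fin 2) + fs (d 0 - q.1) (d 1 - q.2) (0 : Fin 2) = d (0 : Fin 2)
      simp only [fs_apply0]
      omega
    · show fs q.1 q.2 (1 : Fin 2) + fs (d 0 - q.1) (d 1 - q.2) (1 : Fin 2) = d (1 : Fin 2)
      simp only [fs_apply1]
      omega
  · intro p hp
    rw [Finset.HasAntidiagonal.mem_antidiagonal] at hp
    have h0 : p.1 0 + p.2 0 = d 0 := by rw [← hp]; rfl
    have h1 : p.1 1 + p.2 1 = d 1 := by rw [← hp]; rfl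
    have e1 : fs (p.1 0) (p.1 1) = p.1 := fin2_ext p.1
    have e2 : fs (d 0 - p.1 0) (d 1 - p.1 1) = p.2 := by
      rw [show d 0 - p.1 0 = p.2 0 by omega, show d 1 - p.1 1 = p.2 1 by omega]
      exact fin2_ext p.2
    rw [Prod.ext_iff]
    exact ⟨e1, e2⟩
  · intro q hq
    simp
  · intro p hp
    rw [Finset.HasAntidiagonal.mem_antidiagonal] at hp
    have h0 : p.1 0 + p.2 0 = d 0 := by rw [← hp]; rfl
    have h1 : p.1 1 + p.2 1 = d 1 := by rw [← hp]; rfl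
    rw [fin2_ext p.1, show d 0 - p.1 0 = p.2 0 by omega, show d 1 - p.1 1 = p.2 1 by omega,
      fin2_ext p.2]

theorem coeff_ESmv0 (S : Set ℕ) (e : Fin 2 →₀ ℕ) :
    MvPowerSeries.coeff e (ESmv S 0) =
      if e 1 = 0 ∧ e 0 ∈ S then ((e 0).factorial : ℚ)⁻¹ else 0 := by
  show (if e = Finsupp.single 0 (e 0) ∧ e 0 ∈ S then ((e 0).factorial : ℚ)⁻¹ else 0) = _
  exact if_congr (and_congr_left' (eq_single0_iff e)) rfl rfl

theorem coeff_ESmv1 (S : Set ℕ) (e : Fin 2 →₀ ℕ) :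
    MvPowerSeries.coeff e (ESmv S 1) =
      if e 0 = 0 ∧ e 1 ∈ S then ((e 1).factorial : ℚ)⁻¹ else 0 := by
  show (if e = Finsupp.single 1 (e 1) ∧ e 1 ∈ S then ((e 1).factorial : ℚ)⁻¹ else 0) = _
  exact if_congr (and_congr_left' (eq_single1_iff e)) rfl rfl

theorem coeff_E1E2 (S₁ S₂ : Set ℕ) (e : Fin 2 →₀ ℕ) :
    MvPowerSeries.coeff e (ESmv S₁ 0 * ESmv S₂ 1) =
      (if e 0 ∈ S₁ then ((e 0).factorial : ℚ)⁻¹ else 0) *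
        (if e 1 ∈ S₂ then ((e 1).factorial : ℚ)⁻¹ else 0) := by
  rw [coeff_mul_fin2]
  rw [Finset.sum_eq_single (e 0)]
  · rw [Finset.sum_eq_single 0]
    · rw [coeff_ESmv0, coeff_ESmv1]
      simp
    · intro b _ hb
      rw [coeff_ESmv0]
      simp [hb]
    · intro h
      exact absurd (Finset.mem_range.2 (Nat.succ_pos _)) h
  · intro a ha hane
    rw [Finset.mem_range] at ha
    apply Finset.sum_eq_zero
    intro b _
    rw [coeff_ESmv1]
    have : e 0 - a ≠ 0 := by omega
    simp [this]
  · intro h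
    exact absurd (Finset.self_mem_range_succ _) h

theorem coeff_lonesumDEGF (S₁ S₂ : Set ℕ) (d : Fin 2 →₀ ℕ) :
    MvPowerSeries.coeff d (lonesumDEGF S₁ S₂) =
      (lonesumCountAll S₁ S₂ (d 0) (d 1) : ℚ) /
        ((d 0).factorial * (d 1).factorial) := rfl

end Series


section Final

theorem qarith (S₁ S₂ : Set ℕ) (h₁ : 0 ∉ S₁) (h₂ : 0 ∉ S₂) (n k : ℕ) :
    (lonesumCountAll S₁ S₂ n k : ℚ) / (n.factorial * k.factorial) =
      (if n = 0 ∧ k = 0 then 1 else 0) +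
      (if k = 0 ∧ n ∈ S₁ then (n.factorial : ℚ)⁻¹ else 0) +
      (if n = 0 ∧ k ∈ S₂ then (k.factorial : ℚ)⁻¹ else 0) +
      (if n ∈ S₁ then (n.factorial : ℚ)⁻¹ else 0) *
        (if k ∈ S₂ then (k.factorial : ℚ)⁻¹ else 0) +
      ∑ a ∈ range (n + 1), ∑ b ∈ range (k + 1),
        (lonesumCountAll S₁ S₂ a b : ℚ) / (a.factorial * b.factorial) *
          ((if n - a ∈ S₁ then ((n - a).factorial : ℚ)⁻¹ else 0) *
           (if k - b ∈ S₂ then ((k - b).factorial : ℚ)⁻¹ else 0)) := by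
  have hfac : ∀ m : ℕ, (m.factorial : ℚ) ≠ 0 :=
    fun m => Nat.cast_ne_zero.2 (Nat.factorial_ne_zero m)
  have hq : (lonesumCountAll S₁ S₂ n k : ℚ) =
      (if n = 0 ∨ n ∈ S₁ then (1 : ℚ) else 0) * (if k = 0 ∨ k ∈ S₂ then 1 else 0) +
      ∑ a ∈ range (n + 1), ∑ b ∈ range (k + 1),
        (if a ∈ S₁ ∧ b ∈ S₂ then
          (n.choose a : ℚ) * ((k.choose b : ℚ) * (lonesumCountAll S₁ S₂ (n - a) (k - b) : ℚ))
        else 0) := by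
    exact_mod_cast congrArg (fun x : ℕ => (x : ℚ)) (count_recursion S₁ S₂ h₁ h₂ n k)
  rw [hq, add_div]
  have hZ : (if n = 0 ∨ n ∈ S₁ then (1 : ℚ) else 0) * (if k = 0 ∨ k ∈ S₂ then 1 else 0) /
      ((n.factorial : ℚ) * k.factorial) =
      (if n = 0 ∧ k = 0 then 1 else 0) +
      (if k = 0 ∧ n ∈ S₁ then (n.factorial : ℚ)⁻¹ else 0) +
      (if n = 0 ∧ k ∈ S₂ then (k.factorial : ℚ)⁻¹ else 0) +
      (if n ∈ S₁ then (n.factorial : ℚ)⁻¹ else 0) *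
        (if k ∈ S₂ then (k.factorial : ℚ)⁻¹ else 0) := by
    by_cases hn0 : n = 0
    · subst hn0
      by_cases hk0 : k = 0
      · subst hk0
        simp [h₁, h₂]
      · by_cases hkS : k ∈ S₂
        · simp [hk0, hkS, h₁]
        · simp [hk0, hkS, h₁]
    · by_cases hnS : n ∈ S₁
      · by_cases hk0 : k = 0
        · subst hk0
          simp [hn0, hnS, h₂]
        · by_cases hkS : k ∈ S₂
          · simp only [if_pos (Or.inr hnS), if_pos (Or.inr hkS), if_pos hnS, if_pos hkS,
              if_neg (fun h : (n = 0 ∧ k = 0) => hn0 h.1),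
              if_neg (fun h : (k = 0 ∧ n ∈ S₁) => hk0 h.1),
              if_neg (fun h : (n = 0 ∧ k ∈ S₂) => hn0 h.1)]
            field_simp
            simp
          · simp [hn0, hk0, hnS, hkS]
      · simp [hn0, hnS]
  rw [hZ]
  congr 1
  rw [Finset.sum_div]
  conv_rhs => rw [← Finset.sum_range_reflect]
  apply Finset.sum_congr rfl
  intro a ha
  rw [Finset.mem_range] at ha
  have han : a ≤ n := by omega
  have hrefl : n + 1 - 1 - a = n - a := by omega
  rw [hrefl]
  rw [Finset.sum_div]
  conv_rhs => rw [← Finset.sum_range_reflect]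
  apply Finset.sum_congr rfl
  intro b hb
  rw [Finset.mem_range] at hb
  have hbk : b ≤ k := by omega
  have hrefl2 : k + 1 - 1 - b = k - b := by omega
  rw [hrefl2]
  have hnn : n - (n - a) = a := by omega
  have hkk : k - (k - b) = b := by omega
  rw [hnn, hkk]
  by_cases haS : a ∈ S₁
  · by_cases hbS : b ∈ S₂
    · rw [if_pos ⟨haS, hbS⟩, if_pos haS, if_pos hbS]
      rw [Nat.cast_choose ℚ han, Nat.cast_choose ℚ hbk]
      have h1 := hfac a
      have h2 := hfac b
      have h3 := hfac (n - a)
      have h4 := hfac (k - b)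
      have h5 := hfac n
      have h6 := hfac k
      field_simp
    · rw [if_neg (fun h => hbS h.2), if_neg hbS]
      simp
  · rw [if_neg (fun h => haS h.1), if_neg haS]
    simp

theorem key_identity (S₁ S₂ : Set ℕ) (h₁ : 0 ∉ S₁) (h₂ : 0 ∉ S₂) :
    lonesumDEGF S₁ S₂ = (1 + ESmv S₁ 0) * (1 + ESmv S₂ 1) +
      lonesumDEGF S₁ S₂ * (ESmv S₁ 0 * ESmv S₂ 1) := by
  apply MvPowerSeries.ext
  intro d
  have hexp : (1 + ESmv S₁ 0) * (1 + ESmv S₂ 1) =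
      1 + ESmv S₁ 0 + ESmv S₂ 1 + ESmv S₁ 0 * ESmv S₂ 1 := by ring
  rw [map_add, hexp, map_add, map_add, map_add]
  rw [coeff_lonesumDEGF, MvPowerSeries.coeff_one, coeff_ESmv0, coeff_ESmv1, coeff_E1E2,
    coeff_mul_fin2 (lonesumDEGF S₁ S₂) _ d]
  have hbody : (∑ a ∈ range (d 0 + 1), ∑ b ∈ range (d 1 + 1),
      MvPowerSeries.coeff (fs a b) (lonesumDEGF S₁ S₂) *
        MvPowerSeries.coeff (fs (d 0 - a) (d 1 - b)) (ESmv S₁ 0 * ESmv S₂ 1)) =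
      ∑ a ∈ range (d 0 + 1), ∑ b ∈ range (d 1 + 1),
        (lonesumCountAll S₁ S₂ a b : ℚ) / (a.factorial * b.factorial) *
          ((if d 0 - a ∈ S₁ then ((d 0 - a).factorial : ℚ)⁻¹ else 0) *
           (if d 1 - b ∈ S₂ then ((d 1 - b).factorial : ℚ)⁻¹ else 0)) := by
    apply Finset.sum_congr rfl
    intro a _
    apply Finset.sum_congr rfl
    intro b _
    rw [coeff_lonesumDEGF, coeff_E1E2]
    simp only [fs_apply0, fs_apply1]
  rw [hbody, if_congr (fin2_eq_zero_iff d) rfl rfl]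
  exact qarith S₁ S₂ h₁ h₂ (d 0) (d 1)

end Final


/-- the double EGF of all `(S₁,S₂)`-restricted lonesum matrices is
`(1 + E_{S₁}(x))(1 + E_{S₂}(y)) / (1 - E_{S₁}(x) E_{S₂}(y))`. -/
theorem restricted_lonesum_degf_all (S₁ S₂ : Set ℕ) (h₁ : 0 ∉ S₁) (h₂ : 0 ∉ S₂) :
    lonesumDEGF S₁ S₂ * (1 - ESmv S₁ 0 * ESmv S₂ 1) = (1 + ESmv S₁ 0) * (1 + ESmv S₂ 1) := by
  have key := key_identity S₁ S₂ h₁ h₂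
  linear_combination key
end

section
/- The number of n x k lonesum 0-1 matrices equals B_n^{(-k)} = sum_{m=0}^{min(n,k)} m! {n+1 brace m+1} m! {k+1 brace m+1}, the poly-Bernoulli number with negative index, where {a brace b} are ordinary Stirling numbers of the second kind. -/
open scoped Classical

namespace PolyB

open Finset Function


/-- number of surjections `Fin n → Fin m` -/
def T : ℕ → ℕ → ℕ
  | 0, 0 => 1
  | 0, _ + 1 => 0
  | _ + 1, 0 => 0
  | n + 1, m + 1 => (m + 1) * (T n (m + 1) + T n m)

/-- number of maps `Fin n → Fin (m+1)` hitting every nonzero value -/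
def Cc : ℕ → ℕ → ℕ
  | 0, 0 => 1
  | 0, _ + 1 => 0
  | n + 1, m => (m + 1) * Cc n m + m * Cc n (m - 1)

lemma T_zero_right : ∀ n, T (n + 1) 0 = 0 := fun _ => rfl

lemma Cc_zero_left : ∀ m, Cc 0 m = if m = 0 then 1 else 0
  | 0 => rfl
  | _ + 1 => rfl

lemma Cc_succ (n m : ℕ) : Cc (n + 1) m = (m + 1) * Cc n m + m * Cc n (m - 1) := rfl

lemma T_succ_eq_Cc (n m : ℕ) : T (n + 1) (m + 1) = (m + 1) * Cc n m := by
  induction n generalizing m with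
  | zero =>
    show (m + 1) * (T 0 (m + 1) + T 0 m) = (m + 1) * Cc 0 m
    cases m <;> rfl
  | succ n ih =>
    show (m + 1) * (T (n + 1) (m + 1) + T (n + 1) m) = (m + 1) * Cc (n + 1) m
    cases m with
    | zero => rw [Cc_succ, ih, T_zero_right]; ring
    | succ m' =>
      rw [Cc_succ, ih, show m' + 1 - 1 = m' from rfl, ih]

lemma Cc_eq_zero_of_lt : ∀ n m, n < m → Cc n m = 0 := by
  intro n
  induction n with
  | zero => intro m hm; rw [Cc_zero_left, if_neg (by omega)]
  | succ n ih =>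
    intro m hm
    rw [Cc_succ, ih m (by omega)]
    rcases m with _ | m'
    · omega
    · rw [show m' + 1 - 1 = m' from rfl, ih m' (by omega)]; ring

lemma T_eq_zero_of_lt : ∀ n m, n < m → T n m = 0 := by
  intro n m h
  rcases m with _ | m'
  · omega
  · rcases n with _ | n'
    · rfl
    · rw [T_succ_eq_Cc, Cc_eq_zero_of_lt n' m' (by omega), mul_zero]



/-- The type of surjections `Fin n → Fin m`. -/
def SurjT (n m : ℕ) := {f : Fin n → Fin m // Surjective f}

instance (m : ℕ) : IsEmpty (SurjT 0 (m + 1)) :=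
  ⟨fun f => by obtain ⟨a, -⟩ := f.2 0; exact a.elim0⟩

instance (n : ℕ) : IsEmpty (SurjT (n + 1) 0) := ⟨fun f => (f.1 0).elim0⟩

instance : Unique (SurjT 0 0) where
  default := ⟨Fin.elim0, fun b => b.elim0⟩
  uniq f := Subtype.ext (funext fun x => x.elim0)

/-- recurrence bijection for surjections -/
def theta (n m : ℕ) : Fin (m + 1) × (SurjT n (m + 1) ⊕ SurjT n m) → SurjT (n + 1) (m + 1)
  | (v, .inl g) => ⟨Fin.snoc g.1 v, by
      intro w
      obtain ⟨i, hi⟩ := g.2 w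
      exact ⟨i.castSucc, by rw [Fin.snoc_castSucc]; exact hi⟩⟩
  | (v, .inr h) => ⟨Fin.snoc (fun i => v.succAbove (h.1 i)) v, by
      intro w
      rcases eq_or_ne w v with rfl | hw
      · exact ⟨Fin.last n, Fin.snoc_last _ _⟩
      · obtain ⟨u, hu⟩ := Fin.exists_succAbove_eq hw
        obtain ⟨i, hi⟩ := h.2 u
        exact ⟨i.castSucc, by rw [Fin.snoc_castSucc, hi, hu]⟩⟩

lemma theta_bijective (n m : ℕ) : Bijective (theta n m) := by
  constructor
  · rintro ⟨v, s⟩ ⟨v', s'⟩ hee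
    have he : (theta n m (v, s)).1 = (theta n m (v', s')).1 := by rw [hee]
    have hv : v = v' := by
      have h1 : (theta n m (v, s)).1 (Fin.last n) = v := by
        rcases s with g | h <;> simp [theta, Fin.snoc_last]
      have h2 : (theta n m (v', s')).1 (Fin.last n) = v' := by
        rcases s' with g | h <;> simp [theta, Fin.snoc_last]
      rw [← h1, ← h2, he]
    subst hv
    have hc : ∀ i : Fin n, (theta n m (v, s)).1 i.castSucc = (theta n m (v, s')).1 i.castSucc :=
      fun i => by rw [he]
    congr 1
    rcases s with g | h <;> rcases s' with g' | h'
    · have : g = g' := Subtype.ext (funext fun i => by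
        have := hc i; simpa [theta, Fin.snoc_castSucc] using this)
      rw [this]
    · exfalso
      obtain ⟨i, hi⟩ := g.2 v
      have := hc i
      simp only [theta, Fin.snoc_castSucc] at this
      rw [hi] at this
      exact (Fin.succAbove_ne v (h'.1 i)) this.symm
    · exfalso
      obtain ⟨i, hi⟩ := g'.2 v
      have := hc i
      simp only [theta, Fin.snoc_castSucc] at this
      rw [hi] at this
      exact (Fin.succAbove_ne v (h.1 i)) this
    · have : h = h' := Subtype.ext (funext fun i => by
        have := hc i
        simp only [theta, Fin.snoc_castSucc] at this
        exact Fin.succAbove_right_injective this)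
      rw [this]
  · rintro ⟨f, hf⟩
    by_cases hs : Surjective (fun i => f i.castSucc : Fin n → Fin (m + 1))
    · refine ⟨(f (Fin.last n), .inl ⟨_, hs⟩), ?_⟩
      apply Subtype.ext
      show Fin.snoc _ _ = f
      exact funext fun x => Fin.lastCases (Fin.snoc_last _ _) (fun i => Fin.snoc_castSucc _ _ i) x
    · -- restriction misses exactly v := f last
      set v := f (Fin.last n) with hv
      have hmiss : ∀ i : Fin n, f i.castSucc ≠ v := by
        intro i hiv
        apply hs
        intro w
        obtain ⟨x, hx⟩ := hf w
        rcases Fin.eq_castSucc_or_eq_last x with ⟨y, rfl⟩ | rfl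
        · exact ⟨y, hx⟩
        · exact ⟨i, by show f i.castSucc = w; rw [hiv, hv, hx]⟩
      -- define h i as the succAbove-preimage
      have hex : ∀ i : Fin n, ∃ u : Fin m, v.succAbove u = f i.castSucc := fun i =>
        Fin.exists_succAbove_eq (hmiss i)
      choose h hh using hex
      have hhs : Surjective h := by
        intro u
        obtain ⟨x, hx⟩ := hf (v.succAbove u)
        rcases Fin.eq_castSucc_or_eq_last x with ⟨y, rfl⟩ | rfl
        · exact ⟨y, Fin.succAbove_right_injective (by rw [hh y, hx])⟩
        · exact absurd hx.symm (Fin.succAbove_ne v u)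
      refine ⟨(v, .inr ⟨h, hhs⟩), ?_⟩
      apply Subtype.ext
      show Fin.snoc (fun i => v.succAbove (h i)) v = f
      refine funext fun x => Fin.lastCases (Fin.snoc_last _ _) (fun i => ?_) x
      rw [Fin.snoc_castSucc]
      exact hh i


instance (n m : ℕ) : Finite (SurjT n m) := Subtype.finite

lemma card_SurjT : ∀ n m, Nat.card (SurjT n m) = T n m := by
  intro n
  induction n with
  | zero =>
    rintro (_ | m)
    · exact Nat.card_unique
    · exact Nat.card_of_isEmpty
  | succ n ih =>
    rintro (_ | m)
    · exact Nat.card_of_isEmpty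
    · rw [← Nat.card_eq_of_bijective (theta n m) (theta_bijective n m), Nat.card_prod,
        Nat.card_sum, ih, ih, Nat.card_eq_fintype_card, Fintype.card_fin]
      rfl



/-- maps `Fin n → Fin (m+1)` hitting every nonzero value -/
def OrdT (n m : ℕ) := {r : Fin n → Fin (m + 1) // ∀ v : Fin (m + 1), v ≠ 0 → ∃ i, r i = v}

instance (n m : ℕ) : Finite (OrdT n m) := Subtype.finite

def ordEquiv (n m : ℕ) : SurjT (n + 1) (m + 1) ≃ Fin (m + 1) × OrdT n m where
  toFun f := (f.1 (Fin.last n), ⟨fun i => Equiv.swap (f.1 (Fin.last n)) 0 (f.1 i.castSucc), by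
    intro v' hv'
    obtain ⟨x, hx⟩ := f.2 (Equiv.swap (f.1 (Fin.last n)) 0 v')
    rcases Fin.eq_castSucc_or_eq_last x with ⟨y, rfl⟩ | rfl
    · refine ⟨y, ?_⟩
      show Equiv.swap (f.1 (Fin.last n)) 0 (f.1 y.castSucc) = v'
      rw [hx, Equiv.swap_apply_self]
    · exfalso
      have h2 := congrArg (Equiv.swap (f.1 (Fin.last n)) 0) hx
      rw [Equiv.swap_apply_left, Equiv.swap_apply_self] at h2
      exact hv' h2.symm⟩)
  invFun p := ⟨fun x => Equiv.swap p.1 0 ((Fin.snoc p.2.1 0 : Fin (n + 1) → Fin (m + 1)) x), by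
    intro w
    rcases eq_or_ne (Equiv.swap p.1 0 w) 0 with h0 | h0
    · refine ⟨Fin.last n, ?_⟩
      show Equiv.swap p.1 0 ((Fin.snoc p.2.1 0 : Fin (n + 1) → Fin (m + 1)) (Fin.last n)) = w
      have h1 := congrArg (Equiv.swap p.1 0) h0
      rw [Equiv.swap_apply_self] at h1
      rw [Fin.snoc_last, ← h1]
    · obtain ⟨i, hi⟩ := p.2.2 _ h0
      refine ⟨i.castSucc, ?_⟩
      show Equiv.swap p.1 0 ((Fin.snoc p.2.1 0 : Fin (n + 1) → Fin (m + 1)) i.castSucc) = w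
      rw [Fin.snoc_castSucc, hi, Equiv.swap_apply_self]⟩
  left_inv f := by
    apply Subtype.ext
    funext x
    show Equiv.swap (f.1 (Fin.last n)) 0
      ((Fin.snoc (fun i => Equiv.swap (f.1 (Fin.last n)) 0 (f.1 i.castSucc)) 0 :
        Fin (n + 1) → Fin (m + 1)) x) = f.1 x
    refine Fin.lastCases ?_ (fun i => ?_) x
    · rw [Fin.snoc_last, Equiv.swap_apply_right]
    · rw [Fin.snoc_castSucc, Equiv.swap_apply_self]
  right_inv p := by
    obtain ⟨v, r⟩ := p
    have hlast : Equiv.swap v 0 ((Fin.snoc r.1 0 : Fin (n + 1) → Fin (m + 1)) (Fin.last n)) = v := by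
      rw [Fin.snoc_last, Equiv.swap_apply_right]
    refine Prod.ext hlast ?_
    apply Subtype.ext
    funext i
    show Equiv.swap (Equiv.swap v 0 ((Fin.snoc r.1 0 : Fin (n + 1) → Fin (m + 1)) (Fin.last n))) 0
      (Equiv.swap v 0 ((Fin.snoc r.1 0 : Fin (n + 1) → Fin (m + 1)) i.castSucc)) = r.1 i
    rw [hlast, Fin.snoc_castSucc, Equiv.swap_apply_self]


lemma card_OrdT (n m : ℕ) : Nat.card (OrdT n m) = Cc n m := by
  have h1 : Nat.card (SurjT (n + 1) (m + 1)) = (m + 1) * Nat.card (OrdT n m) := by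
    rw [Nat.card_congr (ordEquiv n m), Nat.card_prod, Nat.card_eq_fintype_card,
      Fintype.card_fin]
  rw [card_SurjT, T_succ_eq_Cc] at h1
  exact Nat.eq_of_mul_eq_mul_left (Nat.succ_pos m) h1.symm



/-- partitions of `Fin n` into `m` parts -/
def PartT (n m : ℕ) := {P : Finpartition (Finset.univ : Finset (Fin n)) // P.parts.card = m}
noncomputable instance (n m : ℕ) : Fintype (PartT n m) := Subtype.fintype _

-- generic Finpartition helpers
lemma mem_part_iff_part_eq {α : Type*} [DecidableEq α] [Fintype α]
    (P : Finpartition (Finset.univ : Finset α)) (x y : α) :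
    y ∈ P.part x ↔ P.part y = P.part x := by
  constructor
  · intro h
    exact P.eq_of_mem_parts (P.part_mem.2 (mem_univ y)) (P.part_mem.2 (mem_univ x))
      (P.mem_part (mem_univ y)) h
  · intro h
    rw [← h]
    exact P.mem_part (mem_univ y)

lemma parts_eq_image_part {α : Type*} [DecidableEq α] [Fintype α]
    (P : Finpartition (Finset.univ : Finset α)) :
    P.parts = Finset.univ.image P.part := by
  ext b
  simp only [mem_image, mem_univ, true_and]
  constructor
  · intro hb
    obtain ⟨x, hx⟩ := P.nonempty_of_mem_parts hb
    exact ⟨x, P.eq_of_mem_parts (P.part_mem.2 (mem_univ x)) hb (P.mem_part (mem_univ x)) hx⟩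
  · rintro ⟨x, rfl⟩
    exact P.part_mem.2 (mem_univ x)

section ker
variable {n m : ℕ} (f : Fin n → Fin m)

lemma mem_part_ker (x y : Fin n) :
    y ∈ (Finpartition.ofSetoid (Setoid.ker f)).part x ↔ f x = f y :=
  Finpartition.mem_part_ofSetoid_iff_rel

lemma part_ker_eq_iff (x y : Fin n) :
    (Finpartition.ofSetoid (Setoid.ker f)).part y = (Finpartition.ofSetoid (Setoid.ker f)).part x
      ↔ f x = f y := by
  rw [← mem_part_iff_part_eq, mem_part_ker]

lemma part_ker_eq_filter (x : Fin n) :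
    (Finpartition.ofSetoid (Setoid.ker f)).part x = Finset.univ.filter (fun y => f x = f y) := by
  ext y
  rw [mem_part_ker, mem_filter]
  simp

lemma constant_on_parts {b : Finset (Fin n)}
    (hb : b ∈ (Finpartition.ofSetoid (Setoid.ker f)).parts) {x y : Fin n}
    (hx : x ∈ b) (hy : y ∈ b) : f x = f y := by
  have hbx : b = (Finpartition.ofSetoid (Setoid.ker f)).part x :=
    Finpartition.eq_of_mem_parts _ hb ((Finpartition.ofSetoid (Setoid.ker f)).part_mem.2 (mem_univ x))
      hx ((Finpartition.ofSetoid (Setoid.ker f)).mem_part (mem_univ x))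
  rw [hbx] at hy
  exact (mem_part_ker f x y).1 hy

lemma card_parts_ker (hf : Surjective f) :
    (Finpartition.ofSetoid (Setoid.ker f)).parts.card = m := by
  set P := Finpartition.ofSetoid (Setoid.ker f) with hP
  have h1 : P.parts = Finset.univ.image (fun v => Finset.univ.filter (fun y => f y = v)) := by
    rw [parts_eq_image_part]
    ext b
    simp only [mem_image, mem_univ, true_and]
    constructor
    · rintro ⟨x, rfl⟩
      exact ⟨f x, by rw [part_ker_eq_filter]; apply filter_congr; intro y _; simp [eq_comm]⟩
    · rintro ⟨v, rfl⟩
      obtain ⟨x, rfl⟩ := hf v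
      exact ⟨x, by rw [part_ker_eq_filter]; apply filter_congr; intro y _; simp [eq_comm]⟩
  rw [h1, card_image_of_injective _ ?_, card_univ, Fintype.card_fin]
  intro v v' hvv'
  obtain ⟨x, hx⟩ := hf v
  have hvv2 : Finset.univ.filter (fun y => f y = v) = Finset.univ.filter (fun y => f y = v') := hvv'
  have : x ∈ Finset.univ.filter (fun y => f y = v') := by
    rw [← hvv2]; simp [hx]
  simpa [hx] using (mem_filter.1 this).2
end ker

/-- the forgetful map from surjections to partitions -/
noncomputable def toPart (n m : ℕ) : SurjT n m → PartT n m := fun f =>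
  ⟨Finpartition.ofSetoid (Setoid.ker f.1), card_parts_ker f.1 f.2⟩

/-- build a surjection from a partition and a labeling of its parts -/
noncomputable def label (n m : ℕ) (P : PartT n m) (e : {b // b ∈ P.1.parts} ≃ Fin m) :
    SurjT n m := by
  refine ⟨fun x => e ⟨P.1.part x, P.1.part_mem.2 (mem_univ x)⟩, ?_⟩
  intro v
  obtain ⟨x, hx⟩ := P.1.nonempty_of_mem_parts (e.symm v).2
  refine ⟨x, ?_⟩
  have h1 : P.1.part x = (e.symm v).1 :=
    P.1.eq_of_mem_parts (P.1.part_mem.2 (mem_univ x)) (e.symm v).2 (P.1.mem_part (mem_univ x)) hx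
  have h2 : (⟨P.1.part x, P.1.part_mem.2 (mem_univ x)⟩ : {b // b ∈ P.1.parts}) = e.symm v :=
    Subtype.ext h1
  show e ⟨P.1.part x, _⟩ = v
  rw [h2, Equiv.apply_symm_apply]

lemma part_label (n m : ℕ) (P : PartT n m) (e : {b // b ∈ P.1.parts} ≃ Fin m) (x : Fin n) :
    (Finpartition.ofSetoid (Setoid.ker (label n m P e).1)).part x = P.1.part x := by
  ext y
  rw [mem_part_ker]
  show (e ⟨P.1.part x, _⟩ = e ⟨P.1.part y, _⟩) ↔ _
  rw [show (e ⟨P.1.part x, _⟩ = e ⟨P.1.part y, _⟩) ↔ P.1.part x = P.1.part y from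
    ⟨fun h => Subtype.ext_iff.1 (e.injective h), fun h => congrArg e (Subtype.ext h)⟩]
  rw [eq_comm, ← mem_part_iff_part_eq]

lemma toPart_label (n m : ℕ) (P : PartT n m) (e : {b // b ∈ P.1.parts} ≃ Fin m) :
    toPart n m (label n m P e) = P := by
  apply Subtype.ext
  apply Finpartition.ext
  rw [parts_eq_image_part, parts_eq_image_part (P := P.1)]
  exact image_congr fun x _ => part_label n m P e x

/-- the fiber of `toPart` over `P` is equivalent to labelings of parts -/
noncomputable def fiberEquiv (n m : ℕ) (P : PartT n m) :
    ({b // b ∈ P.1.parts} ≃ Fin m) ≃ {f : SurjT n m // toPart n m f = P} := by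
  refine Equiv.ofBijective (fun e => ⟨label n m P e, toPart_label n m P e⟩) ⟨?_, ?_⟩
  · intro e e' h
    have h2 : (label n m P e).1 = (label n m P e').1 :=
      congrArg (fun q : {f : SurjT n m // toPart n m f = P} => q.1.1) h
    refine Equiv.ext ?_
    rintro ⟨b, hb⟩
    obtain ⟨x, hx⟩ := P.1.nonempty_of_mem_parts hb
    have hbx : b = P.1.part x :=
      P.1.eq_of_mem_parts hb (P.1.part_mem.2 (mem_univ x)) hx (P.1.mem_part (mem_univ x))
    have he : ∀ (ee : {b // b ∈ P.1.parts} ≃ Fin m),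
        ee ⟨b, hb⟩ = (label n m P ee).1 x := fun ee => by
      show _ = ee ⟨P.1.part x, _⟩
      exact congrArg ee (Subtype.ext hbx)
    rw [he e, he e', h2]
  · rintro ⟨f, rfl⟩
    -- P is toPart f; its parts are those of the kernel partition
    set Q := Finpartition.ofSetoid (Setoid.ker f.1) with hQ
    have hQparts : (toPart n m f).1 = Q := rfl
    -- labeling map
    have hne : ∀ b : {b // b ∈ (toPart n m f).1.parts}, b.1.Nonempty :=
      fun b => Q.nonempty_of_mem_parts b.2
    set e0 : {b // b ∈ (toPart n m f).1.parts} → Fin m := fun b => f.1 (hne b).choose with he0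
    have hwit : ∀ b, (hne b).choose ∈ b.1 := fun b => (hne b).choose_spec
    have hconst : ∀ (b : {b // b ∈ (toPart n m f).1.parts}) (x : Fin n), x ∈ b.1 →
        f.1 x = e0 b := by
      intro b x hx
      exact constant_on_parts f.1 b.2 hx (hwit b)
    have hbij : Bijective e0 := by
      constructor
      · rintro ⟨b, hb⟩ ⟨b', hb'⟩ hbb
        apply Subtype.ext
        show b = b'
        have h1 : b = Q.part (hne ⟨b, hb⟩).choose :=
          Q.eq_of_mem_parts hb (Q.part_mem.2 (mem_univ _)) (hwit ⟨b, hb⟩) (Q.mem_part (mem_univ _))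
        have h2 : b' = Q.part (hne ⟨b', hb'⟩).choose :=
          Q.eq_of_mem_parts hb' (Q.part_mem.2 (mem_univ _)) (hwit ⟨b', hb'⟩) (Q.mem_part (mem_univ _))
        rw [h1, h2]
        rw [part_ker_eq_iff]
        exact hbb.symm
      · intro v
        obtain ⟨x, hx⟩ := f.2 v
        refine ⟨⟨Q.part x, Q.part_mem.2 (mem_univ x)⟩, ?_⟩
        rw [← hx]
        exact (hconst ⟨Q.part x, Q.part_mem.2 (mem_univ x)⟩ x (Q.mem_part (mem_univ x))).symm
    refine ⟨Equiv.ofBijective e0 hbij, ?_⟩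
    apply Subtype.ext
    apply Subtype.ext
    funext x
    show e0 ⟨(toPart n m f).1.part x, _⟩ = f.1 x
    exact (hconst ⟨(toPart n m f).1.part x, (toPart n m f).1.part_mem.2 (mem_univ x)⟩ x
      (Q.mem_part (mem_univ x))).symm


noncomputable instance (n m : ℕ) (P : PartT n m) :
    Fintype {f : SurjT n m // toPart n m f = P} := Fintype.ofFinite _

noncomputable instance (n m : ℕ) : Fintype (SurjT n m) := Fintype.ofFinite _

lemma card_SurjT_eq_part (n m : ℕ) :
    Nat.card (SurjT n m) = Nat.card (PartT n m) * m.factorial := by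
  rw [Nat.card_congr (Equiv.sigmaFiberEquiv (toPart n m)).symm, Nat.card_eq_fintype_card,
    Fintype.card_sigma]
  have hfib : ∀ P : PartT n m, Fintype.card {f : SurjT n m // toPart n m f = P}
      = m.factorial := by
    intro P
    rw [← Nat.card_eq_fintype_card, ← Nat.card_congr (fiberEquiv n m P),
      Nat.card_eq_fintype_card, Fintype.card_equiv (Fintype.equivFinOfCardEq (by
        rw [Fintype.card_coe, P.2]))]
    rw [Fintype.card_coe, P.2]
  rw [Finset.sum_congr rfl fun P _ => hfib P, Finset.sum_const, card_univ,
    Nat.card_eq_fintype_card, smul_eq_mul]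

lemma sStirling_pos_eq (n m : ℕ) :
    sStirling {j | 0 < j} n m = Nat.card (PartT n m) := by
  apply Nat.card_congr
  apply Equiv.subtypeEquivRight
  intro P
  constructor
  · exact And.left
  · intro h
    exact ⟨h, fun b hb => Finset.card_pos.2 (P.nonempty_of_mem_parts hb)⟩

lemma factorial_mul_sStirling (n m : ℕ) :
    m.factorial * sStirling {j | 0 < j} (n + 1) (m + 1) = Cc n m := by
  have h1 : Nat.card (PartT (n + 1) (m + 1)) * (m + 1).factorial = T (n + 1) (m + 1) := by
    rw [← card_SurjT_eq_part, card_SurjT]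
  rw [← sStirling_pos_eq] at h1
  rw [T_succ_eq_Cc, Nat.factorial_succ] at h1
  apply Nat.eq_of_mul_eq_mul_left (Nat.succ_pos m)
  calc (m + 1) * (m.factorial * sStirling {j | 0 < j} (n + 1) (m + 1))
      = sStirling {j | 0 < j} (n + 1) (m + 1) * ((m + 1) * m.factorial) := by ring
    _ = (m + 1) * Cc n m := h1

lemma factorial_mul_sStirling' (n m : ℕ) :
    sStirling {j | 0 < j} n m * m.factorial = T n m := by
  rw [sStirling_pos_eq, ← card_SurjT_eq_part, card_SurjT]

-- ## Lonesum matrices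


variable {n k : ℕ}

/-- support of row `i` -/
def supp (M : Fin n → Fin k → Bool) (i : Fin n) : Finset (Fin k) :=
  univ.filter (fun j => M i j = true)

/-- the family of distinct nonempty row supports -/
def Sfam (M : Fin n → Fin k → Bool) : Finset (Finset (Fin k)) :=
  (univ.image (supp M)).erase ∅

def rank (M : Fin n → Fin k → Bool) (S : Finset (Fin k)) : ℕ :=
  ((Sfam M).filter (fun S' => S ⊆ S')).card

def cdeg (M : Fin n → Fin k → Bool) (j : Fin k) : ℕ :=
  ((Sfam M).filter (fun S' => j ∈ S')).card

lemma mem_supp_iff (M : Fin n → Fin k → Bool) (i : Fin n) (j : Fin k) :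
    j ∈ supp M i ↔ M i j = true := by simp [supp]

lemma mem_Sfam_iff (M : Fin n → Fin k → Bool) (S : Finset (Fin k)) :
    S ∈ Sfam M ↔ S ≠ ∅ ∧ ∃ i, supp M i = S := by
  simp [Sfam, mem_erase, eq_comm]

lemma supp_chain {M : Fin n → Fin k → Bool} (hM : IsLonesum M) (i i' : Fin n) :
    supp M i ⊆ supp M i' ∨ supp M i' ⊆ supp M i := by
  by_contra h
  push_neg at h
  obtain ⟨h1, h2⟩ := h
  obtain ⟨j₁, hj₁, hj₁'⟩ := Finset.not_subset.1 h1
  obtain ⟨j₂, hj₂, hj₂'⟩ := Finset.not_subset.1 h2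
  rw [mem_supp_iff] at hj₁ hj₂
  rw [mem_supp_iff] at hj₁' hj₂'
  have hii : i ≠ i' := by rintro rfl; exact hj₁' hj₁
  have hjj : j₁ ≠ j₂ := by rintro rfl; exact hj₂' hj₁
  exact hM i i' j₁ j₂ hii hjj
    ⟨hj₁, hj₂, Bool.not_eq_true _ ▸ hj₂', Bool.not_eq_true _ ▸ hj₁'⟩

lemma Sfam_chain {M : Fin n → Fin k → Bool} (hM : IsLonesum M) {S S' : Finset (Fin k)}
    (hS : S ∈ Sfam M) (hS' : S' ∈ Sfam M) : S ⊆ S' ∨ S' ⊆ S := by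
  obtain ⟨-, i, rfl⟩ := (mem_Sfam_iff M S).1 hS
  obtain ⟨-, i', rfl⟩ := (mem_Sfam_iff M S').1 hS'
  exact supp_chain hM i i'

lemma rank_lt_of_ssubset {M : Fin n → Fin k → Bool} {S S' : Finset (Fin k)}
    (hS : S ∈ Sfam M) (hss : S ⊂ S') : rank M S' < rank M S := by
  apply Finset.card_lt_card
  constructor
  · intro T hT
    rw [mem_filter] at hT ⊢
    exact ⟨hT.1, hss.1.trans hT.2⟩
  · intro hsub
    have hSmem : S ∈ (Sfam M).filter (fun S'' => S ⊆ S'') := by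
      rw [mem_filter]; exact ⟨hS, subset_rfl⟩
    have := hsub hSmem
    rw [mem_filter] at this
    exact hss.2 this.2

lemma subset_cases {S S' : Finset (Fin k)} (h : S ⊆ S') : S ⊂ S' ∨ S = S' := by
  rcases eq_or_ne S S' with rfl | hne
  · exact Or.inr rfl
  · exact Or.inl (Finset.ssubset_iff_subset_ne.2 ⟨h, hne⟩)

lemma rank_injOn {M : Fin n → Fin k → Bool} (hM : IsLonesum M) {S S' : Finset (Fin k)}
    (hS : S ∈ Sfam M) (hS' : S' ∈ Sfam M) (h : rank M S = rank M S') : S = S' := by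
  rcases Sfam_chain hM hS hS' with hss | hss
  · rcases subset_cases hss with hlt | heq
    · exact absurd h (Nat.ne_of_gt (rank_lt_of_ssubset hS hlt))
    · exact heq
  · rcases subset_cases hss with hlt | heq
    · exact absurd h (Nat.ne_of_lt (rank_lt_of_ssubset hS' hlt))
    · exact heq.symm

lemma one_le_rank {M : Fin n → Fin k → Bool} {S : Finset (Fin k)} (hS : S ∈ Sfam M) :
    1 ≤ rank M S :=
  Finset.card_pos.2 ⟨S, by rw [mem_filter]; exact ⟨hS, subset_rfl⟩⟩

lemma rank_le {M : Fin n → Fin k → Bool} (S : Finset (Fin k)) :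
    rank M S ≤ (Sfam M).card := Finset.card_le_card (filter_subset _ _)

lemma cdeg_le (M : Fin n → Fin k → Bool) (j : Fin k) :
    cdeg M j ≤ (Sfam M).card := Finset.card_le_card (filter_subset _ _)

lemma rank_antitone {M : Fin n → Fin k → Bool} {S S' : Finset (Fin k)} (h : S ⊆ S') :
    rank M S' ≤ rank M S := by
  apply Finset.card_le_card
  intro T hT
  rw [mem_filter] at hT ⊢
  exact ⟨hT.1, h.trans hT.2⟩

lemma image_rank {M : Fin n → Fin k → Bool} (hM : IsLonesum M) :
    (Sfam M).image (rank M) = Icc 1 (Sfam M).card := by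
  apply Finset.eq_of_subset_of_card_le
  · intro v hv
    obtain ⟨S, hS, rfl⟩ := mem_image.1 hv
    exact mem_Icc.2 ⟨one_le_rank hS, rank_le S⟩
  · rw [Nat.card_Icc, Finset.card_image_of_injOn (fun S hS S' hS' => rank_injOn hM hS hS')]
    omega

lemma mem_iff_rank_le_cdeg {M : Fin n → Fin k → Bool} (hM : IsLonesum M)
    {S : Finset (Fin k)} (hS : S ∈ Sfam M) (j : Fin k) :
    j ∈ S ↔ rank M S ≤ cdeg M j := by
  constructor
  · intro hj
    apply Finset.card_le_card
    intro T hT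
    rw [mem_filter] at hT ⊢
    exact ⟨hT.1, hT.2 hj⟩
  · intro hle
    by_contra hj
    have : cdeg M j < rank M S := by
      apply Finset.card_lt_card
      constructor
      · intro T hT
        rw [mem_filter] at hT ⊢
        refine ⟨hT.1, ?_⟩
        rcases Sfam_chain hM hS hT.1 with hss | hss
        · exact hss
        · exact absurd (hss hT.2) hj
      · intro hsub
        have hSmem : S ∈ (Sfam M).filter (fun S'' => S ⊆ S'') := by
          rw [mem_filter]; exact ⟨hS, subset_rfl⟩
        have := hsub hSmem
        rw [mem_filter] at this
        exact hj this.2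
    omega

lemma exists_cdeg_eq {M : Fin n → Fin k → Bool} (hM : IsLonesum M) (v : ℕ)
    (hv1 : 1 ≤ v) (hv2 : v ≤ (Sfam M).card) : ∃ j, cdeg M j = v := by
  have hS : ∃ S ∈ Sfam M, rank M S = v := by
    have : v ∈ (Sfam M).image (rank M) := by
      rw [image_rank hM]; exact mem_Icc.2 ⟨hv1, hv2⟩
    simpa using this
  obtain ⟨S, hS, hrS⟩ := hS
  rcases eq_or_lt_of_le hv2 with heq | hlt
  · -- v = card: S is the minimum; all T ⊇ S
    have hall : ∀ T ∈ Sfam M, S ⊆ T := by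
      have hfull : (Sfam M).filter (fun S' => S ⊆ S') = Sfam M := by
        apply Finset.eq_of_subset_of_card_le (filter_subset _ _)
        rw [show ((Sfam M).filter (fun S' => S ⊆ S')).card = rank M S from rfl, hrS, ← heq]
      intro T hT
      rw [← hfull] at hT
      exact (mem_filter.1 hT).2
    obtain ⟨hne, -⟩ := (mem_Sfam_iff M S).1 hS
    obtain ⟨j, hj⟩ := Finset.nonempty_iff_ne_empty.2 hne
    refine ⟨j, ?_⟩
    have : (Sfam M).filter (fun S' => j ∈ S') = Sfam M := by
      apply Finset.eq_of_subset_of_card_le (filter_subset _ _)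
      apply Finset.card_le_card
      intro T hT
      rw [mem_filter]
      exact ⟨hT, hall T hT (by exact hj)⟩
    rw [cdeg, this, ← heq]
  · -- v < card: there is S'' of rank v+1, S'' ⊂ S
    have hS'' : ∃ S'' ∈ Sfam M, rank M S'' = v + 1 := by
      have : v + 1 ∈ (Sfam M).image (rank M) := by
        rw [image_rank hM]; exact mem_Icc.2 ⟨by omega, by omega⟩
      simpa using this
    obtain ⟨S'', hS'', hrS''⟩ := hS''
    have hss : S'' ⊂ S := by
      have hne : S'' ≠ S := fun h => by rw [h, hrS] at hrS''; omega
      rcases Sfam_chain hM hS hS'' with h1 | h1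
      · exfalso
        rcases subset_cases h1 with h2 | h2
        · have := rank_lt_of_ssubset hS h2; omega
        · exact hne h2.symm
      · exact Finset.ssubset_iff_subset_ne.2 ⟨h1, hne⟩
    obtain ⟨j, hjS, hjS''⟩ := Finset.exists_of_ssubset hss
    refine ⟨j, ?_⟩
    have hset : (Sfam M).filter (fun S' => j ∈ S') = (Sfam M).filter (fun S' => S ⊆ S') := by
      ext T
      rw [mem_filter, mem_filter]
      constructor
      · rintro ⟨hT, hjT⟩
        refine ⟨hT, ?_⟩
        rcases Sfam_chain hM hS hT with h1 | h1
        · exact h1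
        · -- T ⊆ S; then S'' ⊂ T, so rank T = v and T = S
          have hT2 : ¬(T ⊆ S'') := fun hc => hjS'' (hc hjT)
          have hT3 : S'' ⊆ T := by
            rcases Sfam_chain hM hT hS'' with h2 | h2
            · exact absurd h2 hT2
            · exact h2
          have hT4 : S'' ⊂ T := Finset.ssubset_iff_subset_ne.2 ⟨hT3, fun h => hT2 (h ▸ subset_rfl)⟩
          have h5 := rank_lt_of_ssubset hS'' hT4
          have h6 := rank_antitone (M := M) h1
          have h7 : rank M T = v := by omega
          rw [rank_injOn hM hT hS (by rw [h7, hrS])]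
      · rintro ⟨hT, hST⟩
        exact ⟨hT, hST hjS⟩
    rw [cdeg, hset, show ((Sfam M).filter (fun S' => S ⊆ S')).card = rank M S from rfl, hrS]

lemma Sfam_card_le_left (M : Fin n → Fin k → Bool) : (Sfam M).card ≤ n :=
  le_trans (Finset.card_erase_le.trans Finset.card_image_le) (by simp)

lemma Sfam_card_le_right {M : Fin n → Fin k → Bool} (hM : IsLonesum M) :
    (Sfam M).card ≤ k := by
  have hinj : ∀ S ∈ Sfam M, ∀ S' ∈ Sfam M, S.card = S'.card → S = S' := by
    intro S hS S' hS' hc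
    rcases Sfam_chain hM hS hS' with h1 | h1
    · exact Finset.eq_of_subset_of_card_le h1 (le_of_eq hc.symm)
    · exact (Finset.eq_of_subset_of_card_le h1 (le_of_eq hc)).symm
  calc (Sfam M).card = ((Sfam M).image Finset.card).card :=
        (Finset.card_image_of_injOn hinj).symm
    _ ≤ (Icc 1 k).card := by
        apply Finset.card_le_card
        intro v hv
        obtain ⟨S, hS, rfl⟩ := mem_image.1 hv
        obtain ⟨hne, -⟩ := (mem_Sfam_iff M S).1 hS
        rw [mem_Icc]
        constructor
        · exact Nat.one_le_iff_ne_zero.2 (fun h => hne (Finset.card_eq_zero.1 h))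
        · exact le_trans (Finset.card_le_card (subset_univ S)) (by simp)
    _ = k := by rw [Nat.card_Icc]; omega


section theta2
variable {n k : ℕ}

/-- the matrix associated to a pair of level functions -/
noncomputable def mrc {m : ℕ} (r : OrdT n m) (c : OrdT k m) : Fin n → Fin k → Bool :=
  fun i j => decide (r.1 i ≠ 0 ∧ r.1 i ≤ c.1 j)

lemma mrc_lonesum {m : ℕ} (r : OrdT n m) (c : OrdT k m) : IsLonesum (mrc r c) := by
  intro i₁ i₂ j₁ j₂ hi hj ⟨h1, h2, h3, h4⟩
  rw [mrc, decide_eq_true_eq] at h1 h2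
  rw [mrc, decide_eq_false_iff_not] at h3 h4
  obtain ⟨h1a, h1b⟩ := h1
  obtain ⟨h2a, h2b⟩ := h2
  rw [not_and] at h3 h4
  have h3' := h3 h1a
  have h4' := h4 h2a
  rw [Fin.le_def] at h1b h2b
  rw [Fin.le_def] at h3' h4'
  have e1 : (r.1 i₁ : ℕ) ≠ 0 := fun h => h1a (Fin.ext (by simpa using h))
  have e2 : (r.1 i₂ : ℕ) ≠ 0 := fun h => h2a (Fin.ext (by simpa using h))
  omega

variable {m : ℕ} (r : OrdT n m) (c : OrdT k m)

/-- level sets of the column function -/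
def St (t : ℕ) : Finset (Fin k) := univ.filter (fun j => t ≤ (c.1 j : ℕ))

lemma hit_c (t : ℕ) (h1 : 1 ≤ t) (h2 : t ≤ m) : ∃ j, (c.1 j : ℕ) = t := by
  obtain ⟨j, hj⟩ := c.2 ⟨t, by omega⟩ (by
    intro h
    have := congrArg Fin.val h
    simp at this
    omega)
  exact ⟨j, by rw [hj]⟩

lemma St_nonempty (t : ℕ) (h1 : 1 ≤ t) (h2 : t ≤ m) : (St c t).Nonempty := by
  obtain ⟨j, hj⟩ := hit_c c t h1 h2
  exact ⟨j, by simp [St, hj]⟩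

lemma St_subset_iff (t a : ℕ) (ht1 : 1 ≤ t) (ht2 : t ≤ m) (ha1 : 1 ≤ a) (ha2 : a ≤ m) :
    St c a ⊆ St c t ↔ t ≤ a := by
  constructor
  · intro hsub
    obtain ⟨j, hj⟩ := hit_c c a ha1 ha2
    have : j ∈ St c a := by simp [St, hj]
    have := hsub this
    simp only [St, mem_filter, mem_univ, true_and] at this
    omega
  · intro hta j hj
    simp only [St, mem_filter, mem_univ, true_and] at hj ⊢
    omega

lemma St_injOn (t t' : ℕ) (ht : t ∈ Icc 1 m) (ht' : t' ∈ Icc 1 m)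
    (h : St c t = St c t') : t = t' := by
  rw [mem_Icc] at ht ht'
  have h1 := (St_subset_iff c t t' ht.1 ht.2 ht'.1 ht'.2).1 (le_of_eq h.symm)
  have h2 := (St_subset_iff c t' t ht'.1 ht'.2 ht.1 ht.2).1 (le_of_eq h)
  omega

lemma supp_mrc_empty (i : Fin n) (h : r.1 i = 0) : supp (mrc r c) i = ∅ := by
  ext j
  simp only [mem_supp_iff, mrc, decide_eq_true_eq, Finset.notMem_empty, iff_false]
  rintro ⟨ha, -⟩
  exact ha h

lemma supp_mrc_St (i : Fin n) (h : r.1 i ≠ 0) : supp (mrc r c) i = St c (r.1 i : ℕ) := by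
  ext j
  simp only [mem_supp_iff, mrc, decide_eq_true_eq, St, mem_filter, mem_univ, true_and]
  rw [Fin.le_def]
  simp [h]

lemma val_pos_of_ne_zero {m : ℕ} (v : Fin (m + 1)) (h : v ≠ 0) : 1 ≤ (v : ℕ) := by
  rcases Nat.eq_zero_or_pos (v : ℕ) with h0 | h0
  · exact absurd (Fin.ext (by simpa using h0)) h
  · exact h0

lemma Sfam_mrc : Sfam (mrc r c) = (Icc 1 m).image (St c) := by
  ext S
  rw [mem_Sfam_iff, mem_image]
  constructor
  · rintro ⟨hne, i, rfl⟩
    have hr : r.1 i ≠ 0 := by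
      intro h0
      exact hne (supp_mrc_empty r c i h0)
    refine ⟨(r.1 i : ℕ), mem_Icc.2 ⟨val_pos_of_ne_zero _ hr, by
      have := (r.1 i).isLt; omega⟩, (supp_mrc_St r c i hr).symm⟩
  · rintro ⟨t, ht, rfl⟩
    rw [mem_Icc] at ht
    obtain ⟨i, hi⟩ := r.2 ⟨t, by omega⟩ (by
      intro h
      have := congrArg Fin.val h
      simp at this
      omega)
    have hri : r.1 i ≠ 0 := by
      rw [hi]
      intro h
      have := congrArg Fin.val h
      simp at this
      omega
    constructor
    · exact Finset.nonempty_iff_ne_empty.1 (St_nonempty c t ht.1 ht.2)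
    · exact ⟨i, by rw [supp_mrc_St r c i hri, hi]⟩

lemma card_Sfam_mrc : (Sfam (mrc r c)).card = m := by
  rw [Sfam_mrc, Finset.card_image_of_injOn (fun t ht t' ht' => St_injOn c t t' ht ht'),
    Nat.card_Icc]
  omega

lemma cdeg_mrc (j : Fin k) : cdeg (mrc r c) j = (c.1 j : ℕ) := by
  have hcle : (c.1 j : ℕ) ≤ m := by have := (c.1 j).isLt; omega
  rw [cdeg, Sfam_mrc, Finset.filter_image]
  rw [Finset.card_image_of_injOn (fun t ht t' ht' =>
    St_injOn c t t' (mem_of_mem_filter t ht) (mem_of_mem_filter t' ht'))]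
  have : (Icc 1 m).filter (fun t => j ∈ St c t) = Icc 1 (c.1 j : ℕ) := by
    ext t
    simp only [mem_filter, mem_Icc, St, mem_univ, true_and]
    omega
  rw [this, Nat.card_Icc]
  omega

lemma rank_mrc (i : Fin n) (h : r.1 i ≠ 0) :
    rank (mrc r c) (supp (mrc r c) i) = (r.1 i : ℕ) := by
  have ha1 : 1 ≤ (r.1 i : ℕ) := val_pos_of_ne_zero _ h
  have ha2 : (r.1 i : ℕ) ≤ m := by have := (r.1 i).isLt; omega
  rw [supp_mrc_St r c i h, rank, Sfam_mrc, Finset.filter_image]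
  rw [Finset.card_image_of_injOn (fun t ht t' ht' =>
    St_injOn c t t' (mem_of_mem_filter t ht) (mem_of_mem_filter t' ht'))]
  have : (Icc 1 m).filter (fun t => St c (r.1 i : ℕ) ⊆ St c t) = Icc 1 (r.1 i : ℕ) := by
    ext t
    simp only [mem_filter, mem_Icc]
    constructor
    · rintro ⟨ht, hsub⟩
      exact ⟨ht.1, (St_subset_iff c t _ ht.1 ht.2 ha1 ha2).1 hsub⟩
    · rintro ⟨ht1, ht2⟩
      have htm : t ≤ m := le_trans ht2 ha2
      exact ⟨⟨ht1, htm⟩, (St_subset_iff c t _ ht1 htm ha1 ha2).2 ht2⟩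
  rw [this, Nat.card_Icc]
  omega

end theta2

section bij
variable (n k : ℕ)

noncomputable def theta2 :
    (Σ m : Fin (min n k + 1), OrdT n (m : ℕ) × OrdT k (m : ℕ)) →
      {M : Fin n → Fin k → Bool // IsLonesum M} :=
  fun p => ⟨mrc p.2.1 p.2.2, mrc_lonesum p.2.1 p.2.2⟩

lemma r_val_formula {m : ℕ} (r : OrdT n m) (c : OrdT k m) (i : Fin n) :
    (r.1 i : ℕ) = if supp (mrc r c) i = ∅ then 0 else rank (mrc r c) (supp (mrc r c) i) := by
  by_cases h : r.1 i = 0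
  · rw [if_pos (supp_mrc_empty r c i h), h]
    rfl
  · rw [if_neg, rank_mrc r c i h]
    rw [supp_mrc_St r c i h]
    apply Finset.nonempty_iff_ne_empty.1
    apply St_nonempty c _ (val_pos_of_ne_zero _ h)
    have := (r.1 i).isLt; omega

lemma theta2_injective : Injective (theta2 n k) := by
  rintro ⟨m1, r1, c1⟩ ⟨m2, r2, c2⟩ h
  have hM : mrc r1 c1 = mrc r2 c2 := congrArg Subtype.val h
  have hm : m1 = m2 := by
    apply Fin.ext
    have h1 := card_Sfam_mrc r1 c1
    have h2 := card_Sfam_mrc r2 c2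
    rw [hM] at h1
    omega
  subst hm
  have hc : c1 = c2 := by
    apply Subtype.ext; funext j; apply Fin.ext
    have h1 := cdeg_mrc r1 c1 j
    have h2 := cdeg_mrc r2 c2 j
    rw [hM] at h1
    omega
  have hr : r1 = r2 := by
    apply Subtype.ext; funext i; apply Fin.ext
    rw [r_val_formula n k r1 c1 i, r_val_formula n k r2 c2 i, hM]
  rw [hc, hr]

lemma theta2_surjective : Surjective (theta2 n k) := by
  rintro ⟨M, hM⟩
  set m0 := (Sfam M).card with hm0
  have hn : m0 ≤ n := Sfam_card_le_left M
  have hk : m0 ≤ k := Sfam_card_le_right hM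
  set rfun : Fin n → Fin (m0 + 1) := fun i =>
    if h : supp M i = ∅ then 0
    else ⟨rank M (supp M i), by have := rank_le (M := M) (supp M i); omega⟩ with hrfun
  have rprop : ∀ v : Fin (m0 + 1), v ≠ 0 → ∃ i, rfun i = v := by
    intro v hv
    have hv1 : 1 ≤ (v : ℕ) := val_pos_of_ne_zero _ hv
    have hv2 : (v : ℕ) ≤ m0 := by have := v.isLt; omega
    have : (v : ℕ) ∈ (Sfam M).image (rank M) := by
      rw [image_rank hM]; exact mem_Icc.2 ⟨hv1, hv2⟩
    obtain ⟨S, hS, hrS⟩ := mem_image.1 this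
    obtain ⟨hne, i, rfl⟩ := (mem_Sfam_iff M S).1 hS
    refine ⟨i, ?_⟩
    rw [hrfun]
    simp only [dif_neg hne]
    exact Fin.ext (by simpa using hrS)
  set cfun : Fin k → Fin (m0 + 1) := fun j =>
    ⟨cdeg M j, by have := cdeg_le M j; omega⟩ with hcfun
  have cprop : ∀ v : Fin (m0 + 1), v ≠ 0 → ∃ j, cfun j = v := by
    intro v hv
    have hv1 : 1 ≤ (v : ℕ) := val_pos_of_ne_zero _ hv
    have hv2 : (v : ℕ) ≤ m0 := by have := v.isLt; omega
    obtain ⟨j, hj⟩ := exists_cdeg_eq hM (v : ℕ) hv1 hv2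
    exact ⟨j, Fin.ext (by simpa using hj)⟩
  refine ⟨⟨⟨m0, by omega⟩, ⟨rfun, rprop⟩, ⟨cfun, cprop⟩⟩, ?_⟩
  apply Subtype.ext
  show mrc _ _ = M
  funext i j
  show decide ((rfun i ≠ 0) ∧ rfun i ≤ cfun j) = M i j
  by_cases hMij : M i j = true
  · rw [hMij]
    apply decide_eq_true
    have hjsupp : j ∈ supp M i := (mem_supp_iff M i j).2 hMij
    have hne : supp M i ≠ ∅ := fun h => by rw [h] at hjsupp; exact absurd hjsupp (notMem_empty j)
    have hSfam : supp M i ∈ Sfam M := (mem_Sfam_iff M _).2 ⟨hne, i, rfl⟩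
    constructor
    · rw [hrfun]
      simp only [dif_neg hne]
      intro h0
      have := congrArg Fin.val h0
      simp only [Fin.val_zero] at this
      have := one_le_rank hSfam
      omega
    · rw [hrfun, hcfun, Fin.le_def]
      simp only [dif_neg hne]
      exact (mem_iff_rank_le_cdeg hM hSfam j).1 hjsupp
  · have hMf : M i j = false := by revert hMij; cases M i j <;> simp
    rw [hMf]
    apply decide_eq_false
    rintro ⟨ha, hb⟩
    have hne : supp M i ≠ ∅ := by
      intro h
      apply ha
      rw [hrfun]
      simp only [dif_pos h]
    have hSfam : supp M i ∈ Sfam M := (mem_Sfam_iff M _).2 ⟨hne, i, rfl⟩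
    rw [hrfun, hcfun, Fin.le_def] at hb
    simp only [dif_neg hne] at hb
    have : j ∈ supp M i := (mem_iff_rank_le_cdeg hM hSfam j).2 hb
    rw [mem_supp_iff] at this
    exact hMij this

lemma card_lonesum :
    Nat.card {M : Fin n → Fin k → Bool // IsLonesum M} =
      ∑ m ∈ Finset.range (min n k + 1), Cc n m * Cc k m := by
  rw [← Nat.card_eq_of_bijective (theta2 n k) ⟨theta2_injective n k, theta2_surjective n k⟩]
  letI : ∀ a b : ℕ, Fintype (OrdT a b) := fun _ _ => Fintype.ofFinite _
  rw [Nat.card_eq_fintype_card, Fintype.card_sigma]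
  rw [← Fin.sum_univ_eq_sum_range (fun m => Cc n m * Cc k m) (min n k + 1)]
  apply Finset.sum_congr rfl
  intro m _
  rw [← Nat.card_eq_fintype_card, Nat.card_prod, card_OrdT, card_OrdT]

end bij

-- ## algebraic identities
lemma choose_id (m j : ℕ) :
    (m + 2) * Nat.choose (m + 1) j = (j + 1) * Nat.choose (m + 1) j + (m + 1) * Nat.choose m j := by
  have h1 := Nat.add_one_mul_choose_eq (m + 1) j
  have h2 := Nat.add_one_mul_choose_eq m j
  have h3 := Nat.choose_succ_succ (m + 1) j
  -- h1 : (m+2) * C(m+1,j) = C(m+2,j+1) * (j+1)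
  -- h2 : (m+1) * C(m,j) = C(m+1,j+1) * (j+1)
  -- h3 : C(m+2,j+1) = C(m+1,j) + C(m+1,j+1)
  calc (m + 2) * Nat.choose (m + 1) j = Nat.choose (m + 2) (j + 1) * (j + 1) := h1
    _ = (Nat.choose (m + 1) j + Nat.choose (m + 1) (j + 1)) * (j + 1) := by rw [h3]
    _ = (j + 1) * Nat.choose (m + 1) j + Nat.choose (m + 1) (j + 1) * (j + 1) := by ring
    _ = (j + 1) * Nat.choose (m + 1) j + (m + 1) * Nat.choose m j := by rw [← h2]

lemma Cc_eq_alt (k : ℕ) : ∀ m, (Cc k m : ℤ) =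
    ∑ j ∈ Finset.range (m + 1), (-1) ^ (m + j) * (Nat.choose m j : ℤ) * (j + 1) ^ k := by
  induction k with
  | zero =>
    intro m
    rw [Cc_zero_left]
    simp only [pow_zero, mul_one]
    have hs : ∀ j ∈ Finset.range (m + 1), ((-1 : ℤ)) ^ (m + j) * (Nat.choose m j : ℤ)
        = (-1) ^ m * ((-1) ^ j * (Nat.choose m j : ℤ)) := by
      intro j _
      rw [pow_add]; ring
    rw [Finset.sum_congr rfl hs, ← Finset.mul_sum, Int.alternating_sum_range_choose]
    cases m <;> simp [show Cc 0 0 = 1 from rfl, Cc_zero_left]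
  | succ k ih =>
    intro m
    cases m with
    | zero =>
      have h0 : (Cc k 0 : ℤ) = 1 := by rw [ih 0]; simp
      have h1 : (Cc (k + 1) 0 : ℤ) = (Cc k 0 : ℤ) := by
        rw [Cc_succ]; push_cast; ring
      rw [h1, h0]
      simp
    | succ m' =>
      have e1 : (Cc (k + 1) (m' + 1) : ℤ) =
          (m' + 2) * (Cc k (m' + 1) : ℤ) + (m' + 1) * (Cc k m' : ℤ) := by
        rw [Cc_succ, show m' + 1 - 1 = m' from rfl]; push_cast; ring
      rw [e1, ih, ih]
      have e2 : ∑ j ∈ Finset.range (m' + 1), (-1 : ℤ) ^ (m' + j) * (Nat.choose m' j : ℤ) * (j + 1) ^ k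
          = ∑ j ∈ Finset.range (m' + 2), (-1 : ℤ) ^ (m' + j) * (Nat.choose m' j : ℤ) * (j + 1) ^ k := by
        refine (?_ : _ = _).symm
        rw [Finset.sum_range_succ, Nat.choose_succ_self]
        simp
      rw [e2, Finset.mul_sum, Finset.mul_sum, ← Finset.sum_add_distrib]
      apply Finset.sum_congr rfl
      intro j hj
      have h1 : ((-1 : ℤ)) ^ (m' + 1 + j) = -(-1 : ℤ) ^ (m' + j) := by
        rw [show m' + 1 + j = (m' + j) + 1 from by omega, pow_succ]; ring
      have h3 : ((m' : ℤ) + 2) * (Nat.choose (m' + 1) j : ℤ) =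
          (j + 1) * (Nat.choose (m' + 1) j : ℤ) + (m' + 1) * (Nat.choose m' j : ℤ) := by
        exact_mod_cast congrArg (fun x : ℕ => (x : ℤ)) (choose_id m' j)
      have hp : ((j : ℤ) + 1) ^ (k + 1) = (j + 1) * (j + 1) ^ k := by ring
      rw [h1, hp]
      linear_combination (-((-1 : ℤ)) ^ (m' + j)) * ((j : ℤ) + 1) ^ k * h3

lemma T_zero_succ (j : ℕ) : T 0 (j + 1) = 0 := rfl
lemma T_zero_zero : T 0 0 = 1 := rfl
lemma T_succ_succ (n j : ℕ) : T (n + 1) (j + 1) = (j + 1) * (T n (j + 1) + T n j) := rfl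

lemma sum_Cc_eq (n : ℕ) : ∀ j, ∑ m ∈ Finset.range (n + 1),
    (-1 : ℤ) ^ (m + j) * (Nat.choose m j : ℤ) * (Cc n m : ℤ) = (-1) ^ (n + j) * (T n j : ℤ) := by
  induction n with
  | zero =>
    intro j
    rw [Finset.sum_range_one]
    cases j with
    | zero => simp [T_zero_zero, show Cc 0 0 = 1 from rfl]
    | succ j' => simp [T_zero_succ, Nat.choose_eq_zero_of_lt (by omega : 0 < j' + 1)]
  | succ n ih =>
    intro j
    have e1 : ∀ m ∈ Finset.range (n + 2), (-1 : ℤ) ^ (m + j) * (Nat.choose m j : ℤ) * (Cc (n + 1) m : ℤ)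
        = (-1 : ℤ) ^ (m + j) * (Nat.choose m j : ℤ) * ((m + 1) * (Cc n m : ℤ))
          + (-1 : ℤ) ^ (m + j) * (Nat.choose m j : ℤ) * ((m : ℤ) * (Cc n (m - 1) : ℤ)) := by
      intro m _
      rw [Cc_succ]; push_cast; ring
    rw [Finset.sum_congr rfl e1, Finset.sum_add_distrib]
    -- first sum: drop the last term
    have eA : ∑ m ∈ Finset.range (n + 2), (-1 : ℤ) ^ (m + j) * (Nat.choose m j : ℤ) * ((m + 1) * (Cc n m : ℤ))
        = ∑ m ∈ Finset.range (n + 1), (-1 : ℤ) ^ (m + j) * (Nat.choose m j : ℤ) * ((m + 1) * (Cc n m : ℤ)) := by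
      rw [Finset.sum_range_succ, Cc_eq_zero_of_lt n (n + 1) (by omega)]
      simp
    -- second sum: shift the index
    have eB : ∑ m ∈ Finset.range (n + 2), (-1 : ℤ) ^ (m + j) * (Nat.choose m j : ℤ) * ((m : ℤ) * (Cc n (m - 1) : ℤ))
        = ∑ m ∈ Finset.range (n + 1), (-1 : ℤ) ^ (m + 1 + j) * (Nat.choose (m + 1) j : ℤ) * ((m + 1 : ℤ) * (Cc n m : ℤ)) := by
      rw [Finset.sum_range_succ']
      simp only [Nat.cast_zero, mul_zero, zero_mul, add_zero]
      apply Finset.sum_congr rfl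
      intro x _
      push_cast
      ring_nf
    rw [eA, eB, ← Finset.sum_add_distrib]
    cases j with
    | zero =>
      have hz : ∀ m ∈ Finset.range (n + 1), (-1 : ℤ) ^ (m + 0) * (Nat.choose m 0 : ℤ) * ((m + 1) * (Cc n m : ℤ))
          + (-1 : ℤ) ^ (m + 1 + 0) * (Nat.choose (m + 1) 0 : ℤ) * ((m + 1 : ℤ) * (Cc n m : ℤ)) = 0 := by
        intro m _
        have h1 : ((-1 : ℤ)) ^ (m + 1 + 0) = -(-1 : ℤ) ^ (m + 0) := by
          rw [show m + 1 + 0 = (m + 0) + 1 from by omega, pow_succ]; ring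
        rw [h1, Nat.choose_zero_right, Nat.choose_zero_right]
        ring
      rw [Finset.sum_congr rfl hz]
      simp [T_zero_right]
    | succ j' =>
      have key : ∀ m ∈ Finset.range (n + 1),
          (-1 : ℤ) ^ (m + (j' + 1)) * (Nat.choose m (j' + 1) : ℤ) * ((m + 1) * (Cc n m : ℤ))
          + (-1 : ℤ) ^ (m + 1 + (j' + 1)) * (Nat.choose (m + 1) (j' + 1) : ℤ) * ((m + 1 : ℤ) * (Cc n m : ℤ))
          = (j' + 1 : ℤ) * ((-1 : ℤ) ^ (m + j') * (Nat.choose m j' : ℤ) * (Cc n m : ℤ))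
            - (j' + 1 : ℤ) * ((-1 : ℤ) ^ (m + (j' + 1)) * (Nat.choose m (j' + 1) : ℤ) * (Cc n m : ℤ)) := by
        intro m _
        have h1 : ((-1 : ℤ)) ^ (m + (j' + 1)) = -(-1 : ℤ) ^ (m + j') := by
          rw [show m + (j' + 1) = (m + j') + 1 from by omega, pow_succ]; ring
        have h2 : ((-1 : ℤ)) ^ (m + 1 + (j' + 1)) = (-1 : ℤ) ^ (m + j') := by
          rw [show m + 1 + (j' + 1) = (m + j') + 2 from by omega, pow_add]; ring
        have h4 : (Nat.choose (m + 1) (j' + 1) : ℤ) = (Nat.choose m j' : ℤ) + (Nat.choose m (j' + 1) : ℤ) := by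
          exact_mod_cast congrArg (fun x : ℕ => (x : ℤ)) (Nat.choose_succ_succ m j')
        have h3 : ((m : ℤ) + 1) * (Nat.choose m j' : ℤ) =
            (j' + 1) * ((Nat.choose m j' : ℤ) + (Nat.choose m (j' + 1) : ℤ)) := by
          have hn : (m + 1) * Nat.choose m j' = (j' + 1) * (Nat.choose m j' + Nat.choose m (j' + 1)) := by
            have a1 := Nat.add_one_mul_choose_eq m j'
            have a2 := Nat.choose_succ_succ m j'
            calc (m + 1) * Nat.choose m j' = Nat.succ m * Nat.choose m j' := rfl
              _ = Nat.choose (m + 1) (j' + 1) * (j' + 1) := a1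
              _ = (Nat.choose m j' + Nat.choose m (j' + 1)) * (j' + 1) := by rw [a2]
              _ = (j' + 1) * (Nat.choose m j' + Nat.choose m (j' + 1)) := Nat.mul_comm _ _
          exact_mod_cast congrArg (fun x : ℕ => (x : ℤ)) hn
        rw [h1, h2, h4]
        linear_combination ((-1 : ℤ)) ^ (m + j') * (Cc n m : ℤ) * h3
      rw [Finset.sum_congr rfl key, Finset.sum_sub_distrib, ← Finset.mul_sum, ← Finset.mul_sum,
        ih j', ih (j' + 1)]
      have h5 : ((-1 : ℤ)) ^ (n + 1 + (j' + 1)) = (-1 : ℤ) ^ (n + j') := by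
        rw [show n + 1 + (j' + 1) = (n + j') + 2 from by omega, pow_add]; ring
      have h6 : ((-1 : ℤ)) ^ (n + (j' + 1)) = -(-1 : ℤ) ^ (n + j') := by
        rw [show n + (j' + 1) = (n + j') + 1 from by omega, pow_succ]; ring
      rw [h5, h6, T_succ_succ]
      push_cast
      ring


lemma core (n k : ℕ) :
    ∑ m ∈ Finset.range (min n k + 1), (Cc n m : ℤ) * (Cc k m : ℤ)
      = ∑ i ∈ Finset.range (n + 1), (-1 : ℤ) ^ (n + i) * (T n i : ℤ) * ((i : ℤ) + 1) ^ k := by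
  have h1 : ∑ m ∈ Finset.range (min n k + 1), (Cc n m : ℤ) * (Cc k m : ℤ)
      = ∑ m ∈ Finset.range (n + 1), (Cc n m : ℤ) * (Cc k m : ℤ) := by
    apply Finset.sum_subset (Finset.range_subset_range.2 (by omega))
    intro m hm hnm
    rw [Finset.mem_range] at hm hnm
    have hkm : k < m := by omega
    rw [Cc_eq_zero_of_lt k m hkm]
    simp
  rw [h1]
  have h3 : ∀ m ∈ Finset.range (n + 1), (Cc n m : ℤ) * (Cc k m : ℤ)
      = ∑ j ∈ Finset.range (n + 1),
          (Cc n m : ℤ) * ((-1 : ℤ) ^ (m + j) * (Nat.choose m j : ℤ) * ((j : ℤ) + 1) ^ k) := by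
    intro m hm
    rw [Finset.mem_range] at hm
    rw [Cc_eq_alt k m, Finset.mul_sum]
    apply Finset.sum_subset (Finset.range_subset_range.2 (by omega))
    intro j hj hjm
    rw [Finset.mem_range] at hj hjm
    rw [Nat.choose_eq_zero_of_lt (by omega : m < j)]
    simp
  rw [Finset.sum_congr rfl h3, Finset.sum_comm]
  apply Finset.sum_congr rfl
  intro j hj
  have h5 : ∑ m ∈ Finset.range (n + 1),
      (Cc n m : ℤ) * ((-1 : ℤ) ^ (m + j) * (Nat.choose m j : ℤ) * ((j : ℤ) + 1) ^ k)
      = (((j : ℤ) + 1) ^ k) * ∑ m ∈ Finset.range (n + 1),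
          (-1 : ℤ) ^ (m + j) * (Nat.choose m j : ℤ) * (Cc n m : ℤ) := by
    rw [Finset.mul_sum]
    apply Finset.sum_congr rfl
    intro m _
    ring
  rw [h5, sum_Cc_eq n j]
  ring


end PolyB

/-- the number of `n × k` lonesum matrices equals the poly-Bernoulli
number `B_n^{(-k)} = ∑_{m} m! {n+1 brace m+1} m! {k+1 brace m+1}`, which also equals
`∑_{i=0}^n {n brace i} (-1)^{n-i} i! (i+1)^k`. Here `{a brace b}` are the ordinary
Stirling numbers of the second kind, i.e. `sStirling` with `S` all positive integers. -/
theorem card_lonesum_eq_polyBernoulli (n k : ℕ) :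
    (Nat.card {M : Fin n → Fin k → Bool // IsLonesum M} : ℤ) =
      (∑ m ∈ Finset.range (min n k + 1),
        (m.factorial * sStirling {j | 0 < j} (n + 1) (m + 1) : ℤ) *
          (m.factorial * sStirling {j | 0 < j} (k + 1) (m + 1))) ∧
    (∑ m ∈ Finset.range (min n k + 1),
        (m.factorial * sStirling {j | 0 < j} (n + 1) (m + 1) : ℤ) *
          (m.factorial * sStirling {j | 0 < j} (k + 1) (m + 1))) =
      ∑ i ∈ Finset.range (n + 1),
        (sStirling {j | 0 < j} n i : ℤ) * (-1) ^ (n - i) * i.factorial * (i + 1) ^ k := by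
  have hterm : ∀ (a m : ℕ),
      ((m.factorial : ℤ) * (sStirling {j | 0 < j} (a + 1) (m + 1) : ℤ)) = (PolyB.Cc a m : ℤ) := by
    intro a m
    exact_mod_cast congrArg (fun x : ℕ => (x : ℤ)) (PolyB.factorial_mul_sStirling a m)
  have hsum : (∑ m ∈ Finset.range (min n k + 1),
        (m.factorial * sStirling {j | 0 < j} (n + 1) (m + 1) : ℤ) *
          (m.factorial * sStirling {j | 0 < j} (k + 1) (m + 1)))
      = ∑ m ∈ Finset.range (min n k + 1), (PolyB.Cc n m : ℤ) * (PolyB.Cc k m : ℤ) := by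
    apply Finset.sum_congr rfl
    intro m _
    rw [← hterm n m, ← hterm k m]
  constructor
  · rw [hsum, PolyB.card_lonesum n k]
    push_cast
    rfl
  · rw [hsum, PolyB.core n k]
    apply Finset.sum_congr rfl
    intro i hi
    rw [Finset.mem_range] at hi
    have hsign : ((-1 : ℤ)) ^ (n - i) = (-1 : ℤ) ^ (n + i) := by
      rw [show n + i = (n - i) + 2 * i from by omega, pow_add, pow_mul]
      norm_num
    have hT : (sStirling {j | 0 < j} n i : ℤ) * (i.factorial : ℤ) = (PolyB.T n i : ℤ) := by
      exact_mod_cast congrArg (fun x : ℕ => (x : ℤ)) (PolyB.factorial_mul_sStirling' n i)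
    rw [hsign]
    calc (-1 : ℤ) ^ (n + i) * (PolyB.T n i : ℤ) * ((i : ℤ) + 1) ^ k
        = (-1 : ℤ) ^ (n + i) * ((sStirling {j | 0 < j} n i : ℤ) * (i.factorial : ℤ)) * ((i : ℤ) + 1) ^ k := by
          rw [hT]
      _ = (sStirling {j | 0 < j} n i : ℤ) * (-1) ^ (n + i) * (i.factorial : ℤ) * ((i : ℤ) + 1) ^ k := by
          ring
end

section
/- For any set S of positive integers and integer k, the exponential generating function of the S-restricted poly-Bernoulli numbers B_{n,S}^{(k)} = sum_{i=0}^n {n brace i}_S (-1)^{n-i} i! / (i+1)^k is sum_{n >= 0} B_{n,S}^{(k)} t^n/n! = Li_k(-E_S(-t)) / (-E_S(-t)), where Li_k(z) = sum_{m >= 1} z^m/m^k and E_S(t) = sum_{s in S} t^s/s!. -/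
open scoped Classical

/-- `E_S(-t)` as a formal power series. -/
noncomputable def ESneg (S : Set ℕ) : PowerSeries ℚ :=
  PowerSeries.mk fun n => (-1 : ℚ) ^ n * PowerSeries.coeff n (ES S)

open Finset


lemma natCard_eq_filter_card {α : Type*} [Fintype α] (p : α → Prop) [DecidablePred p] :
    Nat.card {x // p x} = (univ.filter p).card := by
  rw [Nat.card_eq_fintype_card]
  exact Fintype.card_subtype p

def fcond (S : Set ℕ) {α : Type*} {m : ℕ} (f : α → Fin m) : Prop :=
  ∀ j, Nat.card {i // f i = j} ∈ S

noncomputable def Fcard (S : Set ℕ) (α : Type*) (m : ℕ) : ℕ :=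
  Nat.card {f : α → Fin m // fcond S f}

theorem Fcard_congr (S : Set ℕ) {α β : Type*} (e : α ≃ β) (m : ℕ) :
    Fcard S α m = Fcard S β m := by
  apply Nat.card_congr
  refine Equiv.subtypeEquiv (Equiv.arrowCongr e (Equiv.refl _)) fun f => ?_
  refine forall_congr' fun j => ?_
  simp only [fcond, Equiv.arrowCongr, Equiv.refl, Equiv.coe_fn_mk, Function.comp, id_eq]
  rw [Nat.card_congr (Equiv.subtypeEquiv e.symm (fun b : β => Iff.rfl)
    : {b : β // f (e.symm b) = j} ≃ {a : α // f a = j})]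

noncomputable def stepEquiv (S : Set ℕ) (α : Type*) [Fintype α] (m : ℕ) (A : Finset α) :
    {F : {f : α → Fin (m+1) // fcond S f} //
        univ.filter (fun i => F.1 i = Fin.last m) = A}
      ≃ {g : {x : α // x ∉ A} → Fin m // A.card ∈ S ∧ fcond S g} where
  toFun := fun ⟨⟨f, hf⟩, hA⟩ => by
    have hmem : ∀ a, a ∈ A ↔ f a = Fin.last m := fun a => by rw [← hA]; simp
    refine ⟨fun x => (f x.1).castPred (fun h => x.2 ((hmem _).mpr h)), ?_, ?_⟩
    · have h0 : Nat.card {i : α // f i = Fin.last m} = A.card := by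
        rw [natCard_eq_filter_card, hA]
      rw [← h0]; exact hf _
    · intro j
      have h3 : Nat.card {x : {x : α // x ∉ A} //
            (f x.1).castPred (fun h => x.2 ((hmem _).mpr h)) = j}
          = Nat.card {a : α // f a = j.castSucc} := by
        refine Nat.card_congr ⟨fun x => ⟨x.1.1, ?_⟩, fun a => ⟨⟨a.1, ?_⟩, ?_⟩, ?_, ?_⟩
        · have hx := x.2
          rw [← Fin.castSucc_castPred (f x.1.1) (fun h => x.1.2 ((hmem _).mpr h)), hx]
        · intro hc
          have h5 := (hmem a.1).mp hc
          rw [a.2] at h5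
          exact (Fin.castSucc_lt_last j).ne h5
        · apply Fin.castSucc_injective
          rw [Fin.castSucc_castPred, a.2]
        · intro x; ext; rfl
        · intro a; ext; rfl
      rw [h3]
      exact hf j.castSucc
  invFun := fun ⟨g, hA, hg⟩ => by
    refine ⟨⟨fun a => if h : a ∈ A then Fin.last m else (g ⟨a, h⟩).castSucc, ?_⟩, ?_⟩
    · intro j
      rcases Fin.eq_castSucc_or_eq_last j with ⟨j', rfl⟩ | rfl
      · have h3 : Nat.card {a : α //
            (if h : a ∈ A then Fin.last m else (g ⟨a, h⟩).castSucc) = j'.castSucc}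
            = Nat.card {x : {x : α // x ∉ A} // g x = j'} := by
          refine Nat.card_congr ⟨fun a => ?_, fun x => ⟨x.1.1, ?_⟩, ?_, ?_⟩
          · have hnA : a.1 ∉ A := by
              intro hc
              have h6 := a.2
              rw [dif_pos hc] at h6
              exact (Fin.castSucc_lt_last j').ne h6.symm
            refine ⟨⟨a.1, hnA⟩, ?_⟩
            have h6 := a.2
            rw [dif_neg hnA] at h6
            exact Fin.castSucc_injective _ h6
          · rw [dif_neg x.1.2, x.2]
          · intro a; ext; rfl
          · intro x; ext; rfl
        rw [h3]
        exact hg j'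
      · have h3 : Nat.card {a : α //
            (if h : a ∈ A then Fin.last m else (g ⟨a, h⟩).castSucc) = Fin.last m}
            = A.card := by
          rw [← Nat.card_eq_finsetCard]
          refine Nat.card_congr ⟨fun a => ⟨a.1, ?_⟩, fun a => ⟨a.1, ?_⟩, ?_, ?_⟩
          · by_contra hc
            have h6 := a.2
            rw [dif_neg hc] at h6
            exact (Fin.castSucc_lt_last _).ne h6
          · rw [dif_pos a.2]
          · intro a; ext; rfl
          · intro a; ext; rfl
        rw [h3]
        exact hA
    · ext a
      simp only [mem_filter, mem_univ, true_and]
      by_cases h : a ∈ A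
      · simp [h]
      · simp only [h, dif_neg, iff_false]
        exact fun hc => (Fin.castSucc_lt_last _).ne hc
  left_inv := fun ⟨⟨f, hf⟩, hA⟩ => by
    have hmem : ∀ a, a ∈ A ↔ f a = Fin.last m := fun a => by rw [← hA]; simp
    apply Subtype.ext
    apply Subtype.ext
    funext a
    simp only
    by_cases h : a ∈ A
    · rw [dif_pos h]; exact ((hmem a).mp h).symm
    · rw [dif_neg h, Fin.castSucc_castPred]
  right_inv := fun ⟨g, hA, hg⟩ => by
    apply Subtype.ext
    funext x
    simp only
    apply Fin.castSucc_injective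
    rw [Fin.castSucc_castPred, dif_neg x.2]

theorem Fcard_succ (S : Set ℕ) (α : Type*) [Fintype α] (m : ℕ) :
    Fcard S α (m+1)
      = ∑ A : Finset α, if A.card ∈ S then Fcard S {x : α // x ∉ A} m else 0 := by
  rw [Fcard, Nat.card_eq_fintype_card,
    Fintype.card_congr (Equiv.sigmaFiberEquiv
      (fun F : {f : α → Fin (m+1) // fcond S f} =>
        univ.filter (fun i => F.1 i = Fin.last m))).symm,
    Fintype.card_sigma]
  refine Finset.sum_congr rfl fun A _ => ?_
  rw [← Nat.card_eq_fintype_card, Nat.card_congr (stepEquiv S α m A)]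
  by_cases hA : A.card ∈ S
  · rw [if_pos hA, Fcard]
    exact Nat.card_congr (Equiv.subtypeEquivRight fun g => by simp [hA])
  · rw [if_neg hA]
    have : IsEmpty {g : {x : α // x ∉ A} → Fin m // A.card ∈ S ∧ fcond S g} :=
      ⟨fun g => hA g.2.1⟩
    exact Nat.card_of_isEmpty

noncomputable def Ncard (S : Set ℕ) (n m : ℕ) : ℕ := Fcard S (Fin n) m

set_option maxHeartbeats 1000000 in
theorem Ncard_succ (S : Set ℕ) (n m : ℕ) :
    Ncard S n (m+1)
      = ∑ s ∈ range (n+1), if s ∈ S then n.choose s * Ncard S (n-s) m else 0 := by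
  rw [Ncard, Fcard_succ]
  refine (Finset.sum_congr rfl (g := fun A : Finset (Fin n) =>
      if A.card ∈ S then Ncard S (n - A.card) m else 0) (fun A _ => ?_)).trans ?_
  · by_cases hA : A.card ∈ S
    · simp only [if_pos hA]
      refine Fcard_congr S ?_ m
      refine Fintype.equivFinOfCardEq ?_
      rw [Fintype.card_subtype_compl, Fintype.card_fin, Fintype.card_coe]
    · simp only [if_neg hA]
  · rw [← Finset.powerset_univ]
    refine (Finset.sum_powerset_apply_card
        (f := fun s => if s ∈ S then Ncard S (n - s) m else 0) (x := univ)).trans ?_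
    simp only [Finset.card_univ, Fintype.card_fin, smul_eq_mul]
    exact Finset.sum_congr rfl fun s _ => by by_cases hs : s ∈ S <;> simp [hs]


section
variable {S : Set ℕ} {n m : ℕ}

def fib (f : Fin n → Fin m) (j : Fin m) : Finset (Fin n) := univ.filter fun i => f i = j

lemma mem_fib {f : Fin n → Fin m} {j : Fin m} {i : Fin n} : i ∈ fib f j ↔ f i = j := by
  simp [fib]

def fcond' (S : Set ℕ) (f : Fin n → Fin m) : Prop := ∀ j, (fib f j).card ∈ S

lemma fib_nonempty (hS : 0 ∉ S) {f : Fin n → Fin m} (hf : fcond' S f) (j : Fin m) :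
    (fib f j).Nonempty := by
  rw [← Finset.card_pos]
  rcases Nat.eq_zero_or_pos (fib f j).card with h | h
  · exact absurd (h ▸ hf j) hS
  · exact h

lemma fib_injective (hS : 0 ∉ S) {f : Fin n → Fin m} (hf : fcond' S f) :
    Function.Injective (fib f) := by
  intro j j' h
  obtain ⟨i, hi⟩ := fib_nonempty hS hf j
  have hi' : i ∈ fib f j' := h ▸ hi
  rw [mem_fib] at hi hi'
  rw [← hi, hi']

/-- The partition of `Fin n` into fibers of `f`. -/
def partnOf (hS : 0 ∉ S) (f : Fin n → Fin m) (hf : fcond' S f) :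
    Finpartition (univ : Finset (Fin n)) where
  parts := univ.image (fib f)
  supIndep := by
    rw [Finset.supIndep_iff_pairwiseDisjoint]
    rintro b hb b' hb' hne
    simp only [coe_image, Set.mem_image, coe_univ, Set.image_univ, Set.mem_range] at hb hb'
    obtain ⟨j, rfl⟩ := hb
    obtain ⟨j', rfl⟩ := hb'
    have hjj : j ≠ j' := fun h => hne (by rw [h])
    simp only [Function.onFun, Finset.disjoint_left]
    intro i hi hi'
    simp only [id_eq] at hi hi'
    rw [mem_fib] at hi hi'
    exact hjj (hi ▸ hi')
  sup_parts := by
    apply Finset.Subset.antisymm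
    · intro i _; exact mem_univ i
    · intro i _
      rw [Finset.mem_sup]
      exact ⟨fib f (f i), Finset.mem_image_of_mem _ (mem_univ _), mem_fib.mpr rfl⟩
  bot_notMem := by
    simp only [Finset.bot_eq_empty, Finset.mem_image]
    rintro ⟨j, -, hj⟩
    exact (fib_nonempty hS hf j).ne_empty hj

lemma partnOf_parts (hS : 0 ∉ S) (f : Fin n → Fin m) (hf : fcond' S f) :
    (partnOf hS f hf).parts = univ.image (fib f) := rfl

lemma partnOf_parts_card (hS : 0 ∉ S) (f : Fin n → Fin m) (hf : fcond' S f) :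
    (partnOf hS f hf).parts.card = m := by
  rw [partnOf_parts, Finset.card_image_of_injective _ (fib_injective hS hf), card_univ,
    Fintype.card_fin]

lemma partnOf_sizes (hS : 0 ∉ S) (f : Fin n → Fin m) (hf : fcond' S f) :
    ∀ b ∈ (partnOf hS f hf).parts, b.card ∈ S := by
  intro b hb
  rw [partnOf_parts, Finset.mem_image] at hb
  obtain ⟨j, -, rfl⟩ := hb
  exact hf j

lemma part_eq_fib (hS : 0 ∉ S) (f : Fin n → Fin m) (hf : fcond' S f)
    {P : Finpartition (univ : Finset (Fin n))} (hP : partnOf hS f hf = P) (i : Fin n) :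
    P.part i = fib f (f i) := by
  apply P.part_eq_of_mem
  · rw [← hP, partnOf_parts]
    exact Finset.mem_image_of_mem _ (mem_univ _)
  · exact mem_fib.mpr rfl

end

section
variable {S : Set ℕ} {n m : ℕ}

lemma part_mem_of_subtype {P : Finpartition (univ : Finset (Fin n))} (i : Fin n) :
    P.part i ∈ P.parts := P.part_mem.mpr (mem_univ i)

noncomputable def labelEquiv (hS : 0 ∉ S) (P : Finpartition (univ : Finset (Fin n)))
    (hm : P.parts.card = m) (hs : ∀ b ∈ P.parts, b.card ∈ S) :
    {F : {f : Fin n → Fin m // fcond' S f} // partnOf hS F.1 F.2 = P}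
      ≃ (↥P.parts ≃ Fin m) where
  toFun := fun ⟨⟨f, hf⟩, hP⟩ =>
    { toFun := fun b => f (P.nonempty_of_mem_parts b.2).choose
      invFun := fun j => ⟨fib f j, by
        rw [← hP, partnOf_parts]; exact Finset.mem_image_of_mem _ (mem_univ _)⟩
      left_inv := fun b => by
        apply Subtype.ext
        have hc := (P.nonempty_of_mem_parts b.2).choose_spec
        have h1 : P.part (P.nonempty_of_mem_parts b.2).choose = b.1 :=
          P.part_eq_of_mem b.2 hc
        rw [← h1, part_eq_fib hS f hf hP]
      right_inv := fun j => by
        have hc := (P.nonempty_of_mem_parts (by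
          rw [← hP, partnOf_parts]; exact Finset.mem_image_of_mem _ (mem_univ _)
          : fib f j ∈ P.parts)).choose_spec
        exact mem_fib.mp hc }
  invFun := fun e => by
    have hfib : ∀ j, fib (fun i => e ⟨P.part i, part_mem_of_subtype i⟩) j = (e.symm j).1 := by
      intro j
      ext i
      rw [mem_fib]
      constructor
      · intro h
        have h2 : (⟨P.part i, part_mem_of_subtype i⟩ : ↥P.parts) = e.symm j := by
          rw [← h]; simp
        have h3 : P.part i = (e.symm j).1 := by rw [← h2]
        rw [← h3]
        exact P.mem_part (mem_univ i)
      · intro h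
        have h3 : P.part i = (e.symm j).1 := P.part_eq_of_mem (e.symm j).2 h
        have h2 : (⟨P.part i, part_mem_of_subtype i⟩ : ↥P.parts) = e.symm j := Subtype.ext h3
        rw [h2, Equiv.apply_symm_apply]
    have hf : fcond' S (fun i => e ⟨P.part i, part_mem_of_subtype i⟩) := by
      intro j
      rw [hfib j]
      exact hs _ (e.symm j).2
    refine ⟨⟨fun i => e ⟨P.part i, part_mem_of_subtype i⟩, hf⟩, ?_⟩
    apply Finpartition.ext
    rw [partnOf_parts]
    ext b
    rw [Finset.mem_image]
    constructor
    · rintro ⟨j, -, rfl⟩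
      rw [hfib j]
      exact (e.symm j).2
    · intro hb
      refine ⟨e ⟨b, hb⟩, mem_univ _, ?_⟩
      rw [hfib, Equiv.symm_apply_apply]
  left_inv := fun ⟨⟨f, hf⟩, hP⟩ => by
    apply Subtype.ext
    apply Subtype.ext
    funext i
    simp only
    simp only [Equiv.coe_fn_mk]
    have hmem : (P.nonempty_of_mem_parts (part_mem_of_subtype i)).choose ∈ P.part i :=
      (P.nonempty_of_mem_parts (part_mem_of_subtype i)).choose_spec
    have h3 : (P.nonempty_of_mem_parts (part_mem_of_subtype i)).choose ∈ fib f (f i) := by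
      rw [← part_eq_fib hS f hf hP i]
      exact hmem
    exact mem_fib.mp h3
  right_inv := fun e => by
    apply Equiv.ext
    intro b
    simp only
    have hc : (P.nonempty_of_mem_parts b.2).choose ∈ b.1 :=
      (P.nonempty_of_mem_parts b.2).choose_spec
    have h1 : P.part (P.nonempty_of_mem_parts b.2).choose = b.1 := P.part_eq_of_mem b.2 hc
    exact congrArg e (Subtype.ext h1)

theorem card_fcond' (hS : 0 ∉ S) :
    Nat.card {f : Fin n → Fin m // fcond' S f}
      = m.factorial * Nat.card {P : Finpartition (univ : Finset (Fin n)) //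
          P.parts.card = m ∧ ∀ b ∈ P.parts, b.card ∈ S} := by
  rw [Nat.card_eq_fintype_card,
    Fintype.card_congr (Equiv.sigmaFiberEquiv
      (fun F : {f : Fin n → Fin m // fcond' S f} =>
        (⟨partnOf hS F.1 F.2, partnOf_parts_card hS F.1 F.2, partnOf_sizes hS F.1 F.2⟩ :
          {P : Finpartition (univ : Finset (Fin n)) //
            P.parts.card = m ∧ ∀ b ∈ P.parts, b.card ∈ S}))).symm,
    Fintype.card_sigma]
  have h1 : ∀ P : {P : Finpartition (univ : Finset (Fin n)) //
      P.parts.card = m ∧ ∀ b ∈ P.parts, b.card ∈ S},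
      Fintype.card {F : {f : Fin n → Fin m // fcond' S f} //
        (⟨partnOf hS F.1 F.2, partnOf_parts_card hS F.1 F.2, partnOf_sizes hS F.1 F.2⟩ :
          {P : Finpartition (univ : Finset (Fin n)) //
            P.parts.card = m ∧ ∀ b ∈ P.parts, b.card ∈ S}) = P} = m.factorial := by
    intro P
    have e1 : {F : {f : Fin n → Fin m // fcond' S f} //
        (⟨partnOf hS F.1 F.2, partnOf_parts_card hS F.1 F.2, partnOf_sizes hS F.1 F.2⟩ :
          {P : Finpartition (univ : Finset (Fin n)) //
            P.parts.card = m ∧ ∀ b ∈ P.parts, b.card ∈ S}) = P}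
        ≃ {F : {f : Fin n → Fin m // fcond' S f} // partnOf hS F.1 F.2 = P.1} :=
      Equiv.subtypeEquivRight fun F => by rw [Subtype.ext_iff]
    rw [Fintype.card_congr (e1.trans (labelEquiv hS P.1 P.2.1 P.2.2)),
      Fintype.card_equiv (Fintype.equivFinOfCardEq (by rw [Fintype.card_coe, P.2.1]))]
    rw [Fintype.card_coe, P.2.1]
  rw [Finset.sum_congr rfl fun P _ => h1 P, Finset.sum_const, card_univ, smul_eq_mul,
    Nat.card_eq_fintype_card, mul_comm]

end


section
open PowerSeries
variable {S : Set ℕ}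

lemma fcond_iff_fcond' {n m : ℕ} (f : Fin n → Fin m) : fcond S f ↔ fcond' S f :=
  forall_congr' fun j => by rw [natCard_eq_filter_card]; rfl

lemma Ncard_eq_stirling (hS : 0 ∉ S) (n m : ℕ) :
    Ncard S n m = m.factorial * sStirling S n m := by
  rw [Ncard, Fcard, Nat.card_congr (Equiv.subtypeEquivRight fun f => fcond_iff_fcond' f),
    card_fcond' hS, sStirling]

lemma Ncard_zero_zero : Ncard S 0 0 = 1 := by
  have hall : ∀ f : Fin 0 → Fin 0, fcond S f := fun f j => j.elim0
  rw [Ncard, Fcard, Nat.card_congr (Equiv.subtypeUnivEquiv hall), Nat.card_eq_fintype_card]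
  simp

lemma Ncard_succ_zero (n : ℕ) : Ncard S (n+1) 0 = 0 := by
  have : IsEmpty {f : Fin (n+1) → Fin 0 // fcond S f} := ⟨fun F => (F.1 0).elim0⟩
  rw [Ncard, Fcard, Nat.card_of_isEmpty]

lemma coeff_ES : ∀ s, coeff s (ES S) = if s ∈ S then ((s.factorial : ℚ))⁻¹ else 0 :=
  fun s => coeff_mk s _

theorem factorial_mul_coeff_ES_pow (m : ℕ) : ∀ n : ℕ,
    (n.factorial : ℚ) * coeff n (ES S ^ m) = Ncard S n m := by
  induction m with
  | zero =>
    intro n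
    rw [pow_zero, coeff_one]
    cases n with
    | zero => simp [Ncard_zero_zero]
    | succ n => simp [Ncard_succ_zero]
  | succ m ih =>
    intro n
    rw [pow_succ', coeff_mul, Finset.Nat.sum_antidiagonal_eq_sum_range_succ_mk,
      Finset.mul_sum, Ncard_succ]
    push_cast
    refine Finset.sum_congr rfl fun s hs => ?_
    have hsn : s ≤ n := Nat.lt_succ_iff.mp (Finset.mem_range.mp hs)
    rw [coeff_ES]
    by_cases hmem : s ∈ S
    · rw [if_pos hmem, if_pos hmem, ← ih (n - s)]
      have hfac : (n.choose s : ℚ) * s.factorial * (n-s).factorial = n.factorial := by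
        rw [← Nat.cast_mul, ← Nat.cast_mul, Nat.choose_mul_factorial_mul_factorial hsn]
      have hs0 : (s.factorial : ℚ) ≠ 0 := Nat.cast_ne_zero.mpr s.factorial_ne_zero
      rw [← hfac]
      field_simp
    · simp [hmem]

theorem ESneg_eq_rescale : ESneg S = PowerSeries.rescale (-1) (ES S) := by
  ext n
  rw [ESneg, coeff_mk, coeff_rescale]

theorem coeff_neg_ESneg_pow (m n : ℕ) :
    coeff n ((-(ESneg S)) ^ m) = (-1 : ℚ) ^ (m + n) * coeff n (ES S ^ m) := by
  have h1 : (ESneg S) ^ m = PowerSeries.rescale (-1) (ES S ^ m) := by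
    rw [ESneg_eq_rescale, ← map_pow]
  rw [neg_pow, h1, show ((-1 : ℚ⟦X⟧) ^ m) = PowerSeries.C ((-1 : ℚ) ^ m) by
      rw [map_pow, map_neg, map_one],
    PowerSeries.coeff_C_mul, coeff_rescale, pow_add]
  ring

end


/-- the EGF of the `S`-restricted poly-Bernoulli numbers
`B_{n,S}^{(k)} = ∑_{i=0}^n {n brace i}_S (-1)^{n-i} i!/(i+1)^k` is
`Li_k(-E_S(-t)) / (-E_S(-t))`, stated coefficientwise: the `n`-th coefficient of the
right-hand side is `∑_{m=0}^n (1/(m+1)^k) [t^n] (-E_S(-t))^m`. -/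
theorem sPolyBernoulli_egf (S : Set ℕ) (hS : 0 ∉ S) (k : ℤ) (n : ℕ) :
    (∑ i ∈ Finset.range (n + 1),
        (sStirling S n i : ℚ) * (-1) ^ (n - i) * i.factorial / ((i : ℚ) + 1) ^ k) /
      n.factorial =
    ∑ m ∈ Finset.range (n + 1), (((m : ℚ) + 1) ^ k)⁻¹ *
      PowerSeries.coeff n ((-(ESneg S)) ^ m) := by
  rw [Finset.sum_div]
  refine Finset.sum_congr rfl fun i hi => ?_
  rw [coeff_neg_ESneg_pow]
  have hin : i ≤ n := Nat.lt_succ_iff.mp (Finset.mem_range.mp hi)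
  have hn0 : (n.factorial : ℚ) ≠ 0 := Nat.cast_ne_zero.mpr n.factorial_ne_zero
  have hcoeff : PowerSeries.coeff n (ES S ^ i) = (Ncard S n i : ℚ) / n.factorial := by
    rw [eq_div_iff hn0, mul_comm, factorial_mul_coeff_ES_pow]
  rw [hcoeff, Ncard_eq_stirling hS]
  have hsign : ((-1 : ℚ)) ^ (n - i) = (-1) ^ (i + n) := by
    rw [show i + n = (n - i) + 2 * i by omega, pow_add, pow_mul]
    norm_num
  rw [hsign]
  push_cast
  ring
end
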